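/- arXiv:2307.14741 — 10 statements merged into one kernel-verified Lean document; each statement's English description precedes it below -/
import Mathlib

section
/- Let C_A, C_B be symmetric positive definite n×n matrices and P_{AB} an n×n matrix such that R = C_A + C_B − P_{AB} − P_{AB}ᵀ is positive definite. Define K_A* = (C_B − P_{AB}ᵀ)R^{-1}, K_B* = I − K_A*, and for any matrices K_A, K_B with K_A + K_B = I define C_F(K) = K_A C_A K_Aᵀ + K_A P_{AB} K_Bᵀ + K_B P_{AB}ᵀ K_Aᵀ + K_B C_B K_Bᵀ. Then for every such K, C_F(K*) ⪯ C_F(K), where K* = (K_A*, K_B*). -/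
open Matrix

theorem sci_stmt3 {n : ℕ} (CA CB PAB : Matrix (Fin n) (Fin n) ℝ)
    (hCA : CA.PosDef) (hCB : CB.PosDef)
    (hR : (CA + CB - PAB - PABᵀ).PosDef)
    (KA KB : Matrix (Fin n) (Fin n) ℝ) (hK : KA + KB = 1) :
    let R := CA + CB - PAB - PABᵀ
    let KAs := (CB - PABᵀ) * R⁻¹
    let KBs := 1 - KAs
    let CF := fun (LA LB : Matrix (Fin n) (Fin n) ℝ) =>
      LA * CA * LAᵀ + LA * PAB * LBᵀ + LB * PABᵀ * LAᵀ + LB * CB * LBᵀ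
    (CF KA KB - CF KAs KBs).PosSemidef := by
  intro R KAs KBs CF
  have hKB : KB = 1 - KA := by
    have := hK; linear_combination (norm := abel) this - hK + (eq_sub_of_add_eq' hK)
  have hdet : IsUnit R.det := hR.det_pos.ne'.isUnit
  have hCAs : CAᵀ = CA := hCA.isHermitian.eq
  have hCBs : CBᵀ = CB := hCB.isHermitian.eq
  have hRsym : Rᵀ = R := by
    simp [R, transpose_sub, transpose_add, hCAs, hCBs]; abel
  have h1 : KAs * R = CB - PABᵀ := by
    show (CB - PABᵀ) * R⁻¹ * R = CB - PABᵀ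
    rw [mul_assoc, Matrix.nonsing_inv_mul R hdet, mul_one]
  have h2 : R * KAsᵀ = CB - PAB := by
    have : KAsᵀ = R⁻¹ * (CB - PAB) := by
      show ((CB - PABᵀ) * R⁻¹)ᵀ = _
      rw [transpose_mul, transpose_nonsing_inv, hRsym, transpose_sub,
        transpose_transpose, hCBs]
    rw [this, ← mul_assoc, Matrix.mul_nonsing_inv R hdet, one_mul]
  have expand : ∀ L : Matrix (Fin n) (Fin n) ℝ,
      CF L (1 - L) = L * R * Lᵀ - L * (CB - PAB) - (CB - PABᵀ) * Lᵀ + CB := by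
    intro L
    show L * CA * Lᵀ + L * PAB * (1 - L)ᵀ + (1 - L) * PABᵀ * Lᵀ
        + (1 - L) * CB * (1 - L)ᵀ = _
    simp only [transpose_sub, transpose_one, R]
    noncomm_ring
  have key : CF KA KB - CF KAs KBs = (KA - KAs) * R * (KA - KAs)ᵀ := by
    rw [hKB, expand KA]
    show _ - CF KAs (1 - KAs) = _
    rw [expand KAs, ← h1, ← h2, transpose_sub]
    noncomm_ring
  rw [key]
  have := hR.posSemidef.mul_mul_conjTranspose_same (KA - KAs)
  simpa using this
end

section
/- With C_A, C_B positive definite, P_{AB} arbitrary, and R = C_A + C_B − P_{AB} − P_{AB}ᵀ invertible, the optimal fused covariance C_F* = C_A − (C_A − P_{AB})R^{-1}(C_A − P_{AB}ᵀ) satisfies the three identities: C_F* = C_B − (C_B − P_{AB}ᵀ)R^{-1}(C_B − P_{AB}) and C_F* = P_{AB} + (C_A − P_{AB})R^{-1}(C_B − P_{AB}). -/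
open Matrix

theorem sci_stmt4 {n : ℕ} (CA CB PAB : Matrix (Fin n) (Fin n) ℝ)
    (hCA : CA.PosDef) (hCB : CB.PosDef)
    (hR : IsUnit (CA + CB - PAB - PABᵀ).det) :
    let R := CA + CB - PAB - PABᵀ
    let CFs := CA - (CA - PAB) * R⁻¹ * (CA - PABᵀ)
    CFs = CB - (CB - PABᵀ) * R⁻¹ * (CB - PAB) ∧
    CFs = PAB + (CA - PAB) * R⁻¹ * (CB - PAB) := by
  intro R CFs
  have h1 : R * R⁻¹ = 1 := mul_nonsing_inv _ hR
  have h2 : R⁻¹ * R = 1 := nonsing_inv_mul _ hR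
  have hXX' : CA - PABᵀ = R - (CB - PAB) := by simp only [R]; abel
  have hY : CB - PABᵀ = R - (CA - PAB) := by simp only [R]; abel
  have e1 : (CA - PAB) * R⁻¹ * (CA - PABᵀ)
      = (CA - PAB) - (CA - PAB) * R⁻¹ * (CB - PAB) := by
    rw [hXX', mul_sub, mul_assoc, h2, mul_one]
  have e2 : (CB - PABᵀ) * R⁻¹ * (CB - PAB)
      = (CB - PAB) - (CA - PAB) * R⁻¹ * (CB - PAB) := by
    rw [hY, sub_mul, sub_mul, h1, one_mul]
  constructor
  · show CA - (CA - PAB) * R⁻¹ * (CA - PABᵀ) = CB - (CB - PABᵀ) * R⁻¹ * (CB - PAB)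
    rw [e1, e2]; abel
  · show CA - (CA - PAB) * R⁻¹ * (CA - PABᵀ) = PAB + (CA - PAB) * R⁻¹ * (CB - PAB)
    rw [e1]; abel
end

section
/- Let P_A, P_B, Q_A, Q_B be symmetric positive definite n×n matrices. Define for ω ∈ [0,1]: A(ω) = (P_A + ω Q_A)^{-1}, B(ω) = (P_B + ω Q_B)^{-1}, and H_SCI(ω) = ω A(ω) + (1−ω) B(1−ω). Then the second derivative of H_SCI with respect to ω is negative definite for all ω ∈ [0,1]; equivalently, −A(ω)[Q_A A(ω) P_A + P_A A(ω) Q_A]A(ω) − B(1−ω)[Q_B B(1−ω) P_B + P_B B(1−ω) Q_B]B(1−ω) ≺ 0. -/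
/-!
Put `A = (P + ω Q)⁻¹`. Since `Q⁻¹ + ω P⁻¹ = P⁻¹ (P + ω Q) Q⁻¹ = Q⁻¹ (P + ω Q) P⁻¹`, both products
`Q A P` and `P A Q` equal `(Q⁻¹ + ω P⁻¹)⁻¹`, which is positive definite for `ω ≥ 0`. Each of the
two terms of the second derivative is therefore the congruence `A (2 (Q⁻¹ + ω P⁻¹)⁻¹) A` of a
positive definite matrix by the invertible Hermitian matrix `A`.
-/

open Matrix

namespace Matrix

variable {n R S : Type*} [Fintype n] [DecidableEq n] [CommRing R] [CommSemiring S] [Algebra S R]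
  {P Q : Matrix n n R}

theorem inv_add_smul_inv_eq_inv_mul_mul_inv (hP : IsUnit P) (hQ : IsUnit Q) (ω : S) :
    Q⁻¹ + ω • P⁻¹ = P⁻¹ * (P + ω • Q) * Q⁻¹ := by
  rw [isUnit_iff_isUnit_det] at hP hQ
  simp only [Matrix.mul_add, Matrix.add_mul, mul_smul_comm, smul_mul_assoc, nonsing_inv_mul _ hP,
    Matrix.one_mul, mul_nonsing_inv_cancel_right _ _ hQ, add_comm]

theorem inv_add_smul_inv_eq_inv_mul_mul_inv' (hP : IsUnit P) (hQ : IsUnit Q) (ω : S) :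
    Q⁻¹ + ω • P⁻¹ = Q⁻¹ * (P + ω • Q) * P⁻¹ := by
  rw [isUnit_iff_isUnit_det] at hP hQ
  simp only [Matrix.mul_add, Matrix.add_mul, mul_smul_comm, smul_mul_assoc, nonsing_inv_mul _ hQ,
    Matrix.one_mul, mul_nonsing_inv_cancel_right _ _ hP]

theorem mul_inv_add_smul_mul_eq (hP : IsUnit P) (hQ : IsUnit Q) (ω : S) :
    Q * (P + ω • Q)⁻¹ * P = (Q⁻¹ + ω • P⁻¹)⁻¹ := by
  rw [inv_add_smul_inv_eq_inv_mul_mul_inv hP hQ, mul_inv_rev, mul_inv_rev,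
    nonsing_inv_nonsing_inv _ ((isUnit_iff_isUnit_det _).1 hP),
    nonsing_inv_nonsing_inv _ ((isUnit_iff_isUnit_det _).1 hQ), Matrix.mul_assoc]

theorem mul_inv_add_smul_mul_eq' (hP : IsUnit P) (hQ : IsUnit Q) (ω : S) :
    P * (P + ω • Q)⁻¹ * Q = (Q⁻¹ + ω • P⁻¹)⁻¹ := by
  rw [inv_add_smul_inv_eq_inv_mul_mul_inv' hP hQ, mul_inv_rev, mul_inv_rev,
    nonsing_inv_nonsing_inv _ ((isUnit_iff_isUnit_det _).1 hQ),
    nonsing_inv_nonsing_inv _ ((isUnit_iff_isUnit_det _).1 hP), Matrix.mul_assoc]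

end Matrix

open scoped ComplexOrder

theorem Matrix.PosDef.inv_add_smul_mul_mul_inv_add_smul {𝕜 n : Type*} [RCLike 𝕜] [Fintype n]
    [DecidableEq n] {P Q : Matrix n n 𝕜} (hP : P.PosDef) (hQ : Q.PosDef) {ω : ℝ} (hω : 0 ≤ ω) :
    ((P + ω • Q)⁻¹ * (Q * (P + ω • Q)⁻¹ * P + P * (P + ω • Q)⁻¹ * Q) * (P + ω • Q)⁻¹).PosDef := by
  have hA : (P + ω • Q)⁻¹.PosDef := (hP.add_posSemidef (hQ.posSemidef.smul hω)).inv
  have hR : (Q⁻¹ + ω • P⁻¹).PosDef := hQ.inv.add_posSemidef (hP.inv.posSemidef.smul hω)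
  rw [mul_inv_add_smul_mul_eq hP.isUnit hQ.isUnit, mul_inv_add_smul_mul_eq' hP.isUnit hQ.isUnit]
  nth_rw 1 [← hA.isHermitian.eq]
  exact (IsUnit.posDef_star_left_conjugate_iff hA.isUnit).2 (hR.inv.add hR.inv)

theorem sci_stmt5 {n : ℕ} (PA PB QA QB : Matrix (Fin n) (Fin n) ℝ)
    (hPA : PA.PosDef) (hPB : PB.PosDef) (hQA : QA.PosDef) (hQB : QB.PosDef)
    (ω : ℝ) (hω : ω ∈ Set.Icc (0 : ℝ) 1) :
    let A := fun (t : ℝ) => (PA + t • QA)⁻¹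
    let B := fun (t : ℝ) => (PB + t • QB)⁻¹
    (-(-(A ω * (QA * A ω * PA + PA * A ω * QA) * A ω)
      - (B (1 - ω) * (QB * B (1 - ω) * PB + PB * B (1 - ω) * QB) * B (1 - ω)))).PosDef := by
  intro A B
  rw [neg_sub, sub_neg_eq_add]
  exact (hPB.inv_add_smul_mul_mul_inv_add_smul hQB (sub_nonneg.2 hω.2)).add
    (hPA.inv_add_smul_mul_mul_inv_add_smul hQA hω.1)
end

section
/- With H_SCI(ω) as the SCI precision matrix for positive definite P_A, P_B, Q_A, Q_B, for every nonzero vector x the scalar function h(ω) = xᵀ H_SCI(ω) x is strictly concave on [0,1]. -/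
open Matrix

attribute [local instance] Matrix.linftyOpNormedRing Matrix.linftyOpNormedAlgebra

section SciAux

variable {n : ℕ}

lemma sci_smul_posSemidef {Q : Matrix (Fin n) (Fin n) ℝ} (hQ : Q.PosDef) {c : ℝ} (hc : 0 ≤ c) :
    (c • Q).PosSemidef := by
  refine Matrix.PosSemidef.of_dotProduct_mulVec_nonneg ?_ (fun y => ?_)
  · simpa [Matrix.IsHermitian, conjTranspose_smul] using congrArg (c • ·) hQ.isHermitian.eq
  · rw [smul_mulVec, dotProduct_smul, smul_eq_mul]
    exact mul_nonneg hc (hQ.posSemidef.dotProduct_mulVec_nonneg y)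

lemma sci_posdef_aff {P Q : Matrix (Fin n) (Fin n) ℝ} (hP : P.PosDef) (hQ : Q.PosDef) {c : ℝ}
    (hc : 0 ≤ c) : (P + c • Q).PosDef :=
  hP.add_posSemidef (sci_smul_posSemidef hQ hc)

lemma sci_isUnit_aff {P Q : Matrix (Fin n) (Fin n) ℝ} (hP : P.PosDef) (hQ : Q.PosDef) {c : ℝ}
    (hc : 0 ≤ c) : IsUnit (P + c • Q) :=
  (Matrix.isUnit_iff_isUnit_det _).mpr
    (isUnit_iff_ne_zero.mpr (sci_posdef_aff hP hQ hc).det_pos.ne')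

noncomputable def phiF (P Q : Matrix (Fin n) (Fin n) ℝ) (x : Fin n → ℝ) (c : ℝ) : ℝ :=
  c * (x ⬝ᵥ (P + c • Q)⁻¹ *ᵥ x)

noncomputable def phiF' (P Q : Matrix (Fin n) (Fin n) ℝ) (x : Fin n → ℝ) (c : ℝ) : ℝ :=
  x ⬝ᵥ (P + c • Q)⁻¹ *ᵥ x -
    c * (x ⬝ᵥ ((P + c • Q)⁻¹ * Q * (P + c • Q)⁻¹) *ᵥ x)

lemma sci_quad_hasDerivAt (x : Fin n → ℝ) {F : ℝ → Matrix (Fin n) (Fin n) ℝ}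
    {F' : Matrix (Fin n) (Fin n) ℝ} {t : ℝ} (h : HasDerivAt F F' t) :
    HasDerivAt (fun s => x ⬝ᵥ (F s) *ᵥ x) (x ⬝ᵥ F' *ᵥ x) t := by
  let L : Matrix (Fin n) (Fin n) ℝ →ₗ[ℝ] ℝ :=
    { toFun := fun A => x ⬝ᵥ A *ᵥ x
      map_add' := fun A B => by simp [add_mulVec, dotProduct_add]
      map_smul' := fun c A => by simp [smul_mulVec, dotProduct_smul] }
  exact L.toContinuousLinearMap.hasFDerivAt.comp_hasDerivAt t h

lemma sci_inv_aff_hasDerivAt (P Q : Matrix (Fin n) (Fin n) ℝ) {c : ℝ}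
    (hU : IsUnit (P + c • Q)) :
    HasDerivAt (fun u : ℝ => (P + u • Q)⁻¹)
      (-((P + c • Q)⁻¹ * Q * (P + c • Q)⁻¹)) c := by
  obtain ⟨u, hu⟩ := hU
  have h1 : HasDerivAt (fun u : ℝ => P + u • Q) ((1:ℝ) • Q) c :=
    ((hasDerivAt_id c).smul_const Q).const_add P
  have hfd := hasFDerivAt_ringInverse (𝕜 := ℝ) u
  rw [hu] at hfd
  have h2 := hfd.comp_hasDerivAt c h1
  have h3 : (fun u : ℝ => Ring.inverse (P + u • Q)) = fun u : ℝ => (P + u • Q)⁻¹ := by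
    funext v; rw [Matrix.nonsing_inv_eq_ringInverse]
  rw [show (Ring.inverse ∘ fun u : ℝ => P + u • Q) = fun u : ℝ => Ring.inverse (P + u • Q) from rfl,
    h3] at h2
  convert h2 using 1
  any_goals rfl
  have hui : (↑u⁻¹ : Matrix (Fin n) (Fin n) ℝ) = (P + c • Q)⁻¹ := by
    rw [Matrix.coe_units_inv, hu]
  simp [ContinuousLinearMap.neg_apply, ContinuousLinearMap.mulLeftRight_apply, hui, mul_assoc]

lemma sci_phiF_hasDerivAt (P Q : Matrix (Fin n) (Fin n) ℝ) (x : Fin n → ℝ) {c : ℝ}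
    (hU : IsUnit (P + c • Q)) :
    HasDerivAt (phiF P Q x) (phiF' P Q x c) c := by
  have hq := sci_quad_hasDerivAt x (sci_inv_aff_hasDerivAt P Q hU)
  have h := (hasDerivAt_id c).mul hq
  convert h using 1
  any_goals rfl
  simp [phiF', neg_mulVec, dotProduct_neg]
  ring

lemma sci_phiF'_hasDerivAt (P Q : Matrix (Fin n) (Fin n) ℝ) (x : Fin n → ℝ) {c : ℝ}
    (hU : IsUnit (P + c • Q)) :
    HasDerivAt (phiF' P Q x)
      (-2 * (x ⬝ᵥ ((P + c • Q)⁻¹ * Q * (P + c • Q)⁻¹ * P * (P + c • Q)⁻¹) *ᵥ x)) c := by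
  set N := P + c • Q with hN
  set M := N⁻¹ with hM
  have hinv := sci_inv_aff_hasDerivAt P Q hU
  have hq := sci_quad_hasDerivAt x hinv
  have hr : HasDerivAt (fun u : ℝ => (P + u • Q)⁻¹ * Q * (P + u • Q)⁻¹)
      (-(M * Q * M) * Q * M + M * Q * -(M * Q * M)) c := (hinv.mul_const Q).mul hinv
  have hrq := sci_quad_hasDerivAt x hr
  have h := hq.sub ((hasDerivAt_id c).mul hrq)
  convert h using 1
  any_goals rfl
  have hMN : M * N = 1 := Matrix.nonsing_inv_mul N ((Matrix.isUnit_iff_isUnit_det N).mp hU)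
  have hPN : P = N - c • Q := by rw [hN]; abel
  have e1 : M * Q * M * N = M * Q := by rw [mul_assoc, hMN, mul_one]
  have key : M * Q * M * P * M = M * Q * M - c • (M * Q * M * Q * M) := by
    calc M * Q * M * P * M = (M * Q * M * N) * M - c • (M * Q * M * Q * M) := by
          rw [hPN, Matrix.mul_sub, Matrix.mul_smul, Matrix.sub_mul, Matrix.smul_mul, mul_assoc,
            mul_assoc, mul_assoc, mul_assoc, mul_assoc, mul_assoc]
      _ = M * Q * M - c • (M * Q * M * Q * M) := by rw [e1]
  rw [key]
  simp only [Matrix.neg_mul, Matrix.mul_neg, sub_mulVec, smul_mulVec, dotProduct_sub,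
    dotProduct_smul, add_mulVec, neg_mulVec, dotProduct_add, dotProduct_neg, smul_eq_mul,
    mul_assoc, id_eq, one_mul]
  ring

lemma sci_quad_pos {P Q : Matrix (Fin n) (Fin n) ℝ} (hP : P.PosDef) (hQ : Q.PosDef) {c : ℝ}
    (hc : 0 ≤ c) {x : Fin n → ℝ} (hx : x ≠ 0) :
    0 < x ⬝ᵥ ((P + c • Q)⁻¹ * Q * (P + c • Q)⁻¹ * P * (P + c • Q)⁻¹) *ᵥ x := by
  set N := P + c • Q with hNdef
  set M := N⁻¹ with hMdef
  have hN : N.PosDef := sci_posdef_aff hP hQ hc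
  have hdetN : IsUnit N.det := isUnit_iff_ne_zero.mpr hN.det_pos.ne'
  have hdetP : IsUnit P.det := isUnit_iff_ne_zero.mpr hP.det_pos.ne'
  have hdetQ : IsUnit Q.det := isUnit_iff_ne_zero.mpr hQ.det_pos.ne'
  have hNM : N * M = 1 := Matrix.mul_nonsing_inv N hdetN
  have h1 : P⁻¹ * N * Q⁻¹ = Q⁻¹ + c • P⁻¹ := by
    rw [hNdef, mul_add, Matrix.mul_smul, Matrix.nonsing_inv_mul P hdetP, Matrix.add_mul,
      Matrix.smul_mul, one_mul, mul_assoc, Matrix.mul_nonsing_inv Q hdetQ, mul_one]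
  have hKeq : Q * M * P = (Q⁻¹ + c • P⁻¹)⁻¹ := by
    rw [← h1, Matrix.mul_inv_rev, Matrix.mul_inv_rev, Matrix.nonsing_inv_nonsing_inv Q hdetQ,
      Matrix.nonsing_inv_nonsing_inv P hdetP, hMdef, mul_assoc]
  have hK : (Q * M * P).PosDef := by
    rw [hKeq]
    exact (hQ.inv.add_posSemidef (sci_smul_posSemidef hP.inv hc)).inv
  have hMsymm : Mᵀ = M := by
    have := hN.inv.isHermitian.eq
    simpa [Matrix.conjTranspose_eq_transpose_of_trivial] using this
  have hMx : M *ᵥ x ≠ 0 := by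
    intro h0
    apply hx
    have : N *ᵥ (M *ᵥ x) = N *ᵥ (0 : Fin n → ℝ) := by rw [h0]
    rwa [Matrix.mulVec_mulVec, hNM, Matrix.one_mulVec, Matrix.mulVec_zero] at this
  have hassoc : M * Q * M * P * M = M * (Q * M * P) * M := by
    simp only [mul_assoc]
  rw [hassoc]
  have hrw : x ⬝ᵥ (M * (Q * M * P) * M) *ᵥ x = (M *ᵥ x) ⬝ᵥ (Q * M * P) *ᵥ (M *ᵥ x) := by
    rw [← Matrix.mulVec_mulVec, ← Matrix.mulVec_mulVec, Matrix.dotProduct_mulVec x M,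
      ← Matrix.mulVec_transpose, hMsymm]
  rw [hrw]
  simpa [star_trivial] using hK.dotProduct_mulVec_pos hMx

end SciAux

theorem sci_stmt6 {n : ℕ} (PA PB QA QB : Matrix (Fin n) (Fin n) ℝ)
    (hPA : PA.PosDef) (hPB : PB.PosDef) (hQA : QA.PosDef) (hQB : QB.PosDef)
    (x : Fin n → ℝ) (hx : x ≠ 0) :
    let HSCI := fun (ω : ℝ) =>
      ω • (PA + ω • QA)⁻¹ + (1 - ω) • (PB + (1 - ω) • QB)⁻¹
    StrictConcaveOn ℝ (Set.Icc (0 : ℝ) 1) (fun ω => x ⬝ᵥ (HSCI ω) *ᵥ x) := by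
  intro HSCI
  have hfeq : (fun ω => x ⬝ᵥ (HSCI ω) *ᵥ x) =
      fun ω => phiF PA QA x ω + phiF PB QB x (1 - ω) := by
    funext ω
    simp [HSCI, phiF, add_mulVec, smul_mulVec, dotProduct_add, dotProduct_smul]
  rw [hfeq]
  set f : ℝ → ℝ := fun ω => phiF PA QA x ω + phiF PB QB x (1 - ω) with hfdef
  set ψ : ℝ → ℝ := fun t => phiF' PA QA x t - phiF' PB QB x (1 - t) with hψdef
  have hone : ∀ t : ℝ, HasDerivAt (fun ω : ℝ => 1 - ω) (-1) t := fun t => by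
    simpa using (hasDerivAt_id t).const_sub 1
  have hderiv : ∀ t ∈ Set.Icc (0:ℝ) 1, HasDerivAt f (ψ t) t := by
    intro t ht
    have hA := sci_phiF_hasDerivAt PA QA x (sci_isUnit_aff hPA hQA ht.1)
    have hB := (sci_phiF_hasDerivAt PB QB x
      (sci_isUnit_aff hPB hQB (by linarith [ht.2]))).comp t (hone t)
    have h := hA.add hB
    have : phiF' PA QA x t + phiF' PB QB x (1 - t) * (-1) = ψ t := by rw [hψdef]; ring
    rw [← this]
    exact h
  refine strictConcaveOn_of_deriv2_neg (convex_Icc 0 1) ?_ ?_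
  · exact fun t ht => ((hderiv t ht).continuousAt).continuousWithinAt
  · rw [interior_Icc]
    intro ω hω
    have hev : deriv f =ᶠ[nhds ω] ψ :=
      Filter.eventuallyEq_of_mem (isOpen_Ioo.mem_nhds hω)
        (fun t ht => (hderiv t (Set.Ioo_subset_Icc_self ht)).deriv)
    have hω0 : (0:ℝ) ≤ ω := le_of_lt hω.1
    have hω1 : (0:ℝ) ≤ 1 - ω := by linarith [hω.2]
    have hA' := sci_phiF'_hasDerivAt PA QA x (sci_isUnit_aff hPA hQA hω0)
    have hB' := (sci_phiF'_hasDerivAt PB QB x (sci_isUnit_aff hPB hQB hω1)).comp ω (hone ω)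
    have hψ : HasDerivAt ψ
        (-2 * (x ⬝ᵥ ((PA + ω • QA)⁻¹ * QA * (PA + ω • QA)⁻¹ * PA * (PA + ω • QA)⁻¹) *ᵥ x) -
          -2 * (x ⬝ᵥ ((PB + (1-ω) • QB)⁻¹ * QB * (PB + (1-ω) • QB)⁻¹ * PB *
            (PB + (1-ω) • QB)⁻¹) *ᵥ x) * (-1)) ω := hA'.sub hB'
    have h2 : deriv^[2] f ω = deriv (deriv f) ω := rfl
    rw [h2, hev.deriv_eq, hψ.deriv]
    have pA := sci_quad_pos hPA hQA hω0 hx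
    have pB := sci_quad_pos hPB hQB hω1 hx
    nlinarith [pA, pB]
end

section
/- Let B_SCI(ω) = H_SCI(ω)^{-1} be the SCI covariance bound, where H_SCI(ω) = ω(P_A + ω Q_A)^{-1} + (1−ω)(P_B + (1−ω)Q_B)^{-1} with P_A, P_B, Q_A, Q_B symmetric positive definite. Then the function ω ↦ trace(B_SCI(ω)) is convex on [0,1]. -/
open Matrix

namespace SCIAux

variable {n : ℕ}

lemma pd_transpose {P : Matrix (Fin n) (Fin n) ℝ} (hP : P.PosDef) : Pᵀ = P := by
  have h := hP.1
  simpa [Matrix.IsHermitian, Matrix.conjTranspose_eq_transpose_of_trivial] using h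

lemma pd_quad_nonneg {P : Matrix (Fin n) (Fin n) ℝ} (hP : P.PosDef) (d : Fin n → ℝ) :
    0 ≤ d ⬝ᵥ P *ᵥ d := by
  have := hP.posSemidef.dotProduct_mulVec_nonneg d
  simpa using this

lemma pd_mul_inv {P : Matrix (Fin n) (Fin n) ℝ} (hP : P.PosDef) : P * P⁻¹ = 1 :=
  Matrix.mul_nonsing_inv _ (isUnit_iff_ne_zero.mpr hP.det_pos.ne')

lemma pd_inv_mul {P : Matrix (Fin n) (Fin n) ℝ} (hP : P.PosDef) : P⁻¹ * P = 1 :=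
  Matrix.nonsing_inv_mul _ (isUnit_iff_ne_zero.mpr hP.det_pos.ne')

lemma dot_symm {P : Matrix (Fin n) (Fin n) ℝ} (hP : P.PosDef) (u v : Fin n → ℝ) :
    u ⬝ᵥ P *ᵥ v = (P *ᵥ u) ⬝ᵥ v := by
  rw [Matrix.dotProduct_mulVec, ← Matrix.mulVec_transpose, pd_transpose hP]

/-- Cauchy-Schwarz / variational inequality: `2⟨u,w⟩ ≤ ⟨w,Pw⟩ + ⟨u,P⁻¹u⟩`. -/
lemma cs {P : Matrix (Fin n) (Fin n) ℝ} (hP : P.PosDef) (u w : Fin n → ℝ) :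
    2 * (u ⬝ᵥ w) ≤ w ⬝ᵥ P *ᵥ w + u ⬝ᵥ P⁻¹ *ᵥ u := by
  have h0 : 0 ≤ (w - P⁻¹ *ᵥ u) ⬝ᵥ P *ᵥ (w - P⁻¹ *ᵥ u) := pd_quad_nonneg hP _
  have hPu : P *ᵥ (P⁻¹ *ᵥ u) = u := by
    rw [Matrix.mulVec_mulVec, pd_mul_inv hP, Matrix.one_mulVec]
  have h1 : (P⁻¹ *ᵥ u) ⬝ᵥ P *ᵥ w = u ⬝ᵥ w := by
    rw [dot_symm hP, hPu]
  have h2 : (P⁻¹ *ᵥ u) ⬝ᵥ P *ᵥ (P⁻¹ *ᵥ u) = u ⬝ᵥ P⁻¹ *ᵥ u := by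
    rw [hPu, dotProduct_comm]
  have h3 : w ⬝ᵥ P *ᵥ (P⁻¹ *ᵥ u) = u ⬝ᵥ w := by
    rw [hPu, dotProduct_comm]
  rw [Matrix.mulVec_sub, sub_dotProduct, dotProduct_sub,
    dotProduct_sub, h1, h2, h3] at h0
  linarith

lemma herm_smul {Q : Matrix (Fin n) (Fin n) ℝ} (hQ : Q.IsHermitian) (t : ℝ) :
    (t • Q).IsHermitian := by
  rw [Matrix.IsHermitian] at *
  rw [Matrix.conjTranspose_smul, hQ]
  simp

lemma pd_add_smul {P Q : Matrix (Fin n) (Fin n) ℝ} (hP : P.PosDef) (hQ : Q.PosDef)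
    {t : ℝ} (ht : 0 ≤ t) : (P + t • Q).PosDef := by
  refine Matrix.PosDef.of_dotProduct_mulVec_pos (hP.1.add (herm_smul hQ.1 t)) fun x hx => ?_
  have h1 := hP.dotProduct_mulVec_pos hx
  have h2 := pd_quad_nonneg hQ x
  simp only [Matrix.add_mulVec, dotProduct_add, Matrix.smul_mulVec,
    dotProduct_smul, smul_eq_mul, star_trivial] at *
  nlinarith

lemma pd_combo {A B : Matrix (Fin n) (Fin n) ℝ} (hA : A.PosDef) (hB : B.PosDef)
    {a b : ℝ} (ha : 0 ≤ a) (hb : 0 ≤ b) (hab : a + b = 1) : (a • A + b • B).PosDef := by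
  refine Matrix.PosDef.of_dotProduct_mulVec_pos ((herm_smul hA.1 a).add (herm_smul hB.1 b)) fun x hx => ?_
  have h1 := hA.dotProduct_mulVec_pos hx
  have h2 := hB.dotProduct_mulVec_pos hx
  simp only [Matrix.add_mulVec, dotProduct_add, Matrix.smul_mulVec,
    dotProduct_smul, smul_eq_mul, star_trivial] at *
  rcases eq_or_lt_of_le ha with h | h
  · have hb1 : b = 1 := by linarith
    rw [← h, hb1]; linarith
  · nlinarith [mul_pos h h1, mul_nonneg hb h2.le]

/-- The key inequality (P1): for `u + v = y`,
`t * ⟨y, (P+tQ)⁻¹ y⟩ ≤ t * ⟨u, P⁻¹ u⟩ + ⟨v, Q⁻¹ v⟩`. -/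
lemma p1 {P Q : Matrix (Fin n) (Fin n) ℝ} (hP : P.PosDef) (hQ : Q.PosDef)
    {t : ℝ} (ht : 0 ≤ t) (u v : Fin n → ℝ) :
    t * ((u + v) ⬝ᵥ (P + t • Q)⁻¹ *ᵥ (u + v))
      ≤ t * (u ⬝ᵥ P⁻¹ *ᵥ u) + v ⬝ᵥ Q⁻¹ *ᵥ v := by
  have hM : (P + t • Q).PosDef := pd_add_smul hP hQ ht
  set y := u + v with hy
  set w := (P + t • Q)⁻¹ *ᵥ y with hw
  have hMw : (P + t • Q) *ᵥ w = y := by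
    rw [hw, Matrix.mulVec_mulVec, pd_mul_inv hM, Matrix.one_mulVec]
  have hyw : y ⬝ᵥ w = w ⬝ᵥ P *ᵥ w + t * (w ⬝ᵥ Q *ᵥ w) := by
    calc y ⬝ᵥ w = w ⬝ᵥ ((P + t • Q) *ᵥ w) := by rw [hMw, dotProduct_comm]
    _ = w ⬝ᵥ P *ᵥ w + t * (w ⬝ᵥ Q *ᵥ w) := by
        simp [Matrix.add_mulVec, dotProduct_add, Matrix.smul_mulVec]
  have hsplit : y ⬝ᵥ w = u ⬝ᵥ w + v ⬝ᵥ w := by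
    rw [hy, add_dotProduct]
  have c1 := cs hP u w
  have c2 := cs hQ v (t • w)
  have e1 : v ⬝ᵥ (t • w) = t * (v ⬝ᵥ w) := by
    simp [dotProduct_smul]
  have e2 : (t • w) ⬝ᵥ Q *ᵥ (t • w) = t * (t * (w ⬝ᵥ Q *ᵥ w)) := by
    rw [Matrix.mulVec_smul, smul_dotProduct, dotProduct_smul]
    simp [mul_assoc]
  rw [e1, e2] at c2
  have c1t : t * (2 * (u ⬝ᵥ w)) ≤ t * (w ⬝ᵥ P *ᵥ w + u ⬝ᵥ P⁻¹ *ᵥ u) :=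
    mul_le_mul_of_nonneg_left c1 ht
  nlinarith [c1t, c2, hyw, hsplit]

/-- Concavity of `t ↦ t ⟨y, (P+tQ)⁻¹ y⟩`. -/
lemma concave_piece {P Q : Matrix (Fin n) (Fin n) ℝ} (hP : P.PosDef) (hQ : Q.PosDef)
    (y : Fin n → ℝ) {t1 t2 a b : ℝ} (ht1 : 0 ≤ t1) (ht2 : 0 ≤ t2)
    (ha : 0 ≤ a) (hb : 0 ≤ b) (hab : a + b = 1) :
    a * (t1 * (y ⬝ᵥ (P + t1 • Q)⁻¹ *ᵥ y)) + b * (t2 * (y ⬝ᵥ (P + t2 • Q)⁻¹ *ᵥ y))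
      ≤ (a * t1 + b * t2) * (y ⬝ᵥ (P + (a * t1 + b * t2) • Q)⁻¹ *ᵥ y) := by
  set t := a * t1 + b * t2 with hts
  have ht : 0 ≤ t := by positivity
  have hM : (P + t • Q).PosDef := pd_add_smul hP hQ ht
  set w := (P + t • Q)⁻¹ *ᵥ y with hw
  have hMw : (P + t • Q) *ᵥ w = y := by
    rw [hw, Matrix.mulVec_mulVec, pd_mul_inv hM, Matrix.one_mulVec]
  set u := P *ᵥ w with hu
  set v := t • (Q *ᵥ w) with hv
  have huv : u + v = y := by
    rw [hu, hv, ← Matrix.smul_mulVec, ← Matrix.add_mulVec, hMw]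
  have hPinvu : P⁻¹ *ᵥ u = w := by
    rw [hu, Matrix.mulVec_mulVec, pd_inv_mul hP, Matrix.one_mulVec]
  have hQinvv : Q⁻¹ *ᵥ v = t • w := by
    rw [hv, Matrix.mulVec_smul, Matrix.mulVec_mulVec, pd_inv_mul hQ, Matrix.one_mulVec]
  have hα : u ⬝ᵥ P⁻¹ *ᵥ u = w ⬝ᵥ P *ᵥ w := by
    rw [hPinvu, hu, dotProduct_comm]
  have hβ : v ⬝ᵥ Q⁻¹ *ᵥ v = t * (t * (w ⬝ᵥ Q *ᵥ w)) := by
    rw [hQinvv, hv, smul_dotProduct, dotProduct_smul]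
    have : Q *ᵥ w ⬝ᵥ w = w ⬝ᵥ Q *ᵥ w := dotProduct_comm _ _
    simp [this, mul_assoc]
  have hval : t * (y ⬝ᵥ w) = t * (u ⬝ᵥ P⁻¹ *ᵥ u) + v ⬝ᵥ Q⁻¹ *ᵥ v := by
    have hh : y ⬝ᵥ w = w ⬝ᵥ P *ᵥ w + t * (w ⬝ᵥ Q *ᵥ w) := by
      calc y ⬝ᵥ w = w ⬝ᵥ ((P + t • Q) *ᵥ w) := by rw [hMw, dotProduct_comm]
      _ = w ⬝ᵥ P *ᵥ w + t * (w ⬝ᵥ Q *ᵥ w) := by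
          simp [Matrix.add_mulVec, dotProduct_add, Matrix.smul_mulVec]
    rw [hh, hα, hβ]; ring
  have b1 : t1 * (y ⬝ᵥ (P + t1 • Q)⁻¹ *ᵥ y) ≤ t1 * (u ⬝ᵥ P⁻¹ *ᵥ u) + v ⬝ᵥ Q⁻¹ *ᵥ v := by
    have := p1 hP hQ ht1 u v
    rwa [huv] at this
  have b2 : t2 * (y ⬝ᵥ (P + t2 • Q)⁻¹ *ᵥ y) ≤ t2 * (u ⬝ᵥ P⁻¹ *ᵥ u) + v ⬝ᵥ Q⁻¹ *ᵥ v := by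
    have := p1 hP hQ ht2 u v
    rwa [huv] at this
  have hsum := add_le_add (mul_le_mul_of_nonneg_left b1 ha) (mul_le_mul_of_nonneg_left b2 hb)
  calc a * (t1 * (y ⬝ᵥ (P + t1 • Q)⁻¹ *ᵥ y)) + b * (t2 * (y ⬝ᵥ (P + t2 • Q)⁻¹ *ᵥ y))
      ≤ a * (t1 * (u ⬝ᵥ P⁻¹ *ᵥ u) + v ⬝ᵥ Q⁻¹ *ᵥ v)
        + b * (t2 * (u ⬝ᵥ P⁻¹ *ᵥ u) + v ⬝ᵥ Q⁻¹ *ᵥ v) := hsum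
    _ = t * (u ⬝ᵥ P⁻¹ *ᵥ u) + v ⬝ᵥ Q⁻¹ *ᵥ v := by
        rw [hts]; linear_combination (v ⬝ᵥ Q⁻¹ *ᵥ v) * hab
    _ = t * (y ⬝ᵥ w) := hval.symm
    _ = t * (y ⬝ᵥ (P + t • Q)⁻¹ *ᵥ y) := by rw [hw]

end SCIAux

open SCIAux in
theorem sci_stmt7 {n : ℕ} (PA PB QA QB : Matrix (Fin n) (Fin n) ℝ)
    (hPA : PA.PosDef) (hPB : PB.PosDef) (hQA : QA.PosDef) (hQB : QB.PosDef) :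
    let HSCI := fun (ω : ℝ) =>
      ω • (PA + ω • QA)⁻¹ + (1 - ω) • (PB + (1 - ω) • QB)⁻¹
    ConvexOn ℝ (Set.Icc (0 : ℝ) 1) (fun ω => ((HSCI ω)⁻¹).trace) := by
  intro HSCI
  have hHpd : ∀ ω ∈ Set.Icc (0:ℝ) 1, (HSCI ω).PosDef := by
    rintro ω ⟨h0, h1⟩
    exact pd_combo (pd_add_smul hPA hQA h0).inv
      (pd_add_smul hPB hQB (by linarith : (0:ℝ) ≤ 1 - ω)).inv h0 (by linarith) (by ring)
  have hQF : ∀ (ω : ℝ) (z : Fin n → ℝ),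
      z ⬝ᵥ (HSCI ω) *ᵥ z
        = ω * (z ⬝ᵥ (PA + ω • QA)⁻¹ *ᵥ z) + (1 - ω) * (z ⬝ᵥ (PB + (1 - ω) • QB)⁻¹ *ᵥ z) := by
    intro ω z
    simp [HSCI, Matrix.add_mulVec, Matrix.smul_mulVec, dotProduct_add,
      dotProduct_smul]
  refine ⟨convex_Icc 0 1, ?_⟩
  intro x hx y hy a b ha hb hab
  simp only [smul_eq_mul]
  set ω := a * x + b * y with hω
  have hωmem : ω ∈ Set.Icc (0:ℝ) 1 := (convex_Icc 0 1) hx hy ha hb hab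
  have hHω := hHpd ω hωmem
  have hHx := hHpd x hx
  have hHy := hHpd y hy
  -- concavity of the quadratic form of HSCI
  have hconc : ∀ z : Fin n → ℝ,
      a * (z ⬝ᵥ HSCI x *ᵥ z) + b * (z ⬝ᵥ HSCI y *ᵥ z) ≤ z ⬝ᵥ HSCI ω *ᵥ z := by
    intro z
    rw [hQF, hQF, hQF]
    have hA := concave_piece hPA hQA z hx.1 hy.1 ha hb hab
    have hB := concave_piece hPB hQB z
      (by linarith [hx.2] : (0:ℝ) ≤ 1 - x) (by linarith [hy.2] : (0:ℝ) ≤ 1 - y) ha hb hab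
    have hc : a * (1 - x) + b * (1 - y) = 1 - ω := by
      rw [hω]; linear_combination hab
    rw [hc] at hB
    have hc2 : a * x + b * y = ω := hω.symm
    rw [hc2] at hA
    linarith
  -- pointwise diagonal inequality
  have hkey : ∀ i, (HSCI ω)⁻¹ i i ≤ a * (HSCI x)⁻¹ i i + b * (HSCI y)⁻¹ i i := by
    intro i
    set e : Fin n → ℝ := Pi.single i 1 with he
    have hdiag : ∀ M : Matrix (Fin n) (Fin n) ℝ, e ⬝ᵥ M *ᵥ e = M i i := by
      intro M
      simp [he]
    set z := (HSCI ω)⁻¹ *ᵥ e with hz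
    have hMz : HSCI ω *ᵥ z = e := by
      rw [hz, Matrix.mulVec_mulVec, pd_mul_inv hHω, Matrix.one_mulVec]
    have heq : e ⬝ᵥ (HSCI ω)⁻¹ *ᵥ e = 2 * (e ⬝ᵥ z) - z ⬝ᵥ HSCI ω *ᵥ z := by
      have h1 : z ⬝ᵥ HSCI ω *ᵥ z = e ⬝ᵥ z := by
        rw [hMz, dotProduct_comm]
      have h2 : e ⬝ᵥ z = e ⬝ᵥ (HSCI ω)⁻¹ *ᵥ e := by rw [hz]
      rw [h1, ← h2]; ring
    have csx : 2 * (e ⬝ᵥ z) - z ⬝ᵥ HSCI x *ᵥ z ≤ e ⬝ᵥ (HSCI x)⁻¹ *ᵥ e := by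
      have := cs hHx e z
      linarith
    have csy : 2 * (e ⬝ᵥ z) - z ⬝ᵥ HSCI y *ᵥ z ≤ e ⬝ᵥ (HSCI y)⁻¹ *ᵥ e := by
      have := cs hHy e z
      linarith
    calc (HSCI ω)⁻¹ i i = e ⬝ᵥ (HSCI ω)⁻¹ *ᵥ e := (hdiag _).symm
      _ = 2 * (e ⬝ᵥ z) - z ⬝ᵥ HSCI ω *ᵥ z := heq
      _ ≤ 2 * (e ⬝ᵥ z) - (a * (z ⬝ᵥ HSCI x *ᵥ z) + b * (z ⬝ᵥ HSCI y *ᵥ z)) := by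
          linarith [hconc z]
      _ = a * (2 * (e ⬝ᵥ z) - z ⬝ᵥ HSCI x *ᵥ z) + b * (2 * (e ⬝ᵥ z) - z ⬝ᵥ HSCI y *ᵥ z) := by
          linear_combination (-(2 * (e ⬝ᵥ z))) * hab
      _ ≤ a * (e ⬝ᵥ (HSCI x)⁻¹ *ᵥ e) + b * (e ⬝ᵥ (HSCI y)⁻¹ *ᵥ e) :=
          add_le_add (mul_le_mul_of_nonneg_left csx ha) (mul_le_mul_of_nonneg_left csy hb)
      _ = a * (HSCI x)⁻¹ i i + b * (HSCI y)⁻¹ i i := by rw [hdiag, hdiag]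
  calc ((HSCI ω)⁻¹).trace = ∑ i, (HSCI ω)⁻¹ i i := by simp [Matrix.trace, Matrix.diag]
    _ ≤ ∑ i, (a * (HSCI x)⁻¹ i i + b * (HSCI y)⁻¹ i i) :=
        Finset.sum_le_sum fun i _ => hkey i
    _ = a * ((HSCI x)⁻¹).trace + b * ((HSCI y)⁻¹).trace := by
        simp [Finset.sum_add_distrib, Finset.mul_sum, Matrix.trace, Matrix.diag]
end

section
/- Under the assumptions of the SCI setting, for each ω ∈ [0,1] the second derivative of the map ω ↦ B_SCI(ω) = H_SCI(ω)^{-1} is positive definite, where B_SCI'' = 2 B_SCI H_SCI' B_SCI H_SCI' B_SCI − B_SCI H_SCI'' B_SCI. -/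
open Matrix

section Aux

variable {n : ℕ}

/-- nonneg scalar times posSemidef is posSemidef -/
lemma aux_smul_posSemidef {c : ℝ} (hc : 0 ≤ c) {M : Matrix (Fin n) (Fin n) ℝ}
    (hM : M.PosSemidef) : (c • M).PosSemidef := by
  refine posSemidef_iff_dotProduct_mulVec.mpr ⟨?_, fun x => ?_⟩
  · unfold Matrix.IsHermitian
    rw [conjTranspose_smul, hM.1.eq]
    simp
  · rw [smul_mulVec, dotProduct_smul]
    simpa using mul_nonneg hc (hM.dotProduct_mulVec_nonneg x)

/-- pos scalar times posDef is posDef -/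
lemma aux_smul_posDef {c : ℝ} (hc : 0 < c) {M : Matrix (Fin n) (Fin n) ℝ}
    (hM : M.PosDef) : (c • M).PosDef := by
  refine posDef_iff_dotProduct_mulVec.mpr ⟨?_, fun x hx => ?_⟩
  · unfold Matrix.IsHermitian
    rw [conjTranspose_smul, hM.1.eq]
    simp
  · rw [smul_mulVec, dotProduct_smul]
    simpa using mul_pos hc (hM.dotProduct_mulVec_pos hx)

/-- congruence by an invertible matrix preserves posDef -/
lemma aux_conj_posDef {M N : Matrix (Fin n) (Fin n) ℝ} (hM : M.PosDef)
    (hN : IsUnit N) : (N * M * Nᴴ).PosDef := by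
  refine posDef_iff_dotProduct_mulVec.mpr ⟨isHermitian_mul_mul_conjTranspose N hM.1, fun x hx => ?_⟩
  have hinj : Function.Injective (Nᴴ.mulVec) := by
    rw [Matrix.mulVec_injective_iff_isUnit]
    rw [Matrix.isUnit_iff_isUnit_det, Matrix.det_conjTranspose]
    exact ((Matrix.isUnit_iff_isUnit_det N).1 hN).star
  have hx' : Nᴴ *ᵥ x ≠ 0 := by
    intro h
    exact hx (hinj (by simpa using h))
  have := hM.dotProduct_mulVec_pos hx'
  have key : star x ⬝ᵥ (N * M * Nᴴ) *ᵥ x = star (Nᴴ *ᵥ x) ⬝ᵥ M *ᵥ (Nᴴ *ᵥ x) := by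
    rw [star_mulVec, conjTranspose_conjTranspose]
    rw [← mulVec_mulVec, ← mulVec_mulVec, dotProduct_mulVec]
  rw [key]
  exact this

/-- congruence by an invertible hermitian matrix -/
lemma aux_conj_posDef' {M N : Matrix (Fin n) (Fin n) ℝ} (hM : M.PosDef)
    (hN : N.IsHermitian) (hN' : IsUnit N) : (N * M * N).PosDef := by
  have := aux_conj_posDef hM hN'
  rwa [hN.eq] at this

/-- Key: Q * (P + t•Q)⁻¹ * P is positive definite for P, Q posdef, t ≥ 0 -/
lemma aux_key {t : ℝ} (ht : 0 ≤ t) {P Q : Matrix (Fin n) (Fin n) ℝ}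
    (hP : P.PosDef) (hQ : Q.PosDef) : (Q * (P + t • Q)⁻¹ * P).PosDef := by
  have hPQ : (P + t • Q).PosDef := hP.add_posSemidef (aux_smul_posSemidef ht hQ.posSemidef)
  have hsum : (Q⁻¹ + t • P⁻¹).PosDef :=
    hQ.inv.add_posSemidef (aux_smul_posSemidef ht hP.inv.posSemidef)
  have hPdet : IsUnit P.det := (Matrix.isUnit_iff_isUnit_det P).1 hP.isUnit
  have hQdet : IsUnit Q.det := (Matrix.isUnit_iff_isUnit_det Q).1 hQ.isUnit
  have heq : Q⁻¹ + t • P⁻¹ = P⁻¹ * (P + t • Q) * Q⁻¹ := by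
    rw [Matrix.mul_add, Matrix.add_mul, Matrix.nonsing_inv_mul P hPdet,
      Matrix.one_mul, Matrix.mul_smul, Matrix.smul_mul, Matrix.mul_assoc,
      Matrix.mul_nonsing_inv Q hQdet, Matrix.mul_one]
  have hinv : (Q⁻¹ + t • P⁻¹)⁻¹ = Q * (P + t • Q)⁻¹ * P := by
    rw [heq, Matrix.mul_inv_rev, Matrix.mul_inv_rev,
      Matrix.nonsing_inv_nonsing_inv Q hQdet,
      Matrix.nonsing_inv_nonsing_inv P hPdet,
      Matrix.mul_assoc]
  rw [← hinv]
  exact hsum.inv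

end Aux

theorem sci_stmt8 {n : ℕ} (PA PB QA QB : Matrix (Fin n) (Fin n) ℝ)
    (hPA : PA.PosDef) (hPB : PB.PosDef) (hQA : QA.PosDef) (hQB : QB.PosDef)
    (ω : ℝ) (hω : ω ∈ Set.Icc (0 : ℝ) 1) :
    let A := fun (t : ℝ) => (PA + t • QA)⁻¹
    let B := fun (t : ℝ) => (PB + t • QB)⁻¹
    let H := ω • A ω + (1 - ω) • B (1 - ω)
    let H' := A ω * PA * A ω - B (1 - ω) * PB * B (1 - ω)
    let H'' := -(A ω * (QA * A ω * PA + PA * A ω * QA) * A ω)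
      - (B (1 - ω) * (QB * B (1 - ω) * PB + PB * B (1 - ω) * QB) * B (1 - ω))
    let BS := H⁻¹
    ((2 : ℝ) • (BS * H' * BS * H' * BS) - BS * H'' * BS).PosDef := by
  obtain ⟨hω0, hω1⟩ := hω
  intro A B H H' H'' BS
  have hω1' : (0:ℝ) ≤ 1 - ω := by linarith
  -- A ω and B (1-ω) are posdef
  have hMA : (PA + ω • QA).PosDef := hPA.add_posSemidef (aux_smul_posSemidef hω0 hQA.posSemidef)
  have hMB : (PB + (1 - ω) • QB).PosDef :=
    hPB.add_posSemidef (aux_smul_posSemidef hω1' hQB.posSemidef)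
  have hA : (A ω).PosDef := hMA.inv
  have hB : (B (1 - ω)).PosDef := hMB.inv
  -- H is posdef
  have hH : H.PosDef := by
    rcases lt_or_eq_of_le hω0 with h0 | h0
    · exact (aux_smul_posDef h0 hA).add_posSemidef (aux_smul_posSemidef hω1' hB.posSemidef)
    · have : (1 - ω) > 0 := by linarith
      exact Matrix.PosDef.posSemidef_add (aux_smul_posSemidef hω0 hA.posSemidef)
        (aux_smul_posDef this hB)
  have hBS : BS.PosDef := hH.inv
  -- H' is hermitian
  have hH'herm : H'.IsHermitian := by
    refine Matrix.IsHermitian.sub ?_ ?_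
    · have := isHermitian_mul_mul_conjTranspose (A ω) hPA.1
      rwa [hA.1.eq] at this
    · have := isHermitian_mul_mul_conjTranspose (B (1 - ω)) hPB.1
      rwa [hB.1.eq] at this
  -- first part: 2 • (BS * H' * BS * H' * BS) is posSemidef
  have hpart1 : ((2 : ℝ) • (BS * H' * BS * H' * BS)).PosSemidef := by
    refine aux_smul_posSemidef (by norm_num) ?_
    have := hBS.posSemidef.mul_mul_conjTranspose_same (BS * H')
    have heq : BS * H' * BS * (BS * H')ᴴ = BS * H' * BS * H' * BS := by
      rw [conjTranspose_mul, hH'herm.eq, hBS.1.eq]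
      simp only [Matrix.mul_assoc]
    rwa [heq] at this
  -- second part: - BS * H'' * BS is posdef
  have hKA : (QA * A ω * PA + PA * A ω * QA).PosDef := by
    have h1 : (QA * A ω * PA).PosDef := aux_key hω0 hPA hQA
    have h2 : (PA * A ω * QA).PosDef := by
      have := h1.transpose
      have heq : (QA * A ω * PA)ᵀ = PA * A ω * QA := by
        rw [Matrix.transpose_mul, Matrix.transpose_mul]
        rw [show QAᵀ = QA from hQA.1.eq, show PAᵀ = PA from hPA.1.eq,
          show (A ω)ᵀ = A ω from hA.1.eq, Matrix.mul_assoc]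
      rwa [heq] at this
    exact h1.add h2
  have hKB : (QB * B (1 - ω) * PB + PB * B (1 - ω) * QB).PosDef := by
    have h1 : (QB * B (1 - ω) * PB).PosDef := aux_key hω1' hPB hQB
    have h2 : (PB * B (1 - ω) * QB).PosDef := by
      have := h1.transpose
      have heq : (QB * B (1 - ω) * PB)ᵀ = PB * B (1 - ω) * QB := by
        rw [Matrix.transpose_mul, Matrix.transpose_mul]
        rw [show QBᵀ = QB from hQB.1.eq, show PBᵀ = PB from hPB.1.eq,
          show (B (1 - ω))ᵀ = B (1 - ω) from hB.1.eq, Matrix.mul_assoc]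
      rwa [heq] at this
    exact h1.add h2
  have hnegH'' : (-H'').PosDef := by
    have hA' : (A ω * (QA * A ω * PA + PA * A ω * QA) * A ω).PosDef :=
      aux_conj_posDef' hKA hA.1 hA.isUnit
    have hB' : (B (1 - ω) * (QB * B (1 - ω) * PB + PB * B (1 - ω) * QB) * B (1 - ω)).PosDef :=
      aux_conj_posDef' hKB hB.1 hB.isUnit
    have : -H'' = A ω * (QA * A ω * PA + PA * A ω * QA) * A ω
        + B (1 - ω) * (QB * B (1 - ω) * PB + PB * B (1 - ω) * QB) * B (1 - ω) := by
      show -((-(A ω * (QA * A ω * PA + PA * A ω * QA) * A ω))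
        - (B (1 - ω) * (QB * B (1 - ω) * PB + PB * B (1 - ω) * QB) * B (1 - ω))) = _
      abel
    rw [this]
    exact hA'.add hB'
  have hpart2 : (-(BS * H'' * BS)).PosDef := by
    have : BS * (-H'') * BS = -(BS * H'' * BS) := by
      rw [Matrix.mul_neg, Matrix.neg_mul]
    rw [← this]
    exact aux_conj_posDef' hnegH'' hBS.1 hBS.isUnit
  have : (2 : ℝ) • (BS * H' * BS * H' * BS) - BS * H'' * BS
      = (2 : ℝ) • (BS * H' * BS * H' * BS) + (-(BS * H'' * BS)) := by
    rw [sub_eq_add_neg]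
  rw [this]
  exact Matrix.PosDef.posSemidef_add hpart1 hpart2
end

section
/- (Conservativeness of SCI.) Let P_A, P_B, Q_A, Q_B be symmetric positive definite, C_A = P_A + Q_A, C_B = P_B + Q_B, and let P_{AB} satisfy [[P_A, P_{AB}],[P_{AB}ᵀ, P_B]] ⪰ 0. For ω ∈ (0,1) set B = B_SCI(ω) = (ω(P_A + ω Q_A)^{-1} + (1−ω)(P_B + (1−ω)Q_B)^{-1})^{-1}, K_A = ω B (P_A + ω Q_A)^{-1}, K_B = (1−ω) B (P_B + (1−ω)Q_B)^{-1}. Then K_A + K_B = I and K_A C_A K_Aᵀ + K_A P_{AB} K_Bᵀ + K_B P_{AB}ᵀ K_Aᵀ + K_B C_B K_Bᵀ ⪯ B. -/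
/-!
Write `S_A = P_A + ω Q_A`, `S_B = P_B + (1 - ω) Q_B` and `X = B S_A⁻¹`, `Y = B S_B⁻¹`, so that
`K_A = ω X` and `K_B = (1 - ω) Y`. Since `B⁻¹ = ω S_A⁻¹ + (1 - ω) S_B⁻¹`, the gains sum to `I`, and
`B = B B⁻¹ B = ω X S_A Xᵀ + (1 - ω) Y S_B Yᵀ`. Subtracting the fused covariance, the `Q` terms
cancel and what is left is `ω (1 - ω)` times the joint covariance `[[P_A, P_AB], [P_ABᵀ, P_B]]`
conjugated by `[X, -Y]`, which is positive semidefinite.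
-/

open Matrix

section

variable {l m n : Type*} [Fintype m] [Fintype n]

theorem Matrix.PosSemidef.mul_fromBlocks_mul_transpose [Finite l] {P₁₁ : Matrix m m ℝ}
    {P₁₂ : Matrix m n ℝ} {P₂₁ : Matrix n m ℝ} {P₂₂ : Matrix n n ℝ}
    (hP : (fromBlocks P₁₁ P₁₂ P₂₁ P₂₂).PosSemidef) (X : Matrix l m ℝ) (Y : Matrix l n ℝ) :
    (X * P₁₁ * Xᵀ + X * P₁₂ * Yᵀ + Y * P₂₁ * Xᵀ + Y * P₂₂ * Yᵀ).PosSemidef := by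
  have h := hP.mul_mul_conjTranspose_same (fromCols X Y)
  rw [fromCols_mul_fromBlocks, conjTranspose_fromCols_eq_fromRows_conjTranspose,
    fromCols_mul_fromRows] at h
  convert h using 1
  simp only [conjTranspose_eq_transpose_of_trivial, Matrix.add_mul]
  abel

variable {R : Type*} [CommRing R]

theorem Matrix.eq_smul_conj_inv_add_smul_conj_inv [DecidableEq m] {a b : R}
    {S T B : Matrix m m R} (hS : IsUnit S.det) (hT : IsUnit T.det) (hSsymm : Sᵀ = S)
    (hTsymm : Tᵀ = T) (hBsymm : Bᵀ = B) (hB : B * (a • S⁻¹ + b • T⁻¹) = 1) :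
    B = a • (B * S⁻¹ * S * (B * S⁻¹)ᵀ) + b • (B * T⁻¹ * T * (B * T⁻¹)ᵀ) := by
  have conj {U : Matrix m m R} (hU : IsUnit U.det) (hUsymm : Uᵀ = U) :
      B * U⁻¹ * U * (B * U⁻¹)ᵀ = B * U⁻¹ * B := by
    rw [mul_assoc B, nonsing_inv_mul _ hU, mul_one, transpose_mul, transpose_nonsing_inv,
      hUsymm, hBsymm, mul_assoc]
  rw [conj hS hSsymm, conj hT hTsymm]
  calc B = B * (a • S⁻¹ + b • T⁻¹) * B := by rw [hB, one_mul]
    _ = _ := by simp only [mul_add, add_mul, mul_smul_comm, smul_mul_assoc]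

theorem Matrix.sub_sci_covariance_eq_smul {ω : R} {B : Matrix l l R} {X : Matrix l m R}
    {Y : Matrix l n R} {PA QA : Matrix m m R} {PB QB : Matrix n n R} (PAB : Matrix m n R)
    (hB : B = ω • (X * (PA + ω • QA) * Xᵀ) + (1 - ω) • (Y * (PB + (1 - ω) • QB) * Yᵀ)) :
    B - ((ω • X) * (PA + QA) * (ω • X)ᵀ + (ω • X) * PAB * ((1 - ω) • Y)ᵀ
        + ((1 - ω) • Y) * PABᵀ * (ω • X)ᵀ + ((1 - ω) • Y) * (PB + QB) * ((1 - ω) • Y)ᵀ) =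
      (ω * (1 - ω)) • (X * PA * Xᵀ + X * PAB * (-Y)ᵀ + (-Y) * PABᵀ * Xᵀ + (-Y) * PB * (-Y)ᵀ) := by
  subst hB
  simp only [transpose_neg, transpose_smul, Matrix.smul_mul, Matrix.mul_smul, Matrix.mul_neg,
    Matrix.neg_mul, neg_neg, Matrix.mul_add, Matrix.add_mul, smul_add, smul_neg, smul_smul]
  match_scalars <;> ring

end

theorem sci_stmt9 {n : ℕ} (PA PB QA QB PAB : Matrix (Fin n) (Fin n) ℝ)
    (hPA : PA.PosDef) (hPB : PB.PosDef) (hQA : QA.PosDef) (hQB : QB.PosDef)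
    (hPAB : (Matrix.fromBlocks PA PAB PABᵀ PB).PosSemidef)
    (ω : ℝ) (hω : ω ∈ Set.Ioo (0 : ℝ) 1) :
    let CA := PA + QA
    let CB := PB + QB
    let B := (ω • (PA + ω • QA)⁻¹ + (1 - ω) • (PB + (1 - ω) • QB)⁻¹)⁻¹
    let KA := ω • (B * (PA + ω • QA)⁻¹)
    let KB := (1 - ω) • (B * (PB + (1 - ω) • QB)⁻¹)
    KA + KB = 1 ∧
    (B - (KA * CA * KAᵀ + KA * PAB * KBᵀ + KB * PABᵀ * KAᵀ + KB * CB * KBᵀ)).PosSemidef := by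
  intro CA CB B KA KB
  obtain ⟨hω, hω1⟩ := hω
  have hω' : 0 < 1 - ω := sub_pos.2 hω1
  have hSA : (PA + ω • QA).PosDef := hPA.add (hQA.smul hω)
  have hSB : (PB + (1 - ω) • QB).PosDef := hPB.add (hQB.smul hω')
  have hM : (ω • (PA + ω • QA)⁻¹ + (1 - ω) • (PB + (1 - ω) • QB)⁻¹).PosDef :=
    (hSA.inv.smul hω).add (hSB.inv.smul hω')
  have hBM : B * (ω • (PA + ω • QA)⁻¹ + (1 - ω) • (PB + (1 - ω) • QB)⁻¹) = 1 :=
    nonsing_inv_mul _ hM.det_pos.ne'.isUnit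
  refine ⟨by rw [← hBM, mul_add, mul_smul_comm, mul_smul_comm], ?_⟩
  have hBsymm : Bᵀ = B := hM.inv.1
  have hB := eq_smul_conj_inv_add_smul_conj_inv hSA.det_pos.ne'.isUnit hSB.det_pos.ne'.isUnit
    hSA.1 hSB.1 hBsymm hBM
  rw [sub_sci_covariance_eq_smul PAB hB]
  exact (hPAB.mul_fromBlocks_mul_transpose _ _).smul (mul_pos hω hω').le
end

section
/- (Conservativeness of CI.) Let C_A, C_B be symmetric positive definite and C_{AB} any matrix with [[C_A, C_{AB}],[C_{AB}ᵀ, C_B]] ⪰ 0. For ω ∈ (0,1) set B_CI(ω) = (ω C_A^{-1} + (1−ω) C_B^{-1})^{-1}, K_A = ω B_CI(ω) C_A^{-1}, K_B = (1−ω) B_CI(ω) C_B^{-1}. Then K_A C_A K_Aᵀ + K_A C_{AB} K_Bᵀ + K_B C_{AB}ᵀ K_Aᵀ + K_B C_B K_Bᵀ ⪯ B_CI(ω). -/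
open Matrix

private lemma smul_posDef {n : ℕ} {c : ℝ} (hc : 0 < c) {M : Matrix (Fin n) (Fin n) ℝ}
    (hM : M.PosDef) : (c • M).PosDef := by
  refine ⟨?_, fun x hx => ?_⟩
  · unfold Matrix.IsHermitian
    rw [conjTranspose_smul, hM.1.eq]
    simp
  · simpa [← Finsupp.smul_sum, Finsupp.mul_sum, mul_assoc, mul_left_comm c] using mul_pos hc (hM.2 hx)

theorem sci_stmt10 {n : ℕ} (CA CB CAB : Matrix (Fin n) (Fin n) ℝ)
    (hCA : CA.PosDef) (hCB : CB.PosDef)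
    (hCAB : (Matrix.fromBlocks CA CAB CABᵀ CB).PosSemidef)
    (ω : ℝ) (hω : ω ∈ Set.Ioo (0 : ℝ) 1) :
    let BCI := (ω • CA⁻¹ + (1 - ω) • CB⁻¹)⁻¹
    let KA := ω • (BCI * CA⁻¹)
    let KB := (1 - ω) • (BCI * CB⁻¹)
    (BCI - (KA * CA * KAᵀ + KA * CAB * KBᵀ + KB * CABᵀ * KAᵀ + KB * CB * KBᵀ)).PosSemidef := by
  obtain ⟨hω0, hω1⟩ := hω
  have h1ω : 0 < 1 - ω := by linarith
  intro BCI KA KB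
  set P : Matrix (Fin n) (Fin n) ℝ := ω • CA⁻¹ + (1 - ω) • CB⁻¹ with hPdef
  have hP : P.PosDef := (smul_posDef hω0 hCA.inv).add (smul_posDef h1ω hCB.inv)
  have hPd : IsUnit P.det := hP.det_pos.ne'.isUnit
  have hCAd : IsUnit CA.det := hCA.det_pos.ne'.isUnit
  have hCBd : IsUnit CB.det := hCB.det_pos.ne'.isUnit
  have hBdef : BCI = P⁻¹ := rfl
  have hBT : BCIᵀ = BCI := by
    rw [← conjTranspose_eq_transpose_of_trivial, hBdef]
    exact hP.isHermitian.inv.eq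
  have hCAiT : (CA⁻¹)ᵀ = CA⁻¹ := by
    rw [← conjTranspose_eq_transpose_of_trivial]
    exact hCA.isHermitian.inv.eq
  have hCBiT : (CB⁻¹)ᵀ = CB⁻¹ := by
    rw [← conjTranspose_eq_transpose_of_trivial]
    exact hCB.isHermitian.inv.eq
  have hKAT : KAᵀ = ω • (CA⁻¹ * BCI) := by
    show (ω • (BCI * CA⁻¹))ᵀ = _
    rw [transpose_smul, transpose_mul, hCAiT, hBT]
  have hKBT : KBᵀ = (1 - ω) • (CB⁻¹ * BCI) := by
    show ((1 - ω) • (BCI * CB⁻¹))ᵀ = _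
    rw [transpose_smul, transpose_mul, hCBiT, hBT]
  have hA1 : KA * CA * KAᵀ = (ω * ω) • (BCI * CA⁻¹ * BCI) := by
    rw [hKAT]
    show (ω • (BCI * CA⁻¹)) * CA * (ω • (CA⁻¹ * BCI)) = _
    simp only [Matrix.smul_mul, Matrix.mul_smul, smul_smul]
    congr 1
    calc BCI * CA⁻¹ * CA * (CA⁻¹ * BCI) = BCI * (CA⁻¹ * CA * CA⁻¹) * BCI := by
          simp only [Matrix.mul_assoc]
      _ = BCI * CA⁻¹ * BCI := by rw [nonsing_inv_mul CA hCAd, Matrix.one_mul]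
  have hA4 : KB * CB * KBᵀ = ((1 - ω) * (1 - ω)) • (BCI * CB⁻¹ * BCI) := by
    rw [hKBT]
    show ((1 - ω) • (BCI * CB⁻¹)) * CB * ((1 - ω) • (CB⁻¹ * BCI)) = _
    simp only [Matrix.smul_mul, Matrix.mul_smul, smul_smul]
    congr 1
    calc BCI * CB⁻¹ * CB * (CB⁻¹ * BCI) = BCI * (CB⁻¹ * CB * CB⁻¹) * BCI := by
          simp only [Matrix.mul_assoc]
      _ = BCI * CB⁻¹ * BCI := by rw [nonsing_inv_mul CB hCBd, Matrix.one_mul]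
  have hBsum : BCI = ω • (BCI * CA⁻¹ * BCI) + (1 - ω) • (BCI * CB⁻¹ * BCI) := by
    have : ω • (BCI * CA⁻¹ * BCI) + (1 - ω) • (BCI * CB⁻¹ * BCI) = BCI * P * BCI := by
      rw [hPdef, Matrix.mul_add, Matrix.add_mul, Matrix.mul_smul, Matrix.smul_mul,
        Matrix.mul_smul, Matrix.smul_mul]
    rw [this, hBdef, mul_nonsing_inv_cancel_right _ _ hPd]
  -- the sqrt scalars
  set s : ℝ := Real.sqrt ((1 - ω) / ω) with hsdef
  have hfracpos : 0 < (1 - ω) / ω := div_pos h1ω hω0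
  have hs0 : 0 < s := Real.sqrt_pos.mpr hfracpos
  have hss : s * s = (1 - ω) / ω := Real.mul_self_sqrt hfracpos.le
  set t : ℝ := s⁻¹ with htdef
  have hst : s * t = 1 := mul_inv_cancel₀ hs0.ne'
  have htt : t * t = ω / (1 - ω) := by
    rw [htdef, ← mul_inv, hss, inv_div]
  -- the block matrix
  set Sig : Matrix (Fin n ⊕ Fin n) (Fin n ⊕ Fin n) ℝ := Matrix.fromBlocks CA CAB CABᵀ CB
  set L : Matrix (Fin n ⊕ Fin n) (Fin n ⊕ Fin n) ℝ :=
    Matrix.fromBlocks (s • KA) (-(t • KB)) 0 0 with hLdef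
  have hPSD : ((L * Sig * Lᴴ).submatrix Sum.inl Sum.inl).PosSemidef :=
    (hCAB.mul_mul_conjTranspose_same L).submatrix Sum.inl
  have hblock : (L * Sig * Lᴴ).submatrix Sum.inl Sum.inl =
      (s * s) • (KA * CA * KAᵀ) - (s * t) • (KA * CAB * KBᵀ)
        - (t * s) • (KB * CABᵀ * KAᵀ) + (t * t) • (KB * CB * KBᵀ) := by
    rw [conjTranspose_eq_transpose_of_trivial, hLdef, fromBlocks_transpose,
      fromBlocks_multiply, fromBlocks_multiply]
    ext i j
    simp [Matrix.submatrix_apply, Matrix.fromBlocks_apply₁₁, Matrix.mul_smul,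
      Matrix.smul_mul, smul_smul, Matrix.add_mul, Matrix.neg_mul, Matrix.mul_neg,
      sub_eq_add_neg, Matrix.mul_assoc]
    ring
  have hfinal : BCI - (KA * CA * KAᵀ + KA * CAB * KBᵀ + KB * CABᵀ * KAᵀ + KB * CB * KBᵀ)
      = (L * Sig * Lᴴ).submatrix Sum.inl Sum.inl := by
    have hts : t * s = 1 := by rw [mul_comm]; exact hst
    rw [hblock, hst, hts, hA1, hA4, hss, htt, one_smul, one_smul]
    nth_rewrite 1 [hBsum]
    set X := BCI * CA⁻¹ * BCI
    set Y := BCI * CB⁻¹ * BCI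
    ext i j
    simp only [Matrix.add_apply, Matrix.sub_apply, Matrix.smul_apply, smul_eq_mul]
    field_simp
    ring
  rw [hfinal]
  exact hPSD
end

section
/- The minimal volume V* = {x : g(x) ≤ 1}, where g(x) = min_{P_{AB} ∈ A_Split} xᵀ (C_F*(P_{AB}))^{-1} x, equals the intersection over ω ∈ [0,1] of the ellipsoids E(B_SCI(ω)) = {x : xᵀ H_SCI(ω) x ≤ 1}. -/
set_option linter.unusedSectionVars false

open Matrix

namespace SCIProof

variable {m : Type*} [Fintype m] [DecidableEq m]


lemma herm_of_symm {M : Matrix m m ℝ} (h : Mᵀ = M) : M.IsHermitian := by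
  unfold Matrix.IsHermitian
  rw [← Matrix.conjTranspose_eq_transpose_of_trivial] at h
  exact h

lemma symm_of_herm {M : Matrix m m ℝ} (h : M.IsHermitian) : Mᵀ = M := by
  rw [← Matrix.conjTranspose_eq_transpose_of_trivial]; exact h

lemma psd_form {M : Matrix m m ℝ} (h : M.PosSemidef) (z : m → ℝ) : 0 ≤ z ⬝ᵥ M *ᵥ z := by
  simpa using h.dotProduct_mulVec_nonneg z

lemma pd_form {M : Matrix m m ℝ} (h : M.PosDef) {z : m → ℝ} (hz : z ≠ 0) : 0 < z ⬝ᵥ M *ᵥ z := by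
  simpa using h.dotProduct_mulVec_pos hz

lemma dot_transpose (M : Matrix m m ℝ) (p q : m → ℝ) : p ⬝ᵥ Mᵀ *ᵥ q = q ⬝ᵥ M *ᵥ p := by
  rw [dotProduct_mulVec, vecMul_transpose, dotProduct_comm]

lemma dot_symm (M : Matrix m m ℝ) (hM : Mᵀ = M) (p q : m → ℝ) : p ⬝ᵥ M *ᵥ q = q ⬝ᵥ M *ᵥ p := by
  conv_lhs => rw [← hM]
  rw [dot_transpose]

lemma cs (M : Matrix m m ℝ) (hM : Mᵀ = M) (hpsd : ∀ z, 0 ≤ z ⬝ᵥ M *ᵥ z) (p q : m → ℝ) :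
    (p ⬝ᵥ M *ᵥ q) ^ 2 ≤ (p ⬝ᵥ M *ᵥ p) * (q ⬝ᵥ M *ᵥ q) := by
  have key : ∀ t : ℝ, 0 ≤ (q ⬝ᵥ M *ᵥ q) * (t * t) + (2 * (p ⬝ᵥ M *ᵥ q)) * t + p ⬝ᵥ M *ᵥ p := by
    intro t
    have h := hpsd (p + t • q)
    have expand : (p + t • q) ⬝ᵥ M *ᵥ (p + t • q)
        = (q ⬝ᵥ M *ᵥ q) * (t * t) + (2 * (p ⬝ᵥ M *ᵥ q)) * t + p ⬝ᵥ M *ᵥ p := by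
      rw [mulVec_add, mulVec_smul, dotProduct_add, add_dotProduct, add_dotProduct,
        dotProduct_smul, smul_dotProduct, smul_dotProduct, dot_symm M hM q p]
      simp [smul_eq_mul]
      ring
    rw [expand] at h
    exact h
  have hd := discrim_le_zero (a := q ⬝ᵥ M *ᵥ q) (b := 2 * (p ⬝ᵥ M *ᵥ q))
    (c := p ⬝ᵥ M *ᵥ p) key
  rw [discrim] at hd
  nlinarith [hd]

lemma amgm {P Q r : ℝ} (hP : 0 ≤ P) (hQ : 0 ≤ Q) (h : r ^ 2 ≤ P * Q) :
    0 ≤ P + 2 * r + Q := by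
  nlinarith [sq_nonneg (P - Q), sq_nonneg (P + Q + 2 * r)]

lemma inv_quad_lower (M : Matrix m m ℝ) (hsym : Mᵀ = M) (hpsd : ∀ z, 0 ≤ z ⬝ᵥ M *ᵥ z)
    (hunit : IsUnit M.det) (x y : m → ℝ) :
    2 * (x ⬝ᵥ y) - y ⬝ᵥ M *ᵥ y ≤ x ⬝ᵥ M⁻¹ *ᵥ x := by
  set z := M⁻¹ *ᵥ x with hz
  have hMz : M *ᵥ z = x := by
    rw [hz, mulVec_mulVec, Matrix.mul_nonsing_inv M hunit, one_mulVec]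
  have hd := hpsd (z - y)
  have e1 : z ⬝ᵥ M *ᵥ z = x ⬝ᵥ M⁻¹ *ᵥ x := by
    rw [hMz, dotProduct_comm]
  have e2 : y ⬝ᵥ M *ᵥ z = x ⬝ᵥ y := by rw [hMz, dotProduct_comm]
  have e3 : z ⬝ᵥ M *ᵥ y = x ⬝ᵥ y := by rw [dot_symm M hsym, e2]
  have expand : (z - y) ⬝ᵥ M *ᵥ (z - y)
      = z ⬝ᵥ M *ᵥ z - y ⬝ᵥ M *ᵥ z - z ⬝ᵥ M *ᵥ y + y ⬝ᵥ M *ᵥ y := by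
    simp only [mulVec_sub, dotProduct_sub, sub_dotProduct]
    ring
  rw [expand, e1, e2, e3] at hd
  linarith

lemma quad3 (A M B : Matrix m m ℝ) (y z : m → ℝ) :
    y ⬝ᵥ (A * M * B) *ᵥ z = (Aᵀ *ᵥ y) ⬝ᵥ M *ᵥ (B *ᵥ z) := by
  rw [Matrix.mul_assoc, ← mulVec_mulVec, ← mulVec_mulVec, dotProduct_mulVec,
    ← mulVec_transpose]

lemma cov_identity (CA CB PAB S T K : Matrix m m ℝ)
    (hCA : CAᵀ = CA) (hCB : CBᵀ = CB)
    (hS : S = CA + CB - PAB - PABᵀ)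
    (hST : S * T = 1) (hTS : T * S = 1) (hT : Tᵀ = T) :
    K * CA * Kᵀ + K * PAB * (1 - K)ᵀ + (1 - K) * PABᵀ * Kᵀ + (1 - K) * CB * (1 - K)ᵀ
      = (CA - (CA - PAB) * T * (CA - PAB)ᵀ)
        + (K - (1 - (CA - PAB) * T)) * S * (K - (1 - (CA - PAB) * T))ᵀ := by
  have hD : K - (1 - (CA - PAB) * T) = (K - 1) + (CA - PAB) * T := by noncomm_ring
  have hDS : ((K - 1) + (CA - PAB) * T) * S = (K - 1) * S + (CA - PAB) := by
    rw [add_mul, Matrix.mul_assoc, hTS, Matrix.mul_one]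
  have hDT : (K - (1 - (CA - PAB) * T))ᵀ = (Kᵀ - 1) + T * (CA - PAB)ᵀ := by
    simp only [transpose_sub, transpose_one, transpose_mul, hT]
    noncomm_ring
  have hDSD : (K - (1 - (CA - PAB) * T)) * S * (K - (1 - (CA - PAB) * T))ᵀ
      = (K - 1) * S * (Kᵀ - 1) + (K - 1) * (CA - PAB)ᵀ + (CA - PAB) * (Kᵀ - 1)
        + (CA - PAB) * (T * (CA - PAB)ᵀ) := by
    rw [hDT, hD, hDS]
    have expand : ((K - 1) * S + (CA - PAB)) * ((Kᵀ - 1) + T * (CA - PAB)ᵀ)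
        = (K - 1) * S * (Kᵀ - 1) + (K - 1) * (S * T) * (CA - PAB)ᵀ
          + (CA - PAB) * (Kᵀ - 1) + (CA - PAB) * (T * (CA - PAB)ᵀ) := by
      noncomm_ring
    rw [expand, hST, Matrix.mul_one]
  rw [hDSD, hS]
  simp only [transpose_sub, transpose_one, transpose_mul, transpose_add, hCA, hCB]
  noncomm_ring

lemma cov_quad (CA CB PAB K : Matrix m m ℝ) (y : m → ℝ) :
    y ⬝ᵥ (K * CA * Kᵀ + K * PAB * (1 - K)ᵀ + (1 - K) * PABᵀ * Kᵀ + (1 - K) * CB * (1 - K)ᵀ) *ᵥ y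
      = (Kᵀ *ᵥ y) ⬝ᵥ CA *ᵥ (Kᵀ *ᵥ y)
        + ((Kᵀ *ᵥ y) ⬝ᵥ PAB *ᵥ ((1 - K)ᵀ *ᵥ y) + ((1 - K)ᵀ *ᵥ y) ⬝ᵥ PABᵀ *ᵥ (Kᵀ *ᵥ y))
        + ((1 - K)ᵀ *ᵥ y) ⬝ᵥ CB *ᵥ ((1 - K)ᵀ *ᵥ y) := by
  simp only [add_mulVec, dotProduct_add]
  rw [quad3 K CA Kᵀ, quad3 K PAB (1 - K)ᵀ, quad3 (1 - K) PABᵀ Kᵀ, quad3 (1 - K) CB (1 - K)ᵀ]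
  ring

lemma vecMulVec_mulVec' (w v z : m → ℝ) : vecMulVec w v *ᵥ z = (v ⬝ᵥ z) • w := by
  ext i
  simp only [mulVec, vecMulVec_apply, dotProduct, Pi.smul_apply, smul_eq_mul,
    Finset.mul_sum, of_apply]
  rw [Finset.sum_mul]
  exact Finset.sum_congr rfl fun j _ => by ring

lemma vecMulVec_transpose' (w v : m → ℝ) : (vecMulVec w v)ᵀ = vecMulVec v w := by
  ext i j
  simp [vecMulVec_apply, transpose_apply, mul_comm]

lemma mulVec_inv_cancel {M : Matrix m m ℝ} (h : IsUnit M.det) (x : m → ℝ) :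
    M *ᵥ (M⁻¹ *ᵥ x) = x := by
  rw [mulVec_mulVec, Matrix.mul_nonsing_inv M h, one_mulVec]

lemma inv_mulVec_cancel {M : Matrix m m ℝ} (h : IsUnit M.det) (x : m → ℝ) :
    M⁻¹ *ᵥ (M *ᵥ x) = x := by
  rw [mulVec_mulVec, Matrix.nonsing_inv_mul M h, one_mulVec]

lemma pd_add_smul {P Q : Matrix m m ℝ} (hP : P.PosDef) (hQ : Q.PosDef) {ω : ℝ} (hω : 0 ≤ ω) :
    (P + ω • Q).PosDef := by
  refine Matrix.PosDef.of_dotProduct_mulVec_pos (herm_of_symm ?_) fun z hz => ?_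
  · rw [transpose_add, transpose_smul, symm_of_herm hP.1, symm_of_herm hQ.1]
  · have h1 := pd_form hP hz
    have h2 := psd_form hQ.posSemidef z
    have e : star z ⬝ᵥ (P + ω • Q) *ᵥ z = z ⬝ᵥ P *ᵥ z + ω * (z ⬝ᵥ Q *ᵥ z) := by
      simp [add_mulVec, dotProduct_add, smul_mulVec, dotProduct_smul]
    rw [e]
    nlinarith

section Core

variable (PA PB QA QB PAB : Matrix m m ℝ)

lemma Jform (hJ : (fromBlocks PA PAB PABᵀ PB).PosSemidef) (p q : m → ℝ) :
    0 ≤ p ⬝ᵥ PA *ᵥ p + 2 * (p ⬝ᵥ PAB *ᵥ q) + q ⬝ᵥ PB *ᵥ q := by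
  have h := psd_form hJ (Sum.elim p q)
  rw [fromBlocks_mulVec, sumElim_dotProduct_sumElim] at h
  simp only [Sum.elim_comp_inl, Sum.elim_comp_inr] at h
  rw [dotProduct_add, dotProduct_add, dot_transpose] at h
  linarith

/-- `S = CA + CB - PAB - PABᵀ` -/
def Sm : Matrix m m ℝ := PA + QA + (PB + QB) - PAB - PABᵀ

/-- the Bar-Shalom–Campo fused covariance -/
noncomputable def CFm : Matrix m m ℝ :=
  PA + QA - (PA + QA - PAB) * (Sm PA PB QA QB PAB)⁻¹ * (PA + QA - PABᵀ)

variable {PA PB QA QB PAB}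
variable (hPA : PA.PosDef) (hPB : PB.PosDef) (hQA : QA.PosDef) (hQB : QB.PosDef)
  (hJ : (fromBlocks PA PAB PABᵀ PB).PosSemidef)

include hPA hPB hQA hQB hJ

lemma Sm_symm : (Sm PA PB QA QB PAB)ᵀ = Sm PA PB QA QB PAB := by
  simp only [Sm, transpose_sub, transpose_add, symm_of_herm hPA.1, symm_of_herm hPB.1,
    symm_of_herm hQA.1, symm_of_herm hQB.1, transpose_transpose]
  abel

lemma Sm_posdef : (Sm PA PB QA QB PAB).PosDef := by
  refine Matrix.PosDef.of_dotProduct_mulVec_pos (herm_of_symm (Sm_symm hPA hPB hQA hQB hJ)) fun z hz => ?_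
  have hq := Jform PA PB PAB hJ z (-z)
  have e : star z ⬝ᵥ (Sm PA PB QA QB PAB) *ᵥ z
      = z ⬝ᵥ PA *ᵥ z + z ⬝ᵥ QA *ᵥ z + (z ⬝ᵥ PB *ᵥ z + z ⬝ᵥ QB *ᵥ z)
        - z ⬝ᵥ PAB *ᵥ z - z ⬝ᵥ PABᵀ *ᵥ z := by
    simp [Sm, sub_mulVec, add_mulVec, dotProduct_sub, dotProduct_add]
  have e2 : z ⬝ᵥ PABᵀ *ᵥ z = z ⬝ᵥ PAB *ᵥ z := dot_transpose PAB z z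
  have h1 := pd_form hQA hz
  have h2 := pd_form hQB hz
  simp only [mulVec_neg, dotProduct_neg, neg_dotProduct, neg_neg, mul_neg] at hq
  rw [e, e2]
  linarith

lemma Sm_det : IsUnit (Sm PA PB QA QB PAB).det :=
  (Sm_posdef hPA hPB hQA hQB hJ).det_pos.ne'.isUnit

lemma Sm_inv_symm : ((Sm PA PB QA QB PAB)⁻¹)ᵀ = (Sm PA PB QA QB PAB)⁻¹ := by
  rw [Matrix.transpose_nonsing_inv, Sm_symm hPA hPB hQA hQB hJ]

lemma CF_symm : (CFm PA PB QA QB PAB)ᵀ = CFm PA PB QA QB PAB := by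
  have hCAt : (PA + QA)ᵀ = PA + QA := by
    rw [transpose_add, symm_of_herm hPA.1, symm_of_herm hQA.1]
  simp only [CFm, transpose_sub, transpose_mul, transpose_transpose, hCAt,
    Sm_inv_symm hPA hPB hQA hQB hJ]
  rw [Matrix.mul_assoc]

lemma CF_le_form (y p q : m → ℝ) (hpq : p + q = y) :
    y ⬝ᵥ (CFm PA PB QA QB PAB) *ᵥ y
      ≤ p ⬝ᵥ (PA + QA) *ᵥ p + 2 * (p ⬝ᵥ PAB *ᵥ q) + q ⬝ᵥ (PB + QB) *ᵥ q := by
  have hCAt : (PA + QA)ᵀ = PA + QA := by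
    rw [transpose_add, symm_of_herm hPA.1, symm_of_herm hQA.1]
  have hCBt : (PB + QB)ᵀ = PB + QB := by
    rw [transpose_add, symm_of_herm hPB.1, symm_of_herm hQB.1]
  have hSdet := Sm_det hPA hPB hQA hQB hJ
  have hST : Sm PA PB QA QB PAB * (Sm PA PB QA QB PAB)⁻¹ = 1 :=
    Matrix.mul_nonsing_inv _ hSdet
  have hTS : (Sm PA PB QA QB PAB)⁻¹ * Sm PA PB QA QB PAB = 1 :=
    Matrix.nonsing_inv_mul _ hSdet
  have hT := Sm_inv_symm hPA hPB hQA hQB hJ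
  have hXT : (PA + QA - PAB)ᵀ = PA + QA - PABᵀ := by rw [transpose_sub, hCAt]
  have hCFeq : PA + QA - (PA + QA - PAB) * (Sm PA PB QA QB PAB)⁻¹ * (PA + QA - PAB)ᵀ
      = CFm PA PB QA QB PAB := by rw [hXT]; rfl
  rcases eq_or_ne y 0 with hy | hy
  · have hq : q = -p := by
      have := hpq; rw [hy] at this
      linear_combination (norm := module) this
    have hS := psd_form (Sm_posdef hPA hPB hQA hQB hJ).posSemidef p
    have e : p ⬝ᵥ (Sm PA PB QA QB PAB) *ᵥ p
        = p ⬝ᵥ (PA + QA) *ᵥ p - 2 * (p ⬝ᵥ PAB *ᵥ p) + p ⬝ᵥ (PB + QB) *ᵥ p := by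
      simp only [Sm, sub_mulVec, add_mulVec, dotProduct_sub, dotProduct_add,
        dot_transpose PAB p p]
      ring
    have lhs0 : y ⬝ᵥ (CFm PA PB QA QB PAB) *ᵥ y = 0 := by rw [hy, zero_dotProduct]
    rw [lhs0, hq]
    simp only [mulVec_neg, dotProduct_neg, neg_dotProduct, neg_neg]
    linarith [e ▸ hS]
  · -- choose K with Kᵀ *ᵥ y = p
    set c : ℝ := (y ⬝ᵥ y)⁻¹ with hc
    have hyy : y ⬝ᵥ y ≠ 0 := by
      intro h0
      exact hy (by
        have : ∀ i, y i = 0 := by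
          intro i
          have hsum : ∑ j, y j * y j = 0 := h0
          have hnn : ∀ j ∈ Finset.univ, 0 ≤ y j * y j := fun j _ => mul_self_nonneg _
          have := (Finset.sum_eq_zero_iff_of_nonneg hnn).1 hsum i (Finset.mem_univ i)
          nlinarith [this]
        funext i; exact this i)
    set K : Matrix m m ℝ := c • vecMulVec y p with hK
    have hKty : Kᵀ *ᵥ y = p := by
      rw [hK, transpose_smul, vecMulVec_transpose', smul_mulVec, vecMulVec_mulVec']
      rw [smul_smul, hc, inv_mul_cancel₀ hyy, one_smul]
    have hWty : (1 - K)ᵀ *ᵥ y = q := by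
      rw [transpose_sub, transpose_one, sub_mulVec, one_mulVec, hKty, ← hpq,
        add_sub_cancel_left]
    have hid := cov_identity (PA + QA) (PB + QB) PAB (Sm PA PB QA QB PAB)
      (Sm PA PB QA QB PAB)⁻¹ K hCAt hCBt rfl hST hTS hT
    have hq1 := congrArg (fun M => y ⬝ᵥ M *ᵥ y) hid
    rw [cov_quad] at hq1
    rw [hKty, hWty] at hq1
    rw [dot_transpose PAB q p] at hq1
    have hpos : 0 ≤ y ⬝ᵥ ((K - (1 - (PA + QA - PAB) * (Sm PA PB QA QB PAB)⁻¹))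
        * Sm PA PB QA QB PAB
        * (K - (1 - (PA + QA - PAB) * (Sm PA PB QA QB PAB)⁻¹))ᵀ) *ᵥ y := by
      rw [quad3]
      exact psd_form (Sm_posdef hPA hPB hQA hQB hJ).posSemidef _
    simp only [add_mulVec, dotProduct_add] at hq1 ⊢
    rw [hCFeq] at hq1
    linarith

lemma CF_ge_form (y : m → ℝ) : ∃ p q : m → ℝ, p + q = y ∧
    p ⬝ᵥ QA *ᵥ p + q ⬝ᵥ QB *ᵥ q ≤ y ⬝ᵥ CFm PA PB QA QB PAB *ᵥ y := by
  have hCAt : (PA + QA)ᵀ = PA + QA := by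
    rw [transpose_add, symm_of_herm hPA.1, symm_of_herm hQA.1]
  have hCBt : (PB + QB)ᵀ = PB + QB := by
    rw [transpose_add, symm_of_herm hPB.1, symm_of_herm hQB.1]
  have hSdet := Sm_det hPA hPB hQA hQB hJ
  have hST : Sm PA PB QA QB PAB * (Sm PA PB QA QB PAB)⁻¹ = 1 :=
    Matrix.mul_nonsing_inv _ hSdet
  have hTS : (Sm PA PB QA QB PAB)⁻¹ * Sm PA PB QA QB PAB = 1 :=
    Matrix.nonsing_inv_mul _ hSdet
  have hT := Sm_inv_symm hPA hPB hQA hQB hJ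
  have hXT : (PA + QA - PAB)ᵀ = PA + QA - PABᵀ := by rw [transpose_sub, hCAt]
  have hCFeq : PA + QA - (PA + QA - PAB) * (Sm PA PB QA QB PAB)⁻¹ * (PA + QA - PAB)ᵀ
      = CFm PA PB QA QB PAB := by rw [hXT]; rfl
  have hsplit : ∀ (K : Matrix m m ℝ) (y : m → ℝ), Kᵀ *ᵥ y + (1 - K)ᵀ *ᵥ y = y := by
    intro K y
    rw [transpose_sub, transpose_one, sub_mulVec, one_mulVec, add_comm, sub_add_cancel]
  set K : Matrix m m ℝ := 1 - (PA + QA - PAB) * (Sm PA PB QA QB PAB)⁻¹ with hKdef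
  refine ⟨Kᵀ *ᵥ y, (1 - K)ᵀ *ᵥ y, hsplit K y, ?_⟩
  · have hid := cov_identity (PA + QA) (PB + QB) PAB (Sm PA PB QA QB PAB)
      (Sm PA PB QA QB PAB)⁻¹ K hCAt hCBt rfl hST hTS hT
    have hD0 : K - (1 - (PA + QA - PAB) * (Sm PA PB QA QB PAB)⁻¹) = 0 := by
      rw [hKdef, sub_self]
    rw [hD0, Matrix.zero_mul, Matrix.zero_mul, add_zero, hCFeq] at hid
    have hq1 := congrArg (fun M => y ⬝ᵥ M *ᵥ y) hid
    rw [cov_quad] at hq1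
    set p := Kᵀ *ᵥ y
    set q := (1 - K)ᵀ *ᵥ y
    rw [dot_transpose PAB q p] at hq1
    have hJf := Jform PA PB PAB hJ p q
    simp only [add_mulVec, dotProduct_add] at hq1
    linarith

lemma CF_posdef : (CFm PA PB QA QB PAB).PosDef := by
  refine Matrix.PosDef.of_dotProduct_mulVec_pos (herm_of_symm (CF_symm hPA hPB hQA hQB hJ)) fun y hy => ?_
  obtain ⟨p, q, hpq, hge⟩ := CF_ge_form hPA hPB hQA hQB hJ y
  have hstar : star y = y := by simp
  rw [hstar]
  have hnz : p ≠ 0 ∨ q ≠ 0 := by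
    by_contra h
    push_neg at h
    exact hy (by rw [← hpq, h.1, h.2, add_zero])
  have hp := psd_form hQA.posSemidef p
  have hq := psd_form hQB.posSemidef q
  rcases hnz with h | h
  · have := pd_form hQA h; linarith
  · have := pd_form hQB h; linarith

lemma CF_det : IsUnit (CFm PA PB QA QB PAB).det :=
  (CF_posdef hPA hPB hQA hQB hJ).det_pos.ne'.isUnit

lemma CF_swap : CFm PA PB QA QB PAB
    = PB + QB - (PB + QB - PABᵀ) * (Sm PA PB QA QB PAB)⁻¹ * (PB + QB - PAB) := by
  have hSdet := Sm_det hPA hPB hQA hQB hJ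
  have hST : Sm PA PB QA QB PAB * (Sm PA PB QA QB PAB)⁻¹ = 1 :=
    Matrix.mul_nonsing_inv _ hSdet
  have hTS : (Sm PA PB QA QB PAB)⁻¹ * Sm PA PB QA QB PAB = 1 :=
    Matrix.nonsing_inv_mul _ hSdet
  have h1 : PB + QB - PABᵀ = Sm PA PB QA QB PAB - (PA + QA - PAB) := by
    rw [Sm]; abel
  have h2 : PB + QB - PAB = Sm PA PB QA QB PAB - (PA + QA - PABᵀ) := by
    rw [Sm]; abel
  rw [h1, h2]
  have key : (Sm PA PB QA QB PAB - (PA + QA - PAB)) * (Sm PA PB QA QB PAB)⁻¹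
        * (Sm PA PB QA QB PAB - (PA + QA - PABᵀ))
      = Sm PA PB QA QB PAB - (PA + QA - PABᵀ) - (PA + QA - PAB)
        + (PA + QA - PAB) * (Sm PA PB QA QB PAB)⁻¹ * (PA + QA - PABᵀ) := by
    have e : (Sm PA PB QA QB PAB - (PA + QA - PAB)) * (Sm PA PB QA QB PAB)⁻¹
          * (Sm PA PB QA QB PAB - (PA + QA - PABᵀ))
        = (Sm PA PB QA QB PAB * (Sm PA PB QA QB PAB)⁻¹) * Sm PA PB QA QB PAB
          - (Sm PA PB QA QB PAB * (Sm PA PB QA QB PAB)⁻¹) * (PA + QA - PABᵀ)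
          - (PA + QA - PAB) * ((Sm PA PB QA QB PAB)⁻¹ * Sm PA PB QA QB PAB)
          + (PA + QA - PAB) * (Sm PA PB QA QB PAB)⁻¹ * (PA + QA - PABᵀ) := by
      noncomm_ring
    rw [e, hST, hTS, Matrix.one_mul, Matrix.one_mul, Matrix.mul_one]
  rw [key, CFm, Sm]
  abel

lemma dirA (x : m → ℝ) (ω : ℝ) (hω0 : 0 ≤ ω) (hω1 : ω ≤ 1) :
    x ⬝ᵥ (ω • (PA + ω • QA)⁻¹ + (1 - ω) • (PB + (1 - ω) • QB)⁻¹) *ᵥ x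
      ≤ x ⬝ᵥ (CFm PA PB QA QB PAB)⁻¹ *ᵥ x := by
  have hω1' : (0:ℝ) ≤ 1 - ω := by linarith
  have hMA : (PA + ω • QA).PosDef := pd_add_smul hPA hQA hω0
  have hMB : (PB + (1 - ω) • QB).PosDef := pd_add_smul hPB hQB hω1'
  have hMAd : IsUnit (PA + ω • QA).det := hMA.det_pos.ne'.isUnit
  have hMBd : IsUnit (PB + (1 - ω) • QB).det := hMB.det_pos.ne'.isUnit
  set u := ω • ((PA + ω • QA)⁻¹ *ᵥ x) with hu
  set v := (1 - ω) • ((PB + (1 - ω) • QB)⁻¹ *ᵥ x) with hv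
  have hHx : (ω • (PA + ω • QA)⁻¹ + (1 - ω) • (PB + (1 - ω) • QB)⁻¹) *ᵥ x = u + v := by
    rw [add_mulVec, smul_mulVec, smul_mulVec]
  have hMAu : (PA + ω • QA) *ᵥ u = ω • x := by
    rw [hu, mulVec_smul, mulVec_inv_cancel hMAd]
  have hMBv : (PB + (1 - ω) • QB) *ᵥ v = (1 - ω) • x := by
    rw [hv, mulVec_smul, mulVec_inv_cancel hMBd]
  have hA : u ⬝ᵥ PA *ᵥ u + ω * (u ⬝ᵥ QA *ᵥ u) = ω * (x ⬝ᵥ u) := by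
    have h1 : u ⬝ᵥ (PA + ω • QA) *ᵥ u = u ⬝ᵥ PA *ᵥ u + ω * (u ⬝ᵥ QA *ᵥ u) := by
      rw [add_mulVec, dotProduct_add, smul_mulVec, dotProduct_smul, smul_eq_mul]
    have h2 : u ⬝ᵥ (PA + ω • QA) *ᵥ u = ω * (x ⬝ᵥ u) := by
      rw [hMAu, dotProduct_smul, smul_eq_mul, dotProduct_comm]
    linarith
  have hB : v ⬝ᵥ PB *ᵥ v + (1 - ω) * (v ⬝ᵥ QB *ᵥ v) = (1 - ω) * (x ⬝ᵥ v) := by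
    have h1 : v ⬝ᵥ (PB + (1 - ω) • QB) *ᵥ v = v ⬝ᵥ PB *ᵥ v + (1 - ω) * (v ⬝ᵥ QB *ᵥ v) := by
      rw [add_mulVec, dotProduct_add, smul_mulVec, dotProduct_smul, smul_eq_mul]
    have h2 : v ⬝ᵥ (PB + (1 - ω) • QB) *ᵥ v = (1 - ω) * (x ⬝ᵥ v) := by
      rw [hMBv, dotProduct_smul, smul_eq_mul, dotProduct_comm]
    linarith
  have hCAu : u ⬝ᵥ (PA + QA) *ᵥ u = u ⬝ᵥ PA *ᵥ u + u ⬝ᵥ QA *ᵥ u := by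
    rw [add_mulVec, dotProduct_add]
  have hCBv : v ⬝ᵥ (PB + QB) *ᵥ v = v ⬝ᵥ PB *ᵥ v + v ⬝ᵥ QB *ᵥ v := by
    rw [add_mulVec, dotProduct_add]
  have hFb : u ⬝ᵥ (PA + QA) *ᵥ u + 2 * (u ⬝ᵥ PAB *ᵥ v) + v ⬝ᵥ (PB + QB) *ᵥ v
      ≤ x ⬝ᵥ u + x ⬝ᵥ v := by
    rcases eq_or_lt_of_le hω0 with h0 | h0
    · have hu0 : u = 0 := by rw [hu, ← h0, zero_smul]
      have hω : ω = 0 := h0.symm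
      rw [hu0]
      simp only [zero_dotProduct, dotProduct_zero, mulVec_zero, zero_add, mul_zero, add_zero]
      rw [hω] at hB
      rw [hCBv]
      linarith
    rcases eq_or_lt_of_le hω1 with h1 | h1
    · have hv0 : v = 0 := by rw [hv, h1, sub_self, zero_smul]
      rw [hv0]
      simp only [zero_dotProduct, dotProduct_zero, mulVec_zero, add_zero, mul_zero]
      rw [h1] at hA
      rw [hCAu]
      linarith
    · -- interior
      have hcross := Jform PA PB PAB hJ ((1 - ω) • u) (-(ω • v))
      have e1 : ((1 - ω) • u) ⬝ᵥ PA *ᵥ ((1 - ω) • u) = (1 - ω)^2 * (u ⬝ᵥ PA *ᵥ u) := by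
        rw [smul_dotProduct, mulVec_smul, dotProduct_smul]
        simp [smul_eq_mul]; ring
      have e2 : ((1 - ω) • u) ⬝ᵥ PAB *ᵥ (-(ω • v)) = -(ω * (1 - ω) * (u ⬝ᵥ PAB *ᵥ v)) := by
        rw [mulVec_neg, dotProduct_neg, smul_dotProduct, mulVec_smul, dotProduct_smul]
        simp [smul_eq_mul]; ring
      have e3 : (-(ω • v)) ⬝ᵥ PB *ᵥ (-(ω • v)) = ω^2 * (v ⬝ᵥ PB *ᵥ v) := by
        rw [mulVec_neg, dotProduct_neg, neg_dotProduct, neg_neg, smul_dotProduct,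
          mulVec_smul, dotProduct_smul]
        simp [smul_eq_mul]; ring
      rw [e1, e2, e3] at hcross
      have hωpos : 0 < ω * (1 - ω) := by nlinarith
      have key : ω * (1 - ω) * (u ⬝ᵥ (PA + QA) *ᵥ u + 2 * (u ⬝ᵥ PAB *ᵥ v)
          + v ⬝ᵥ (PB + QB) *ᵥ v) ≤ ω * (1 - ω) * (x ⬝ᵥ u + x ⬝ᵥ v) := by
        rw [hCAu, hCBv]
        nlinarith [hcross, hA, hB]
      exact le_of_mul_le_mul_left key hωpos
  have hCF := CF_posdef hPA hPB hQA hQB hJ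
  have hCFs := CF_symm hPA hPB hQA hQB hJ
  have hCFdet := CF_det hPA hPB hQA hQB hJ
  have hCFpsd : ∀ z, 0 ≤ z ⬝ᵥ CFm PA PB QA QB PAB *ᵥ z :=
    fun z => psd_form hCF.posSemidef z
  have hlow := inv_quad_lower _ hCFs hCFpsd hCFdet x (u + v)
  have hle := CF_le_form hPA hPB hQA hQB hJ (u + v) u v rfl
  have hxy : x ⬝ᵥ (u + v) = x ⬝ᵥ u + x ⬝ᵥ v := dotProduct_add x u v
  rw [hHx, hxy]
  linarith

end Core

lemma pd_add {P Q : Matrix m m ℝ} (hP : P.PosDef) (hQ : Q.PosDef) : (P + Q).PosDef := by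
  have := pd_add_smul hP hQ zero_le_one
  simpa using this

variable {PA PB QA QB : Matrix m m ℝ} in
lemma fromBlocks_psd (hPA : PA.PosDef) (hPB : PB.PosDef) (PAB : Matrix m m ℝ)
    (hform : ∀ p q : m → ℝ,
      0 ≤ p ⬝ᵥ PA *ᵥ p + 2 * (p ⬝ᵥ PAB *ᵥ q) + q ⬝ᵥ PB *ᵥ q) :
    (fromBlocks PA PAB PABᵀ PB).PosSemidef := by
  refine Matrix.PosSemidef.of_dotProduct_mulVec_nonneg ?_ ?_
  · apply herm_of_symm
    rw [fromBlocks_transpose, transpose_transpose, symm_of_herm hPA.1, symm_of_herm hPB.1]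
  · intro w
    have hw : Sum.elim (w ∘ Sum.inl) (w ∘ Sum.inr) = w := Sum.elim_comp_inl_inr w
    set p := w ∘ Sum.inl
    set q := w ∘ Sum.inr
    have hst : star w = w := by simp
    rw [hst, ← hw, fromBlocks_mulVec, sumElim_dotProduct_sumElim]
    simp only [Sum.elim_comp_inl, Sum.elim_comp_inr]
    rw [dotProduct_add, dotProduct_add, dot_transpose]
    have := hform p q
    linarith


section DirB

variable {PA PB QA QB : Matrix m m ℝ}
variable (hPA : PA.PosDef) (hPB : PB.PosDef) (hQA : QA.PosDef) (hQB : QB.PosDef)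

include hPA hPB hQA hQB

lemma endpointA {x : m → ℝ} (hx : x ≠ 0)
    (hcond : x ⬝ᵥ PB⁻¹ *ᵥ x ≤ ((PA + QA)⁻¹ *ᵥ x) ⬝ᵥ PA *ᵥ ((PA + QA)⁻¹ *ᵥ x)) :
    ∃ PAB : Matrix m m ℝ, (fromBlocks PA PAB PABᵀ PB).PosSemidef ∧
      x ⬝ᵥ (CFm PA PB QA QB PAB)⁻¹ *ᵥ x = x ⬝ᵥ (PA + QA)⁻¹ *ᵥ x := by
  have hCA : (PA + QA).PosDef := pd_add hPA hQA
  have hCAd : IsUnit (PA + QA).det := hCA.det_pos.ne'.isUnit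
  have hPBd : IsUnit PB.det := hPB.det_pos.ne'.isUnit
  set z := (PA + QA)⁻¹ *ᵥ x with hz
  have hCAz : (PA + QA) *ᵥ z = x := mulVec_inv_cancel hCAd x
  have hznz : z ≠ 0 := by
    intro h0
    apply hx
    rw [← hCAz, h0, mulVec_zero]
  set a1 := z ⬝ᵥ PA *ᵥ z with ha1
  have ha1pos : 0 < a1 := pd_form hPA hznz
  set PAB := a1⁻¹ • vecMulVec (PA *ᵥ z) x with hPAB
  -- cross-term formula
  have hPABq : ∀ q : m → ℝ, PAB *ᵥ q = (a1⁻¹ * (x ⬝ᵥ q)) • (PA *ᵥ z) := by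
    intro q
    rw [hPAB, smul_mulVec, vecMulVec_mulVec', smul_smul]
  -- positive semidefiniteness
  have hJ : (fromBlocks PA PAB PABᵀ PB).PosSemidef := by
    apply fromBlocks_psd hPA hPB
    intro p q
    have hcr : p ⬝ᵥ PAB *ᵥ q = a1⁻¹ * (x ⬝ᵥ q) * (p ⬝ᵥ PA *ᵥ z) := by
      rw [hPABq q, dotProduct_smul, smul_eq_mul]
    set zB := PB⁻¹ *ᵥ x with hzB
    have hPBzB : PB *ᵥ zB = x := mulVec_inv_cancel hPBd x
    have hxq : x ⬝ᵥ q = q ⬝ᵥ PB *ᵥ zB := by rw [hPBzB, dotProduct_comm]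
    have hbB : zB ⬝ᵥ PB *ᵥ zB = x ⬝ᵥ PB⁻¹ *ᵥ x := by
      rw [hzB, dot_symm PB (symm_of_herm hPB.1), hPBzB, dotProduct_comm]
    have hCS1 := cs PA (symm_of_herm hPA.1) (fun w => psd_form hPA.posSemidef w) p z
    have hCS2 := cs PB (symm_of_herm hPB.1) (fun w => psd_form hPB.posSemidef w) q zB
    rw [hbB] at hCS2
    rw [← hxq] at hCS2
    have hP : 0 ≤ p ⬝ᵥ PA *ᵥ p := psd_form hPA.posSemidef p
    have hQ : 0 ≤ q ⬝ᵥ PB *ᵥ q := psd_form hPB.posSemidef q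
    have hβ : 0 ≤ x ⬝ᵥ PB⁻¹ *ᵥ x := by
      rw [← hbB]; exact psd_form hPB.posSemidef zB
    have hr2 : (a1⁻¹ * (x ⬝ᵥ q) * (p ⬝ᵥ PA *ᵥ z)) ^ 2
        ≤ (p ⬝ᵥ PA *ᵥ p) * (q ⬝ᵥ PB *ᵥ q) := by
      have e : (a1⁻¹ * (x ⬝ᵥ q) * (p ⬝ᵥ PA *ᵥ z)) ^ 2
          = ((p ⬝ᵥ PA *ᵥ z) ^ 2) * ((x ⬝ᵥ q) ^ 2) * (a1⁻¹ ^ 2) := by ring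
      rw [e]
      have h1 : ((p ⬝ᵥ PA *ᵥ z) ^ 2) * ((x ⬝ᵥ q) ^ 2)
          ≤ ((p ⬝ᵥ PA *ᵥ p) * a1) * ((q ⬝ᵥ PB *ᵥ q) * (x ⬝ᵥ PB⁻¹ *ᵥ x)) := by
        apply mul_le_mul hCS1 hCS2 (sq_nonneg _)
        positivity
      have h2 : ((p ⬝ᵥ PA *ᵥ p) * a1) * ((q ⬝ᵥ PB *ᵥ q) * (x ⬝ᵥ PB⁻¹ *ᵥ x)) * (a1⁻¹ ^ 2)
          ≤ (p ⬝ᵥ PA *ᵥ p) * (q ⬝ᵥ PB *ᵥ q) := by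
        have e2 : ((p ⬝ᵥ PA *ᵥ p) * a1) * ((q ⬝ᵥ PB *ᵥ q) * (x ⬝ᵥ PB⁻¹ *ᵥ x)) * (a1⁻¹ ^ 2)
            = (p ⬝ᵥ PA *ᵥ p) * (q ⬝ᵥ PB *ᵥ q) * ((x ⬝ᵥ PB⁻¹ *ᵥ x) * a1⁻¹) := by
          field_simp
        rw [e2]
        have hfrac : (x ⬝ᵥ PB⁻¹ *ᵥ x) * a1⁻¹ ≤ 1 := by
          rw [← div_eq_mul_inv, div_le_one ha1pos]
          exact hcond
        nlinarith [mul_nonneg hP hQ]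
      calc ((p ⬝ᵥ PA *ᵥ z) ^ 2) * ((x ⬝ᵥ q) ^ 2) * (a1⁻¹ ^ 2)
          ≤ ((p ⬝ᵥ PA *ᵥ p) * a1) * ((q ⬝ᵥ PB *ᵥ q) * (x ⬝ᵥ PB⁻¹ *ᵥ x)) * (a1⁻¹ ^ 2) := by
            apply mul_le_mul_of_nonneg_right h1 (by positivity)
        _ ≤ (p ⬝ᵥ PA *ᵥ p) * (q ⬝ᵥ PB *ᵥ q) := h2
    have := amgm hP hQ hr2
    rw [hcr]
    linarith
  -- the fused covariance maps z to x
  have hPABtz : PABᵀ *ᵥ z = x := by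
    rw [hPAB, transpose_smul, vecMulVec_transpose', smul_mulVec, vecMulVec_mulVec']
    have : (PA *ᵥ z) ⬝ᵥ z = a1 := by rw [dotProduct_comm]
    rw [this, smul_smul, inv_mul_cancel₀ ha1pos.ne', one_smul]
  have hX'z : (PA + QA - PABᵀ) *ᵥ z = 0 := by
    rw [sub_mulVec, hCAz, hPABtz, sub_self]
  have hCFz : CFm PA PB QA QB PAB *ᵥ z = x := by
    rw [CFm, sub_mulVec, hCAz, ← mulVec_mulVec, ← mulVec_mulVec, hX'z,
      mulVec_zero, mulVec_zero, sub_zero]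
  have hCFd := CF_det hPA hPB hQA hQB hJ
  have hinvx : (CFm PA PB QA QB PAB)⁻¹ *ᵥ x = z := by
    rw [← hCFz, inv_mulVec_cancel hCFd]
  exact ⟨PAB, hJ, by rw [hinvx]⟩

lemma endpointB {x : m → ℝ} (hx : x ≠ 0)
    (hcond : x ⬝ᵥ PA⁻¹ *ᵥ x ≤ ((PB + QB)⁻¹ *ᵥ x) ⬝ᵥ PB *ᵥ ((PB + QB)⁻¹ *ᵥ x)) :
    ∃ PAB : Matrix m m ℝ, (fromBlocks PA PAB PABᵀ PB).PosSemidef ∧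
      x ⬝ᵥ (CFm PA PB QA QB PAB)⁻¹ *ᵥ x = x ⬝ᵥ (PB + QB)⁻¹ *ᵥ x := by
  have hCB : (PB + QB).PosDef := pd_add hPB hQB
  have hCBd : IsUnit (PB + QB).det := hCB.det_pos.ne'.isUnit
  have hPAd : IsUnit PA.det := hPA.det_pos.ne'.isUnit
  set z := (PB + QB)⁻¹ *ᵥ x with hz
  have hCBz : (PB + QB) *ᵥ z = x := mulVec_inv_cancel hCBd x
  have hznz : z ≠ 0 := by
    intro h0
    apply hx
    rw [← hCBz, h0, mulVec_zero]
  set b1 := z ⬝ᵥ PB *ᵥ z with hb1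
  have hb1pos : 0 < b1 := pd_form hPB hznz
  set PAB := b1⁻¹ • vecMulVec x (PB *ᵥ z) with hPAB
  have hPABq : ∀ q : m → ℝ, PAB *ᵥ q = (b1⁻¹ * ((PB *ᵥ z) ⬝ᵥ q)) • x := by
    intro q
    rw [hPAB, smul_mulVec, vecMulVec_mulVec', smul_smul]
  have hJ : (fromBlocks PA PAB PABᵀ PB).PosSemidef := by
    apply fromBlocks_psd hPA hPB
    intro p q
    have hcr : p ⬝ᵥ PAB *ᵥ q = b1⁻¹ * (q ⬝ᵥ PB *ᵥ z) * (p ⬝ᵥ x) := by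
      rw [hPABq q, dotProduct_smul, smul_eq_mul, dotProduct_comm (PB *ᵥ z) q]
    set zA := PA⁻¹ *ᵥ x with hzA
    have hPAzA : PA *ᵥ zA = x := mulVec_inv_cancel hPAd x
    have hpx : p ⬝ᵥ x = p ⬝ᵥ PA *ᵥ zA := by rw [hPAzA]
    have haA : zA ⬝ᵥ PA *ᵥ zA = x ⬝ᵥ PA⁻¹ *ᵥ x := by
      rw [hzA, dot_symm PA (symm_of_herm hPA.1), hPAzA, dotProduct_comm]
    have hCS1 := cs PA (symm_of_herm hPA.1) (fun w => psd_form hPA.posSemidef w) p zA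
    have hCS2 := cs PB (symm_of_herm hPB.1) (fun w => psd_form hPB.posSemidef w) q z
    rw [haA] at hCS1
    rw [← hpx] at hCS1
    have hP : 0 ≤ p ⬝ᵥ PA *ᵥ p := psd_form hPA.posSemidef p
    have hQ : 0 ≤ q ⬝ᵥ PB *ᵥ q := psd_form hPB.posSemidef q
    have hβ : 0 ≤ x ⬝ᵥ PA⁻¹ *ᵥ x := by
      rw [← haA]; exact psd_form hPA.posSemidef zA
    have hr2 : (b1⁻¹ * (q ⬝ᵥ PB *ᵥ z) * (p ⬝ᵥ x)) ^ 2
        ≤ (p ⬝ᵥ PA *ᵥ p) * (q ⬝ᵥ PB *ᵥ q) := by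
      have e : (b1⁻¹ * (q ⬝ᵥ PB *ᵥ z) * (p ⬝ᵥ x)) ^ 2
          = ((p ⬝ᵥ x) ^ 2) * ((q ⬝ᵥ PB *ᵥ z) ^ 2) * (b1⁻¹ ^ 2) := by ring
      rw [e]
      have h1 : ((p ⬝ᵥ x) ^ 2) * ((q ⬝ᵥ PB *ᵥ z) ^ 2)
          ≤ ((p ⬝ᵥ PA *ᵥ p) * (x ⬝ᵥ PA⁻¹ *ᵥ x)) * ((q ⬝ᵥ PB *ᵥ q) * b1) := by
        apply mul_le_mul hCS1 hCS2 (sq_nonneg _)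
        positivity
      have h2 : ((p ⬝ᵥ PA *ᵥ p) * (x ⬝ᵥ PA⁻¹ *ᵥ x)) * ((q ⬝ᵥ PB *ᵥ q) * b1) * (b1⁻¹ ^ 2)
          ≤ (p ⬝ᵥ PA *ᵥ p) * (q ⬝ᵥ PB *ᵥ q) := by
        have e2 : ((p ⬝ᵥ PA *ᵥ p) * (x ⬝ᵥ PA⁻¹ *ᵥ x)) * ((q ⬝ᵥ PB *ᵥ q) * b1) * (b1⁻¹ ^ 2)
            = (p ⬝ᵥ PA *ᵥ p) * (q ⬝ᵥ PB *ᵥ q) * ((x ⬝ᵥ PA⁻¹ *ᵥ x) * b1⁻¹) := by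
          field_simp
        rw [e2]
        have hfrac : (x ⬝ᵥ PA⁻¹ *ᵥ x) * b1⁻¹ ≤ 1 := by
          rw [← div_eq_mul_inv, div_le_one hb1pos]
          exact hcond
        nlinarith [mul_nonneg hP hQ]
      calc ((p ⬝ᵥ x) ^ 2) * ((q ⬝ᵥ PB *ᵥ z) ^ 2) * (b1⁻¹ ^ 2)
          ≤ ((p ⬝ᵥ PA *ᵥ p) * (x ⬝ᵥ PA⁻¹ *ᵥ x)) * ((q ⬝ᵥ PB *ᵥ q) * b1) * (b1⁻¹ ^ 2) := by
            apply mul_le_mul_of_nonneg_right h1 (by positivity)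
        _ ≤ (p ⬝ᵥ PA *ᵥ p) * (q ⬝ᵥ PB *ᵥ q) := h2
    have := amgm hP hQ hr2
    rw [hcr]
    linarith
  have hPABz : PAB *ᵥ z = x := by
    rw [hPABq z]
    have : (PB *ᵥ z) ⬝ᵥ z = b1 := by rw [dotProduct_comm]
    rw [this, inv_mul_cancel₀ hb1pos.ne', one_smul]
  have hY'z : (PB + QB - PAB) *ᵥ z = 0 := by
    rw [sub_mulVec, hCBz, hPABz, sub_self]
  have hCFz : CFm PA PB QA QB PAB *ᵥ z = x := by
    rw [CF_swap hPA hPB hQA hQB hJ, sub_mulVec, hCBz, ← mulVec_mulVec, ← mulVec_mulVec,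
      hY'z, mulVec_zero, mulVec_zero, sub_zero]
  have hCFd := CF_det hPA hPB hQA hQB hJ
  have hinvx : (CFm PA PB QA QB PAB)⁻¹ *ᵥ x = z := by
    rw [← hCFz, inv_mulVec_cancel hCFd]
  exact ⟨PAB, hJ, by rw [hinvx]⟩

lemma interiorB {x : m → ℝ} (hx : x ≠ 0) {ω : ℝ} (h0 : 0 < ω) (h1 : ω < 1)
    (hphi : ((PA + ω • QA)⁻¹ *ᵥ x) ⬝ᵥ PA *ᵥ ((PA + ω • QA)⁻¹ *ᵥ x)
        = ((PB + (1 - ω) • QB)⁻¹ *ᵥ x) ⬝ᵥ PB *ᵥ ((PB + (1 - ω) • QB)⁻¹ *ᵥ x)) :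
    ∃ PAB : Matrix m m ℝ, (fromBlocks PA PAB PABᵀ PB).PosSemidef ∧
      x ⬝ᵥ (CFm PA PB QA QB PAB)⁻¹ *ᵥ x
        = x ⬝ᵥ (ω • (PA + ω • QA)⁻¹ + (1 - ω) • (PB + (1 - ω) • QB)⁻¹) *ᵥ x := by
  have hω1' : (0:ℝ) < 1 - ω := by linarith
  have hMA : (PA + ω • QA).PosDef := pd_add_smul hPA hQA h0.le
  have hMB : (PB + (1 - ω) • QB).PosDef := pd_add_smul hPB hQB hω1'.le
  have hMAd : IsUnit (PA + ω • QA).det := hMA.det_pos.ne'.isUnit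
  have hMBd : IsUnit (PB + (1 - ω) • QB).det := hMB.det_pos.ne'.isUnit
  set wA := (PA + ω • QA)⁻¹ *ᵥ x with hwA
  set wB := (PB + (1 - ω) • QB)⁻¹ *ᵥ x with hwB
  have hwAnz : wA ≠ 0 := by
    intro h
    exact hx (by rw [← mulVec_inv_cancel hMAd x, ← hwA, h, mulVec_zero])
  have hwBnz : wB ≠ 0 := by
    intro h
    exact hx (by rw [← mulVec_inv_cancel hMBd x, ← hwB, h, mulVec_zero])
  set γ := wA ⬝ᵥ PA *ᵥ wA with hγ
  have hγpos : 0 < γ := pd_form hPA hwAnz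
  have hγB : wB ⬝ᵥ PB *ᵥ wB = γ := hphi.symm
  set u := ω • wA with hu
  set v := (1 - ω) • wB with hv
  set sA := PA *ᵥ u with hsA
  set sB := PB *ᵥ v with hsB
  have ha1 : u ⬝ᵥ sA = ω ^ 2 * γ := by
    rw [hsA, hu, mulVec_smul, smul_dotProduct, dotProduct_smul, smul_eq_mul, smul_eq_mul, hγ]
    ring
  have hb1 : v ⬝ᵥ sB = (1 - ω) ^ 2 * γ := by
    rw [hsB, hv, mulVec_smul, smul_dotProduct, dotProduct_smul, smul_eq_mul, smul_eq_mul, hγB]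
    ring
  set c := (ω * (1 - ω) * γ)⁻¹ with hc
  have hcpos : 0 < c := by
    rw [hc]
    positivity
  set PAB := c • vecMulVec sA sB with hPAB
  have hPABq : ∀ q : m → ℝ, PAB *ᵥ q = (c * (sB ⬝ᵥ q)) • sA := by
    intro q
    rw [hPAB, smul_mulVec, vecMulVec_mulVec', smul_smul]
  have hcb : c * (v ⬝ᵥ sB) = (1 - ω) / ω := by
    rw [hb1, hc]
    field_simp
  have hca : c * (u ⬝ᵥ sA) = ω / (1 - ω) := by
    rw [ha1, hc]
    field_simp
  -- positive semidefiniteness of the joint block matrix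
  have hJ : (fromBlocks PA PAB PABᵀ PB).PosSemidef := by
    apply fromBlocks_psd hPA hPB
    intro p q
    have hcr : p ⬝ᵥ PAB *ᵥ q = c * (sB ⬝ᵥ q) * (p ⬝ᵥ sA) := by
      rw [hPABq q, dotProduct_smul, smul_eq_mul]
    have hCS1 := cs PA (symm_of_herm hPA.1) (fun w => psd_form hPA.posSemidef w) p u
    have hCS2 := cs PB (symm_of_herm hPB.1) (fun w => psd_form hPB.posSemidef w) q v
    rw [← hsA] at hCS1
    rw [← hsB] at hCS2
    have huA : u ⬝ᵥ PA *ᵥ u = u ⬝ᵥ sA := by rw [hsA]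
    have hvB : v ⬝ᵥ PB *ᵥ v = v ⬝ᵥ sB := by rw [hsB]
    rw [huA] at hCS1
    rw [hvB] at hCS2
    have hP : 0 ≤ p ⬝ᵥ PA *ᵥ p := psd_form hPA.posSemidef p
    have hQ : 0 ≤ q ⬝ᵥ PB *ᵥ q := psd_form hPB.posSemidef q
    have hsBq : (sB ⬝ᵥ q) ^ 2 = (q ⬝ᵥ sB) ^ 2 := by
      rw [dotProduct_comm]
    have hr2 : (c * (sB ⬝ᵥ q) * (p ⬝ᵥ sA)) ^ 2
        ≤ (p ⬝ᵥ PA *ᵥ p) * (q ⬝ᵥ PB *ᵥ q) := by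
      have e : (c * (sB ⬝ᵥ q) * (p ⬝ᵥ sA)) ^ 2
          = ((p ⬝ᵥ sA) ^ 2) * ((sB ⬝ᵥ q) ^ 2) * (c ^ 2) := by ring
      rw [e, hsBq]
      have h1 : ((p ⬝ᵥ sA) ^ 2) * ((q ⬝ᵥ sB) ^ 2)
          ≤ ((p ⬝ᵥ PA *ᵥ p) * (u ⬝ᵥ sA)) * ((q ⬝ᵥ PB *ᵥ q) * (v ⬝ᵥ sB)) := by
        apply mul_le_mul hCS1 hCS2 (sq_nonneg _)
        exact mul_nonneg hP (by rw [ha1]; positivity)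
      have hcc : (u ⬝ᵥ sA) * (v ⬝ᵥ sB) * c ^ 2 = 1 := by
        rw [ha1, hb1, hc]
        field_simp
      calc ((p ⬝ᵥ sA) ^ 2) * ((q ⬝ᵥ sB) ^ 2) * (c ^ 2)
          ≤ ((p ⬝ᵥ PA *ᵥ p) * (u ⬝ᵥ sA)) * ((q ⬝ᵥ PB *ᵥ q) * (v ⬝ᵥ sB)) * (c ^ 2) := by
            apply mul_le_mul_of_nonneg_right h1 (by positivity)
        _ = (p ⬝ᵥ PA *ᵥ p) * (q ⬝ᵥ PB *ᵥ q) * ((u ⬝ᵥ sA) * (v ⬝ᵥ sB) * c ^ 2) := by ring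
        _ = (p ⬝ᵥ PA *ᵥ p) * (q ⬝ᵥ PB *ᵥ q) := by rw [hcc, mul_one]
    have := amgm hP hQ hr2
    rw [hcr]
    linarith
  -- vector identities
  have hMAu : (PA + ω • QA) *ᵥ u = ω • x := by
    rw [hu, mulVec_smul, mulVec_inv_cancel hMAd]
  have hMBv : (PB + (1 - ω) • QB) *ᵥ v = (1 - ω) • x := by
    rw [hv, mulVec_smul, mulVec_inv_cancel hMBd]
  have hQAu : QA *ᵥ u = x - ω⁻¹ • sA := by
    have h := hMAu
    rw [add_mulVec, smul_mulVec, ← hsA] at h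
    have h2 := congrArg (fun w => ω⁻¹ • w) h
    simp only [smul_add, smul_smul, inv_mul_cancel₀ h0.ne', one_smul, smul_sub] at h2
    rw [← h2]
    match_scalars <;> first
    | (field_simp; try ring)
    | ring
  have hQBv : QB *ᵥ v = x - (1 - ω)⁻¹ • sB := by
    have h := hMBv
    rw [add_mulVec, smul_mulVec, ← hsB] at h
    have h2 := congrArg (fun w => (1 - ω)⁻¹ • w) h
    simp only [smul_add, smul_smul, inv_mul_cancel₀ hω1'.ne', one_smul, smul_sub] at h2
    rw [← h2]
    match_scalars <;> first
    | (field_simp; try ring)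
    | ring
  have hPABv : PAB *ᵥ v = ((1 - ω) / ω) • sA := by
    rw [hPABq v]
    have : sB ⬝ᵥ v = v ⬝ᵥ sB := dotProduct_comm sB v
    rw [this, hcb]
  have hPABTu : PABᵀ *ᵥ u = (ω / (1 - ω)) • sB := by
    rw [hPAB, transpose_smul, vecMulVec_transpose', smul_mulVec, vecMulVec_mulVec',
      smul_smul]
    have : sA ⬝ᵥ u = u ⬝ᵥ sA := dotProduct_comm sA u
    rw [this, hca]
  have hmain : (PB + QB) *ᵥ v - PAB *ᵥ v = (PA + QA) *ᵥ u - PABᵀ *ᵥ u := by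
    rw [add_mulVec, add_mulVec, ← hsA, ← hsB, hQAu, hQBv, hPABv, hPABTu]
    match_scalars <;> first
    | (field_simp; try ring)
    | ring
  have hSd := Sm_det hPA hPB hQA hQB hJ
  have hSv : (Sm PA PB QA QB PAB) *ᵥ v = (PA + QA - PABᵀ) *ᵥ (u + v) := by
    have e1 : (Sm PA PB QA QB PAB) *ᵥ v
        = (PA + QA) *ᵥ v + (PB + QB) *ᵥ v - PAB *ᵥ v - PABᵀ *ᵥ v := by
      rw [Sm]
      simp only [sub_mulVec, add_mulVec]
      try abel
    have e2 : (PA + QA - PABᵀ) *ᵥ (u + v)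
        = (PA + QA) *ᵥ u + (PA + QA) *ᵥ v - PABᵀ *ᵥ u - PABᵀ *ᵥ v := by
      simp only [sub_mulVec, mulVec_add]
      try abel
    rw [e1, e2]
    linear_combination (norm := module) hmain
  have hCFuv : CFm PA PB QA QB PAB *ᵥ (u + v) = x := by
    rw [CFm, sub_mulVec, ← mulVec_mulVec, ← mulVec_mulVec, ← hSv,
      inv_mulVec_cancel hSd]
    rw [sub_mulVec, mulVec_add, hPABv]
    rw [add_mulVec, ← hsA, hQAu]
    match_scalars <;> first
    | (field_simp; try ring)
    | ring
  have hCFd := CF_det hPA hPB hQA hQB hJ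
  have hinv : (CFm PA PB QA QB PAB)⁻¹ *ᵥ x = u + v := by
    rw [← hCFuv, inv_mulVec_cancel hCFd]
  refine ⟨PAB, hJ, ?_⟩
  rw [hinv, add_mulVec, smul_mulVec, smul_mulVec, ← hwA, ← hwB, ← hu, ← hv]

end DirB



lemma contAt_quad {P Q : Matrix m m ℝ} (hP : P.PosDef) (hQ : Q.PosDef) (x : m → ℝ)
    {ω₀ : ℝ} (hω₀ : 0 ≤ ω₀) :
    ContinuousAt (fun ω : ℝ => ((P + ω • Q)⁻¹ *ᵥ x) ⬝ᵥ P *ᵥ ((P + ω • Q)⁻¹ *ᵥ x)) ω₀ := by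
  have hM : (P + ω₀ • Q).PosDef := pd_add_smul hP hQ hω₀
  have hdet : (P + ω₀ • Q).det ≠ 0 := hM.det_pos.ne'
  have hmat : Continuous (fun ω : ℝ => P + ω • Q) :=
    continuous_const.add (continuous_id.smul continuous_const)
  have hinvAt : ContinuousAt Inv.inv (P + ω₀ • Q) := by
    apply continuousAt_matrix_inv
    rw [Ring.inverse_eq_inv']
    exact continuousAt_inv₀ hdet
  have h2 : ContinuousAt (fun ω : ℝ => (P + ω • Q)⁻¹) ω₀ :=
    ContinuousAt.comp (f := fun ω : ℝ => P + ω • Q) hinvAt hmat.continuousAt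
  have h3 : Continuous (fun A : Matrix m m ℝ => (A *ᵥ x) ⬝ᵥ P *ᵥ (A *ᵥ x)) := by
    apply Continuous.dotProduct
    · exact continuous_id.matrix_mulVec continuous_const
    · exact continuous_const.matrix_mulVec (continuous_id.matrix_mulVec continuous_const)
  exact ContinuousAt.comp (f := fun ω : ℝ => (P + ω • Q)⁻¹) h3.continuousAt h2

end SCIProof

open SCIProof

theorem sci_stmt14 {n : ℕ} (PA PB QA QB : Matrix (Fin n) (Fin n) ℝ)
    (hPA : PA.PosDef) (hPB : PB.PosDef) (hQA : QA.PosDef) (hQB : QB.PosDef) :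
    let CA := PA + QA
    let CB := PB + QB
    let CFs := fun (PAB : Matrix (Fin n) (Fin n) ℝ) =>
      CA - (CA - PAB) * (CA + CB - PAB - PABᵀ)⁻¹ * (CA - PABᵀ)
    let g := fun (x : Fin n → ℝ) =>
      sInf {t : ℝ | ∃ PAB : Matrix (Fin n) (Fin n) ℝ,
        (Matrix.fromBlocks PA PAB PABᵀ PB).PosSemidef ∧
        t = x ⬝ᵥ (CFs PAB)⁻¹ *ᵥ x}
    let HSCI := fun (ω : ℝ) =>
      ω • (PA + ω • QA)⁻¹ + (1 - ω) • (PB + (1 - ω) • QB)⁻¹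
    {x : Fin n → ℝ | g x ≤ 1} =
      ⋂ ω ∈ Set.Icc (0 : ℝ) 1, {x : Fin n → ℝ | x ⬝ᵥ (HSCI ω) *ᵥ x ≤ 1} := by
  show {x : Fin n → ℝ | sInf {t : ℝ | ∃ PAB : Matrix (Fin n) (Fin n) ℝ,
        (Matrix.fromBlocks PA PAB PABᵀ PB).PosSemidef ∧
        t = x ⬝ᵥ (SCIProof.CFm PA PB QA QB PAB)⁻¹ *ᵥ x} ≤ 1}
      = ⋂ ω ∈ Set.Icc (0 : ℝ) 1, {x : Fin n → ℝ |
          x ⬝ᵥ (ω • (PA + ω • QA)⁻¹ + (1 - ω) • (PB + (1 - ω) • QB)⁻¹) *ᵥ x ≤ 1}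
  have hJ0 : (Matrix.fromBlocks PA (0 : Matrix (Fin n) (Fin n) ℝ)
      (0 : Matrix (Fin n) (Fin n) ℝ)ᵀ PB).PosSemidef := by
    apply fromBlocks_psd hPA hPB
    intro p q
    have h1 := psd_form hPA.posSemidef p
    have h2 := psd_form hPB.posSemidef q
    simp only [zero_mulVec, dotProduct_zero, mul_zero]
    linarith
  ext x
  simp only [Set.mem_setOf_eq, Set.mem_iInter]
  constructor
  · intro hg ω hω
    have hne : Set.Nonempty {t : ℝ | ∃ PAB : Matrix (Fin n) (Fin n) ℝ,
        (Matrix.fromBlocks PA PAB PABᵀ PB).PosSemidef ∧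
        t = x ⬝ᵥ (SCIProof.CFm PA PB QA QB PAB)⁻¹ *ᵥ x} :=
      ⟨x ⬝ᵥ (SCIProof.CFm PA PB QA QB 0)⁻¹ *ᵥ x, 0, hJ0, rfl⟩
    refine le_trans (le_csInf hne ?_) hg
    rintro t ⟨PAB, hJ, rfl⟩
    exact dirA hPA hPB hQA hQB hJ x ω hω.1 hω.2
  · intro hH
    have hbdd : BddBelow {t : ℝ | ∃ PAB : Matrix (Fin n) (Fin n) ℝ,
        (Matrix.fromBlocks PA PAB PABᵀ PB).PosSemidef ∧
        t = x ⬝ᵥ (SCIProof.CFm PA PB QA QB PAB)⁻¹ *ᵥ x} := by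
      refine ⟨0, ?_⟩
      rintro t ⟨PAB, hJ, rfl⟩
      exact psd_form (Matrix.PosDef.inv (CF_posdef hPA hPB hQA hQB hJ)).posSemidef x
    rcases eq_or_ne x 0 with hx | hx
    · refine csInf_le_of_le hbdd ⟨0, hJ0, rfl⟩ ?_
      rw [hx, zero_dotProduct]
      exact zero_le_one
    · have hPAd : IsUnit PA.det := hPA.det_pos.ne'.isUnit
      have hPBd : IsUnit PB.det := hPB.det_pos.ne'.isUnit
      set φ := fun ω : ℝ => ((PA + ω • QA)⁻¹ *ᵥ x) ⬝ᵥ PA *ᵥ ((PA + ω • QA)⁻¹ *ᵥ x)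
        - ((PB + (1 - ω) • QB)⁻¹ *ᵥ x) ⬝ᵥ PB *ᵥ ((PB + (1 - ω) • QB)⁻¹ *ᵥ x) with hφdef
      have hA0 : (PA⁻¹ *ᵥ x) ⬝ᵥ PA *ᵥ (PA⁻¹ *ᵥ x) = x ⬝ᵥ PA⁻¹ *ᵥ x := by
        rw [mulVec_inv_cancel hPAd, dotProduct_comm]
      have hB0 : (PB⁻¹ *ᵥ x) ⬝ᵥ PB *ᵥ (PB⁻¹ *ᵥ x) = x ⬝ᵥ PB⁻¹ *ᵥ x := by
        rw [mulVec_inv_cancel hPBd, dotProduct_comm]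
      have hφ1 : φ 1 = ((PA + QA)⁻¹ *ᵥ x) ⬝ᵥ PA *ᵥ ((PA + QA)⁻¹ *ᵥ x)
          - x ⬝ᵥ PB⁻¹ *ᵥ x := by
        rw [hφdef]
        simp only [one_smul, sub_self, zero_smul, add_zero]
        rw [hB0]
      have hφ0 : φ 0 = x ⬝ᵥ PA⁻¹ *ᵥ x
          - ((PB + QB)⁻¹ *ᵥ x) ⬝ᵥ PB *ᵥ ((PB + QB)⁻¹ *ᵥ x) := by
        rw [hφdef]
        simp only [zero_smul, add_zero, sub_zero, one_smul]
        rw [hA0]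
      rcases le_or_gt 0 (φ 1) with hc1 | hc1
      · have hcond : x ⬝ᵥ PB⁻¹ *ᵥ x
            ≤ ((PA + QA)⁻¹ *ᵥ x) ⬝ᵥ PA *ᵥ ((PA + QA)⁻¹ *ᵥ x) := by
          rw [hφ1] at hc1; linarith
        obtain ⟨PAB, hJ, hval⟩ := endpointA hPA hPB hQA hQB hx hcond
        refine csInf_le_of_le hbdd ⟨PAB, hJ, rfl⟩ ?_
        rw [hval]
        have h := hH 1 ⟨zero_le_one, le_refl 1⟩
        simpa only [one_smul, sub_self, zero_smul, add_zero] using h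
      rcases le_or_gt (φ 0) 0 with hc0 | hc0
      · have hcond : x ⬝ᵥ PA⁻¹ *ᵥ x
            ≤ ((PB + QB)⁻¹ *ᵥ x) ⬝ᵥ PB *ᵥ ((PB + QB)⁻¹ *ᵥ x) := by
          rw [hφ0] at hc0; linarith
        obtain ⟨PAB, hJ, hval⟩ := endpointB hPA hPB hQA hQB hx hcond
        refine csInf_le_of_le hbdd ⟨PAB, hJ, rfl⟩ ?_
        rw [hval]
        have h := hH 0 ⟨le_refl 0, zero_le_one⟩
        simpa only [zero_smul, zero_add, sub_zero, one_smul] using h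
      · have hcont : ContinuousOn φ (Set.Icc 0 1) := by
          intro ω hω
          apply ContinuousAt.continuousWithinAt
          apply ContinuousAt.sub
          · exact contAt_quad hPA hQA x hω.1
          · exact ContinuousAt.comp (f := fun ω : ℝ => 1 - ω)
              (contAt_quad hPB hQB x (show (0:ℝ) ≤ 1 - ω by linarith [hω.2]))
              ((continuous_const.sub continuous_id).continuousAt)
        have hsub := intermediate_value_Icc' zero_le_one hcont
        have h0mem : (0:ℝ) ∈ Set.Icc (φ 1) (φ 0) := ⟨hc1.le, hc0.le⟩
        obtain ⟨ω, hωmem, hφω⟩ := hsub h0mem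
        have hω0 : 0 < ω := by
          rcases lt_or_eq_of_le hωmem.1 with h | h
          · exact h
          · exfalso
            rw [← h] at hφω
            rw [hφω] at hc0
            exact lt_irrefl 0 hc0
        have hω1 : ω < 1 := by
          rcases lt_or_eq_of_le hωmem.2 with h | h
          · exact h
          · exfalso
            rw [h] at hφω
            rw [hφω] at hc1
            exact lt_irrefl 0 hc1
        have hphi : ((PA + ω • QA)⁻¹ *ᵥ x) ⬝ᵥ PA *ᵥ ((PA + ω • QA)⁻¹ *ᵥ x)
            = ((PB + (1 - ω) • QB)⁻¹ *ᵥ x) ⬝ᵥ PB *ᵥ ((PB + (1 - ω) • QB)⁻¹ *ᵥ x) := by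
          have := hφω
          rw [hφdef] at this
          simp only at this
          exact sub_eq_zero.mp this
        obtain ⟨PAB, hJ, hval⟩ := interiorB hPA hPB hQA hQB hx hω0 hω1 hphi
        refine csInf_le_of_le hbdd ⟨PAB, hJ, rfl⟩ ?_
        rw [hval]
        exact hH ω hωmem
end

section
/- (Main theorem: optimality of SCI.) Let J be a cost function on symmetric positive definite matrices that is strictly increasing in the Loewner order (P ⪯ Q with P ≠ Q implies J(P) < J(Q)). In the SCI setting, a pair (K, B_F) with K_A + K_B = I and B_F ⪰ C_F(K, P_{AB}) for all P_{AB} ∈ A_Split minimizes J(B_F) over all such conservative pairs if and only if B_F = B_SCI(ω*) for some ω* ∈ argmin_{ω∈[0,1]} J(B_SCI(ω)). -/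
open Matrix

namespace SCI19

variable {n : ℕ}

def qf (M : Matrix (Fin n) (Fin n) ℝ) (v : Fin n → ℝ) : ℝ := v ⬝ᵥ (M *ᵥ v)

lemma star_vec (v : Fin n → ℝ) : star v = v := funext fun _ => star_trivial _

lemma herm_of_transpose {M : Matrix (Fin n) (Fin n) ℝ} (h : Mᵀ = M) : M.IsHermitian := by
  rwa [Matrix.IsHermitian, Matrix.conjTranspose_eq_transpose_of_trivial]

lemma transpose_of_herm {M : Matrix (Fin n) (Fin n) ℝ} (h : M.IsHermitian) : Mᵀ = M := by
  rwa [Matrix.IsHermitian, Matrix.conjTranspose_eq_transpose_of_trivial] at h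

lemma posSemidef_of_forall {M : Matrix (Fin n) (Fin n) ℝ} (h : Mᵀ = M)
    (h2 : ∀ v, 0 ≤ qf M v) : M.PosSemidef := by
  refine PosSemidef.of_dotProduct_mulVec_nonneg (herm_of_transpose h) fun x => ?_
  rw [star_vec]; exact h2 x

lemma qf_nonneg {M : Matrix (Fin n) (Fin n) ℝ} (h : M.PosSemidef) (v : Fin n → ℝ) :
    0 ≤ qf M v := by
  have := h.dotProduct_mulVec_nonneg v
  rwa [star_vec] at this

lemma qf_pos {M : Matrix (Fin n) (Fin n) ℝ} (h : M.PosDef) {v : Fin n → ℝ} (hv : v ≠ 0) :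
    0 < qf M v := by
  have := h.dotProduct_mulVec_pos hv
  rwa [star_vec] at this

lemma qf_add (A B : Matrix (Fin n) (Fin n) ℝ) (v : Fin n → ℝ) :
    qf (A + B) v = qf A v + qf B v := by
  simp [qf, Matrix.add_mulVec, dotProduct_add]

lemma qf_sub (A B : Matrix (Fin n) (Fin n) ℝ) (v : Fin n → ℝ) :
    qf (A - B) v = qf A v - qf B v := by
  simp [qf, Matrix.sub_mulVec, dotProduct_sub]

lemma qf_smul (c : ℝ) (A : Matrix (Fin n) (Fin n) ℝ) (v : Fin n → ℝ) :
    qf (c • A) v = c * qf A v := by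
  simp [qf, Matrix.smul_mulVec, dotProduct_smul]

lemma qf_smul_vec (A : Matrix (Fin n) (Fin n) ℝ) (c : ℝ) (v : Fin n → ℝ) :
    qf A (c • v) = c ^ 2 * qf A v := by
  simp [qf, Matrix.mulVec_smul, dotProduct_smul, smul_dotProduct]
  ring

lemma qf_one (v : Fin n → ℝ) : qf (1 : Matrix (Fin n) (Fin n) ℝ) v = v ⬝ᵥ v := by
  simp [qf]

lemma qf_zero_vec (M : Matrix (Fin n) (Fin n) ℝ) : qf M 0 = 0 := by simp [qf]

lemma qf_congruence (A M : Matrix (Fin n) (Fin n) ℝ) (v : Fin n → ℝ) :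
    qf (A * M * Aᵀ) v = qf M (Aᵀ *ᵥ v) := by
  rw [qf, qf, ← Matrix.mulVec_mulVec, ← Matrix.mulVec_mulVec, Matrix.dotProduct_mulVec,
    ← Matrix.mulVec_transpose]

lemma qf_kernel {M : Matrix (Fin n) (Fin n) ℝ} (hM : M.PosSemidef) {v : Fin n → ℝ}
    (h : qf M v = 0) : M *ᵥ v = 0 := by
  refine (hM.dotProduct_mulVec_zero_iff v).mp ?_
  rw [star_vec]; exact h

lemma dot_symm {M : Matrix (Fin n) (Fin n) ℝ} (h : Mᵀ = M) (u z : Fin n → ℝ) :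
    u ⬝ᵥ (M *ᵥ z) = z ⬝ᵥ (M *ᵥ u) := by
  rw [Matrix.dotProduct_mulVec, ← Matrix.mulVec_transpose, h, dotProduct_comm]

lemma qf_cauchy_schwarz {P : Matrix (Fin n) (Fin n) ℝ} (hP : P.PosSemidef)
    (u z : Fin n → ℝ) : (u ⬝ᵥ (P *ᵥ z)) ^ 2 ≤ qf P u * qf P z := by
  have hsym := transpose_of_herm hP.1
  have key : ∀ t : ℝ, 0 ≤ qf P u * (t * t) + (2 * (u ⬝ᵥ (P *ᵥ z))) * t + qf P z := by
    intro t
    have h0 : 0 ≤ qf P (t • u + z) := qf_nonneg hP _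
    have expand : qf P (t • u + z)
        = qf P u * (t * t) + (2 * (u ⬝ᵥ (P *ᵥ z))) * t + qf P z := by
      simp only [qf, Matrix.mulVec_add, Matrix.mulVec_smul, dotProduct_add, add_dotProduct,
        dotProduct_smul, smul_dotProduct, smul_eq_mul]
      have : z ⬝ᵥ (P *ᵥ u) = u ⬝ᵥ (P *ᵥ z) := dot_symm hsym z u
      rw [this]; ring
    rw [← expand]; exact h0
  have hd := discrim_le_zero key
  rw [discrim] at hd
  nlinarith [hd]

lemma qf_eq_sum (M : Matrix (Fin n) (Fin n) ℝ) (v : Fin n → ℝ) :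
    qf M v = ∑ i, v i * ∑ j, M i j * v j := rfl

lemma cont_qf (M : Matrix (Fin n) (Fin n) ℝ) : Continuous (fun v : Fin n → ℝ => qf M v) := by
  simp only [qf_eq_sum]
  exact continuous_finset_sum _ fun i _ =>
    (continuous_apply i).mul (continuous_finset_sum _ fun j _ =>
      continuous_const.mul (continuous_apply j))

lemma dot_self_nonneg (v : Fin n → ℝ) : 0 ≤ v ⬝ᵥ v :=
  Finset.sum_nonneg fun _ _ => mul_self_nonneg _

lemma dot_self_pos {v : Fin n → ℝ} (hv : v ≠ 0) : 0 < v ⬝ᵥ v := by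
  rcases Function.ne_iff.mp hv with ⟨i, hi⟩
  exact Finset.sum_pos' (fun j _ => mul_self_nonneg _)
    ⟨i, Finset.mem_univ i, mul_self_pos.mpr hi⟩

lemma exists_unit_scale {x : Fin n → ℝ} (hx : x ≠ 0) :
    ∃ c : ℝ, ((c • x) ⬝ᵥ (c • x)) = 1 ∧
      ∀ M : Matrix (Fin n) (Fin n) ℝ, qf M x = (x ⬝ᵥ x) * qf M (c • x) := by
  have hd : 0 < x ⬝ᵥ x := dot_self_pos hx
  refine ⟨(Real.sqrt (x ⬝ᵥ x))⁻¹, ?_, ?_⟩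
  · have : ((Real.sqrt (x ⬝ᵥ x))⁻¹) ^ 2 = (x ⬝ᵥ x)⁻¹ := by
      rw [inv_pow, Real.sq_sqrt hd.le]
    have h2 : (((Real.sqrt (x ⬝ᵥ x))⁻¹ • x) ⬝ᵥ ((Real.sqrt (x ⬝ᵥ x))⁻¹ • x))
        = ((Real.sqrt (x ⬝ᵥ x))⁻¹) ^ 2 * (x ⬝ᵥ x) := by
      simp [smul_dotProduct, dotProduct_smul]; ring
    rw [h2, this, inv_mul_cancel₀ hd.ne']
  · intro M
    rw [qf_smul_vec, inv_pow, Real.sq_sqrt hd.le]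
    field_simp

/-- The key analysis lemma. -/
lemma key (G H Ψ : Matrix (Fin n) (Fin n) ℝ)
    (hG : G.PosSemidef) (hH : H.PosSemidef) (hGne : G ≠ 0) (hHne : H ≠ 0)
    (hΨ : Ψᵀ = Ψ)
    (hyp : ∀ v, 2 * Real.sqrt (qf G v) * Real.sqrt (qf H v) ≤ qf Ψ v) :
    ∃ ω ∈ Set.Ioo (0:ℝ) 1,
      ((ω * (1 - ω)) • Ψ - ((1-ω)^2) • G - (ω^2) • H).PosSemidef := by
  have hn : 0 < n := by
    rcases Nat.eq_zero_or_pos n with h0 | h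
    · exfalso; apply hGne; subst h0; ext i j; exact i.elim0
    · exact h
  set M : ℝ → Matrix (Fin n) (Fin n) ℝ :=
    fun ω => (ω * (1 - ω)) • Ψ - ((1-ω)^2) • G - (ω^2) • H with hM
  have hermM : ∀ ω, (M ω)ᵀ = M ω := by
    intro ω
    simp only [hM, Matrix.transpose_sub, Matrix.transpose_smul, hΨ,
      transpose_of_herm hG.1, transpose_of_herm hH.1]
  have qfM : ∀ ω v, qf (M ω) v
      = ω * (1 - ω) * qf Ψ v - (1-ω)^2 * qf G v - ω^2 * qf H v := by
    intro ω v
    simp only [hM, qf_sub, qf_smul]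
  -- the pointwise bound at balanced directions
  have pointnn : ∀ ω ∈ Set.Icc (0:ℝ) 1, ∀ v : Fin n → ℝ,
      (1-ω)^2 * qf G v = ω^2 * qf H v → 0 ≤ qf (M ω) v := by
    intro ω hω v hbal
    have hg := qf_nonneg hG v
    have hh := qf_nonneg hH v
    have hsg : Real.sqrt (qf G v) ^ 2 = qf G v := Real.sq_sqrt hg
    have hsh : Real.sqrt (qf H v) ^ 2 = qf H v := Real.sq_sqrt hh
    have ha : 0 ≤ (1-ω) * Real.sqrt (qf G v) :=
      mul_nonneg (sub_nonneg.mpr hω.2) (Real.sqrt_nonneg _)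
    have hb : 0 ≤ ω * Real.sqrt (qf H v) := mul_nonneg hω.1 (Real.sqrt_nonneg _)
    have hsq : ((1-ω) * Real.sqrt (qf G v)) ^ 2 = (ω * Real.sqrt (qf H v)) ^ 2 := by
      rw [mul_pow, mul_pow, hsg, hsh]; exact hbal
    have heq : (1-ω) * Real.sqrt (qf G v) = ω * Real.sqrt (qf H v) := by
      have h1 := Real.sqrt_sq ha
      have h2 := Real.sqrt_sq hb
      rw [← h1, ← h2, hsq]
    have hzero : ((1-ω) * Real.sqrt (qf G v) - ω * Real.sqrt (qf H v)) ^ 2 = 0 := by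
      rw [heq]; ring
    have hω2 : 0 ≤ ω * (1 - ω) := mul_nonneg hω.1 (sub_nonneg.mpr hω.2)
    have hexp := mul_le_mul_of_nonneg_left (hyp v) hω2
    rw [qfM]
    nlinarith [hexp, hzero, hsg, hsh]
  -- proof by contradiction
  by_contra hcon
  push_neg at hcon
  -- no ω in the closed interval works either
  have hconIcc : ∀ ω ∈ Set.Icc (0:ℝ) 1, ¬ (M ω).PosSemidef := by
    intro ω hω hPSD
    rcases eq_or_lt_of_le hω.1 with h0 | h0
    · -- ω = 0 : M 0 = -G
      have hM0 : M 0 = -G := by simp [hM]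
      rw [← h0] at hPSD
      rw [hM0] at hPSD
      apply hGne
      have hzeroqf : ∀ v, qf G v = 0 := by
        intro v
        have h1 := qf_nonneg hG v
        have h2 := qf_nonneg hPSD v
        have : qf (-G) v = - qf G v := by
          have := qf_smul (-1) G v
          simpa [neg_one_smul] using this
        rw [this] at h2
        linarith
      ext i j
      have hcol : ∀ j : Fin n, G *ᵥ Pi.single j 1 = 0 := fun j =>
        qf_kernel hG (hzeroqf _)
      have := congrFun (hcol j) i
      rw [Matrix.mulVec_single] at this
      simpa using this
    rcases eq_or_lt_of_le hω.2 with h1 | h1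
    · -- ω = 1 : M 1 = -H
      have hM1 : M 1 = -H := by simp [hM]
      rw [h1] at hPSD
      rw [hM1] at hPSD
      apply hHne
      have hzeroqf : ∀ v, qf H v = 0 := by
        intro v
        have h1' := qf_nonneg hH v
        have h2 := qf_nonneg hPSD v
        have : qf (-H) v = - qf H v := by
          have := qf_smul (-1) H v
          simpa [neg_one_smul] using this
        rw [this] at h2
        linarith
      ext i j
      have hcol : ∀ j : Fin n, H *ᵥ Pi.single j 1 = 0 := fun j =>
        qf_kernel hH (hzeroqf _)
      have := congrFun (hcol j) i
      rw [Matrix.mulVec_single] at this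
      simpa using this
    exact hcon ω ⟨h0, h1⟩ hPSD
  -- the unit sphere (w.r.t. dot product)
  set S : Set (Fin n → ℝ) := {v | v ⬝ᵥ v = 1} with hS
  have cdot : Continuous (fun v : Fin n → ℝ => v ⬝ᵥ v) := by
    simp only [← qf_one]
    exact cont_qf 1
  have hSclosed : IsClosed S := isClosed_eq cdot continuous_const
  have hScomp : IsCompact S := by
    refine Metric.isCompact_of_isClosed_isBounded hSclosed ?_
    rw [isBounded_iff_forall_norm_le]
    refine ⟨1, fun v hv => ?_⟩
    rw [pi_norm_le_iff_of_nonneg (by norm_num)]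
    intro i
    have hle : v i * v i ≤ 1 := by
      have h1 := Finset.single_le_sum (f := fun j => v j * v j)
        (fun j _ => mul_self_nonneg _) (Finset.mem_univ i)
      have hv' : ∑ j, v j * v j = 1 := hv
      rw [hv'] at h1
      exact h1
    rw [Real.norm_eq_abs]
    nlinarith [abs_nonneg (v i), abs_mul_abs_self (v i)]
  have hSne : S.Nonempty := by
    refine ⟨Pi.single ⟨0, hn⟩ 1, ?_⟩
    simp [hS, single_dotProduct]
  -- negative directions everywhere
  have hneg : ∀ ω ∈ Set.Icc (0:ℝ) 1, ∃ v ∈ S, qf (M ω) v < 0 := by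
    intro ω hω
    by_contra h2
    push_neg at h2
    apply hconIcc ω hω
    refine posSemidef_of_forall (hermM ω) fun x => ?_
    rcases eq_or_ne x 0 with rfl | hx
    · rw [qf_zero_vec]
    · obtain ⟨c, hc1, hc2⟩ := exists_unit_scale hx
      rw [hc2 (M ω)]
      exact mul_nonneg (dot_self_nonneg x) (h2 _ hc1)
  -- continuity facts
  have contqfM : Continuous (fun p : ℝ × (Fin n → ℝ) => qf (M p.1) p.2) := by
    have hrw : (fun p : ℝ × (Fin n → ℝ) => qf (M p.1) p.2)
        = fun p => p.1 * (1-p.1) * qf Ψ p.2 - (1-p.1)^2 * qf G p.2 - p.1^2 * qf H p.2 :=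
      funext fun p => qfM _ _
    rw [hrw]
    exact (((continuous_fst.mul (continuous_const.sub continuous_fst)).mul
      ((cont_qf Ψ).comp continuous_snd)).sub
      (((continuous_const.sub continuous_fst).pow 2).mul ((cont_qf G).comp continuous_snd))).sub
      ((continuous_fst.pow 2).mul ((cont_qf H).comp continuous_snd))
  have contFw : ∀ w : Fin n → ℝ, Continuous (fun p : ℝ × (Fin n → ℝ) => qf (M p.1) w) := by
    intro w
    have hrw : (fun p : ℝ × (Fin n → ℝ) => qf (M p.1) w)
        = fun p => p.1 * (1-p.1) * qf Ψ w - (1-p.1)^2 * qf G w - p.1^2 * qf H w :=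
      funext fun p => qfM _ _
    rw [hrw]
    exact (((continuous_fst.mul (continuous_const.sub continuous_fst)).mul
      continuous_const).sub
      (((continuous_const.sub continuous_fst).pow 2).mul continuous_const)).sub
      ((continuous_fst.pow 2).mul continuous_const)
  have conts : Continuous (fun p : ℝ × (Fin n → ℝ) =>
      (1-p.1)^2 * qf G p.2 - p.1^2 * qf H p.2) :=
    (((continuous_const.sub continuous_fst).pow 2).mul ((cont_qf G).comp continuous_snd)).sub
      ((continuous_fst.pow 2).mul ((cont_qf H).comp continuous_snd))
  -- the two closed sets
  set KA : Set (ℝ × (Fin n → ℝ)) := ((Set.Icc (0:ℝ) 1) ×ˢ S) ∩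
      ((⋂ w ∈ S, {p : ℝ × (Fin n → ℝ) | qf (M p.1) p.2 ≤ qf (M p.1) w}) ∩
        {p : ℝ × (Fin n → ℝ) | (1-p.1)^2 * qf G p.2 - p.1^2 * qf H p.2 ≤ 0}) with hKA
  set KB : Set (ℝ × (Fin n → ℝ)) := ((Set.Icc (0:ℝ) 1) ×ˢ S) ∩
      ((⋂ w ∈ S, {p : ℝ × (Fin n → ℝ) | qf (M p.1) p.2 ≤ qf (M p.1) w}) ∩
        {p : ℝ × (Fin n → ℝ) | 0 ≤ (1-p.1)^2 * qf G p.2 - p.1^2 * qf H p.2}) with hKB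
  have hKAclosed : IsClosed KA := by
    refine ((isClosed_Icc.prod hSclosed).inter (IsClosed.inter ?_ ?_))
    · exact isClosed_biInter fun w _ => isClosed_le contqfM (contFw w)
    · exact isClosed_le conts continuous_const
  have hKBclosed : IsClosed KB := by
    refine ((isClosed_Icc.prod hSclosed).inter (IsClosed.inter ?_ ?_))
    · exact isClosed_biInter fun w _ => isClosed_le contqfM (contFw w)
    · exact isClosed_le continuous_const conts
  have hKAcomp : IsCompact KA :=
    (isCompact_Icc.prod hScomp).of_isClosed_subset hKAclosed Set.inter_subset_left
  have hKBcomp : IsCompact KB :=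
    (isCompact_Icc.prod hScomp).of_isClosed_subset hKBclosed Set.inter_subset_left
  set CA : Set ℝ := Prod.fst '' KA with hCA
  set CB : Set ℝ := Prod.fst '' KB with hCB
  have hCAclosed : IsClosed CA := (hKAcomp.image continuous_fst).isClosed
  have hCBclosed : IsClosed CB := (hKBcomp.image continuous_fst).isClosed
  -- elimination form of membership
  have memKA : ∀ ω v, (ω, v) ∈ KA ↔ (ω ∈ Set.Icc (0:ℝ) 1 ∧ v ∈ S ∧
      (∀ w ∈ S, qf (M ω) v ≤ qf (M ω) w) ∧
      (1-ω)^2 * qf G v - ω^2 * qf H v ≤ 0) := by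
    intro ω v
    simp only [hKA, Set.mem_inter_iff, Set.mem_prod, Set.mem_iInter, Set.mem_setOf_eq]
    tauto
  have memKB : ∀ ω v, (ω, v) ∈ KB ↔ (ω ∈ Set.Icc (0:ℝ) 1 ∧ v ∈ S ∧
      (∀ w ∈ S, qf (M ω) v ≤ qf (M ω) w) ∧
      0 ≤ (1-ω)^2 * qf G v - ω^2 * qf H v) := by
    intro ω v
    simp only [hKB, Set.mem_inter_iff, Set.mem_prod, Set.mem_iInter, Set.mem_setOf_eq]
    tauto
  -- cover
  have hcover : Set.Icc (0:ℝ) 1 ⊆ CA ∪ CB := by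
    intro ω hω
    obtain ⟨v, hvS, hvmin⟩ := hScomp.exists_isMinOn hSne ((cont_qf (M ω)).continuousOn)
    have hmin : ∀ w ∈ S, qf (M ω) v ≤ qf (M ω) w := fun w hw => hvmin hw
    rcases le_total ((1-ω)^2 * qf G v - ω^2 * qf H v) 0 with h | h
    · exact Or.inl ⟨(ω, v), (memKA ω v).mpr ⟨hω, hvS, hmin, h⟩, rfl⟩
    · exact Or.inr ⟨(ω, v), (memKB ω v).mpr ⟨hω, hvS, hmin, h⟩, rfl⟩
  -- the two-sided contradiction
  have no_two : ∀ ω, ω ∈ CA → ω ∈ CB → False := by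
    intro ω hA hB
    obtain ⟨⟨ωa, v₁⟩, hpA, hfst₁⟩ := hA
    obtain ⟨⟨ωb, v₂⟩, hpB, hfst₂⟩ := hB
    simp only at hfst₁ hfst₂
    subst hfst₁
    subst hfst₂
    rcases (memKA _ _).mp hpA with ⟨hωIcc, hv₁S, hmin₁, hs₁⟩
    rcases (memKB _ _).mp hpB with ⟨_, hv₂S, hmin₂, hs₂⟩
    set ω := ωb with hωdef
    obtain ⟨vν, hvνS, hvνneg⟩ := hneg ω hωIcc
    set m := qf (M ω) v₁ with hm
    have hm2 : qf (M ω) v₂ = m := le_antisymm (hmin₂ v₁ hv₁S) (hmin₁ v₂ hv₂S)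
    have hmneg : m < 0 := lt_of_le_of_lt (hmin₁ vν hvνS) hvνneg
    set Mh : Matrix (Fin n) (Fin n) ℝ := M ω - m • (1 : Matrix (Fin n) (Fin n) ℝ) with hMh
    have hermMh : Mhᵀ = Mh := by
      simp only [hMh, Matrix.transpose_sub, Matrix.transpose_smul, Matrix.transpose_one, hermM]
    have qfMh : ∀ x, qf Mh x = qf (M ω) x - m * (x ⬝ᵥ x) := by
      intro x
      rw [hMh, qf_sub, qf_smul, qf_one]
    have hMhPSD : Mh.PosSemidef := by
      refine posSemidef_of_forall hermMh fun x => ?_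
      rcases eq_or_ne x 0 with rfl | hx
      · rw [qf_zero_vec Mh]
      · obtain ⟨c, hcS, hcq⟩ := exists_unit_scale hx
        have h1 : m ≤ qf (M ω) (c • x) := hmin₁ _ hcS
        have h2 : 0 < x ⬝ᵥ x := dot_self_pos hx
        rw [qfMh, hcq (M ω)]
        nlinarith
    have hker₁ : Mh *ᵥ v₁ = 0 := by
      refine qf_kernel hMhPSD ?_
      rw [qfMh]
      have hv1 : v₁ ⬝ᵥ v₁ = 1 := hv₁S
      rw [hv1]; ring
    have hker₂ : Mh *ᵥ v₂ = 0 := by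
      refine qf_kernel hMhPSD ?_
      rw [qfMh, hm2]
      have hv2 : v₂ ⬝ᵥ v₂ = 1 := hv₂S
      rw [hv2]; ring
    -- replace v₂ by ±v₂ so that v₁ ⬝ᵥ v₂ ≥ 0
    obtain ⟨v₃, hv₃S, hGv₃, hHv₃, hker₃, hdot₃⟩ :
        ∃ v₃, (v₃ ⬝ᵥ v₃ = 1) ∧ qf G v₃ = qf G v₂ ∧ qf H v₃ = qf H v₂ ∧
          Mh *ᵥ v₃ = 0 ∧ 0 ≤ v₁ ⬝ᵥ v₃ := by
      rcases le_or_gt 0 (v₁ ⬝ᵥ v₂) with h | h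
      · exact ⟨v₂, hv₂S, rfl, rfl, hker₂, h⟩
      · refine ⟨-v₂, ?_, ?_, ?_, ?_, ?_⟩
        · have hv2 : v₂ ⬝ᵥ v₂ = 1 := hv₂S
          simp [neg_dotProduct, dotProduct_neg, hv2]
        · rw [show -v₂ = (-1 : ℝ) • v₂ by simp, qf_smul_vec]; ring_nf
        · rw [show -v₂ = (-1 : ℝ) • v₂ by simp, qf_smul_vec]; ring_nf
        · rw [Matrix.mulVec_neg, hker₂, neg_zero]
        · rw [dotProduct_neg]; linarith
    -- path from v₁ to v₃
    set u : ℝ → (Fin n → ℝ) := fun θ => (1-θ) • v₁ + θ • v₃ with hu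
    have hudot : ∀ θ ∈ Set.Icc (0:ℝ) 1, 0 < (u θ) ⬝ᵥ (u θ) := by
      intro θ hθ
      have hv1 : v₁ ⬝ᵥ v₁ = 1 := hv₁S
      have hexp : (u θ) ⬝ᵥ (u θ) = (1-θ)^2 * (v₁ ⬝ᵥ v₁) + 2*((1-θ)*θ) * (v₁ ⬝ᵥ v₃)
          + θ^2 * (v₃ ⬝ᵥ v₃) := by
        simp only [hu, add_dotProduct, dotProduct_add, smul_dotProduct, dotProduct_smul,
          smul_eq_mul]
        have : v₃ ⬝ᵥ v₁ = v₁ ⬝ᵥ v₃ := dotProduct_comm _ _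
        rw [this]; ring
      rw [hexp, hv1, hv₃S]
      have hcross : 0 ≤ 2 * ((1-θ)*θ) * (v₁ ⬝ᵥ v₃) := by
        have h1 : 0 ≤ (1-θ)*θ := mul_nonneg (by linarith [hθ.2]) hθ.1
        nlinarith
      nlinarith [hcross, sq_nonneg (1 - 2*θ)]
    have contu : Continuous u := by
      exact ((continuous_const.sub continuous_id).smul continuous_const).add
        (continuous_id.smul continuous_const)
    set σ : ℝ → ℝ := fun θ => (1-ω)^2 * qf G (u θ) - ω^2 * qf H (u θ) with hσ
    have contσ : Continuous σ := by
      exact (continuous_const.mul ((cont_qf G).comp contu)).sub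
        (continuous_const.mul ((cont_qf H).comp contu))
    have hu0 : u 0 = v₁ := by simp [hu]
    have hu1 : u 1 = v₃ := by simp [hu]
    have hσ0 : σ 0 ≤ 0 := by rw [hσ]; simp only [hu0]; exact hs₁
    have hσ1 : 0 ≤ σ 1 := by
      rw [hσ]; simp only [hu1, hGv₃, hHv₃]; exact hs₂
    obtain ⟨θ, hθIcc, hθ0⟩ := intermediate_value_Icc zero_le_one contσ.continuousOn
      (Set.mem_Icc.mpr ⟨hσ0, hσ1⟩)
    set w := u θ with hw
    have hwne : w ≠ 0 := by
      intro h0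
      have := hudot θ hθIcc
      rw [← hw, h0] at this
      simp at this
    have hkerw : Mh *ᵥ w = 0 := by
      rw [hw, hu]
      simp only [Matrix.mulVec_add, Matrix.mulVec_smul, hker₁, hker₃]
      simp
    have hqfw : qf (M ω) w = m * (w ⬝ᵥ w) := by
      have h0 : qf Mh w = 0 := by
        rw [qf]
        show w ⬝ᵥ (Mh *ᵥ w) = 0
        rw [hkerw, dotProduct_zero]
      rw [qfMh] at h0
      linarith
    have hneg' : qf (M ω) w < 0 := by
      rw [hqfw]
      exact mul_neg_of_neg_of_pos hmneg (hudot θ hθIcc)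
    have hbal : (1-ω)^2 * qf G w = ω^2 * qf H w := by
      have : σ θ = 0 := hθ0
      rw [hσ] at this
      simp only at this
      linarith [this]
    exact absurd (pointnn ω hωIcc w hbal) (not_le.mpr hneg')
  -- endpoints
  have h0CB : (0:ℝ) ∈ CB := by
    obtain ⟨v, hvS, hvmin⟩ := hScomp.exists_isMinOn hSne ((cont_qf (M 0)).continuousOn)
    refine ⟨((0:ℝ), v), (memKB 0 v).mpr ⟨⟨le_refl _, zero_le_one⟩, hvS,
      fun w hw => hvmin hw, ?_⟩, rfl⟩
    have := qf_nonneg hG v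
    have := qf_nonneg hH v
    norm_num
    linarith [qf_nonneg hG v]
  have h1CA : (1:ℝ) ∈ CA := by
    obtain ⟨v, hvS, hvmin⟩ := hScomp.exists_isMinOn hSne ((cont_qf (M 1)).continuousOn)
    refine ⟨((1:ℝ), v), (memKA 1 v).mpr ⟨⟨zero_le_one, le_refl _⟩, hvS,
      fun w hw => hvmin hw, ?_⟩, rfl⟩
    norm_num
    linarith [qf_nonneg hH v]
  -- connectedness contradiction
  have hdisj : Disjoint CA CB := by
    rw [Set.disjoint_left]
    intro ω hA hB
    exact no_two ω hA hB
  rcases (isPreconnected_iff_subset_of_fully_disjoint_closed isClosed_Icc).mp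
      isPreconnected_Icc CA CB hCAclosed hCBclosed hcover hdisj with hsub | hsub
  · exact no_two 0 (hsub ⟨le_refl _, zero_le_one⟩) h0CB
  · exact no_two 1 h1CA (hsub ⟨zero_le_one, le_refl _⟩)


-- ============ matrix algebra layer ============

lemma star_vec' {m : Type*} (v : m → ℝ) : star v = v := funext fun _ => star_trivial _

lemma psd_smul {c : ℝ} (hc : 0 ≤ c) {A : Matrix (Fin n) (Fin n) ℝ} (hA : A.PosSemidef) :
    (c • A).PosSemidef := by
  refine posSemidef_of_forall ?_ fun v => ?_
  · rw [Matrix.transpose_smul, transpose_of_herm hA.1]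
  · rw [qf_smul]; exact mul_nonneg hc (qf_nonneg hA v)

lemma pd_smul {c : ℝ} (hc : 0 < c) {A : Matrix (Fin n) (Fin n) ℝ} (hA : A.PosDef) :
    (c • A).PosDef := by
  refine PosDef.of_dotProduct_mulVec_pos (herm_of_transpose ?_) fun v hv => ?_
  · rw [Matrix.transpose_smul, transpose_of_herm hA.1]
  · rw [star_vec']
    have : qf (c • A) v = c * qf A v := qf_smul c A v
    rw [show v ⬝ᵥ (c • A) *ᵥ v = qf (c • A) v from rfl, this]
    exact mul_pos hc (qf_pos hA hv)

lemma pd_convex {c d : ℝ} (hc : 0 ≤ c) (hd : 0 ≤ d) (hcd : 0 < c + d)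
    {A B : Matrix (Fin n) (Fin n) ℝ} (hA : A.PosDef) (hB : B.PosDef) :
    (c • A + d • B).PosDef := by
  rcases lt_or_eq_of_le hc with hc' | hc'
  · exact (pd_smul hc' hA).add_posSemidef (psd_smul hd hB.posSemidef)
  · have hd' : 0 < d := by rw [← hc'] at hcd; simpa using hcd
    exact Matrix.PosDef.posSemidef_add (psd_smul hc hA.posSemidef) (pd_smul hd' hB)

lemma psd_congr {M : Matrix (Fin n) (Fin n) ℝ} (hM : M.PosSemidef)
    (A : Matrix (Fin n) (Fin n) ℝ) : (A * M * Aᵀ).PosSemidef := by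
  have := hM.mul_mul_conjTranspose_same A
  rwa [Matrix.conjTranspose_eq_transpose_of_trivial] at this

/-- The completing-the-square identity for the exact optimal gains. -/
lemma exactform {NA NB : Matrix (Fin n) (Fin n) ℝ} (hNA : NA.PosDef) (hNB : NB.PosDef) :
    ((NA⁻¹ + NB⁻¹)⁻¹ * NA⁻¹) * NA * ((NA⁻¹ + NB⁻¹)⁻¹ * NA⁻¹)ᵀ
      + ((NA⁻¹ + NB⁻¹)⁻¹ * NB⁻¹) * NB * ((NA⁻¹ + NB⁻¹)⁻¹ * NB⁻¹)ᵀ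
      = (NA⁻¹ + NB⁻¹)⁻¹ := by
  have hNAt : NAᵀ = NA := transpose_of_herm hNA.1
  have hNBt : NBᵀ = NB := transpose_of_herm hNB.1
  have hNAd : IsUnit NA.det := isUnit_iff_isUnit_det _ |>.mp hNA.isUnit
  have hNBd : IsUnit NB.det := isUnit_iff_isUnit_det _ |>.mp hNB.isUnit
  have hSum : (NA⁻¹ + NB⁻¹).PosDef := hNA.inv.add hNB.inv
  have hSumd : IsUnit (NA⁻¹ + NB⁻¹).det := isUnit_iff_isUnit_det _ |>.mp hSum.isUnit
  set B := (NA⁻¹ + NB⁻¹)⁻¹ with hBdef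
  have hBt : Bᵀ = B := by
    rw [hBdef, Matrix.transpose_nonsing_inv, Matrix.transpose_add,
      Matrix.transpose_nonsing_inv, Matrix.transpose_nonsing_inv, hNAt, hNBt]
  have hNAit : (NA⁻¹)ᵀ = NA⁻¹ := by rw [Matrix.transpose_nonsing_inv, hNAt]
  have hNBit : (NB⁻¹)ᵀ = NB⁻¹ := by rw [Matrix.transpose_nonsing_inv, hNBt]
  have h1 : (B * NA⁻¹)ᵀ = NA⁻¹ * B := by rw [Matrix.transpose_mul, hNAit, hBt]
  have h2 : (B * NB⁻¹)ᵀ = NB⁻¹ * B := by rw [Matrix.transpose_mul, hNBit, hBt]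
  rw [h1, h2]
  have e1 : B * NA⁻¹ * NA * (NA⁻¹ * B) = B * (NA⁻¹ * B) := by
    rw [Matrix.mul_assoc B NA⁻¹ NA, Matrix.nonsing_inv_mul _ hNAd, Matrix.mul_one]
  have e2 : B * NB⁻¹ * NB * (NB⁻¹ * B) = B * (NB⁻¹ * B) := by
    rw [Matrix.mul_assoc B NB⁻¹ NB, Matrix.nonsing_inv_mul _ hNBd, Matrix.mul_one]
  rw [e1, e2, ← Matrix.mul_add, ← Matrix.add_mul]
  have : (NA⁻¹ + NB⁻¹) * B = 1 := by
    rw [hBdef, Matrix.mul_nonsing_inv _ hSumd]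
  rw [this, Matrix.mul_one]

/-- completing the square : the fused quadratic form dominates the exact one. -/
lemma minform {NA NB : Matrix (Fin n) (Fin n) ℝ} (hNA : NA.PosDef) (hNB : NB.PosDef)
    {KA KB : Matrix (Fin n) (Fin n) ℝ} (hK : KA + KB = 1) :
    (KA * NA * KAᵀ + KB * NB * KBᵀ - (NA⁻¹ + NB⁻¹)⁻¹).PosSemidef := by
  have hNAt : NAᵀ = NA := transpose_of_herm hNA.1
  have hNBt : NBᵀ = NB := transpose_of_herm hNB.1
  have hNAd : IsUnit NA.det := isUnit_iff_isUnit_det _ |>.mp hNA.isUnit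
  have hNBd : IsUnit NB.det := isUnit_iff_isUnit_det _ |>.mp hNB.isUnit
  have hSum : (NA⁻¹ + NB⁻¹).PosDef := hNA.inv.add hNB.inv
  have hSumd : IsUnit (NA⁻¹ + NB⁻¹).det := isUnit_iff_isUnit_det _ |>.mp hSum.isUnit
  set B := (NA⁻¹ + NB⁻¹)⁻¹ with hBdef
  have hBt : Bᵀ = B := by
    rw [hBdef, Matrix.transpose_nonsing_inv, Matrix.transpose_add,
      Matrix.transpose_nonsing_inv, Matrix.transpose_nonsing_inv, hNAt, hNBt]
  have hNAit : (NA⁻¹)ᵀ = NA⁻¹ := by rw [Matrix.transpose_nonsing_inv, hNAt]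
  have hNBit : (NB⁻¹)ᵀ = NB⁻¹ := by rw [Matrix.transpose_nonsing_inv, hNBt]
  have hBmul : B * (NA⁻¹ + NB⁻¹) = 1 := by
    rw [hBdef, Matrix.nonsing_inv_mul _ hSumd]
  set D := KA - B * NA⁻¹ with hDdef
  have hKA : KA = B * NA⁻¹ + D := by rw [hDdef]; abel
  have hKB : KB = B * NB⁻¹ - D := by
    have h1 : KB = 1 - KA := by
      rw [← hK]; abel
    rw [h1, ← hBmul, Matrix.mul_add, hKA]; abel
  have hKAt : KAᵀ = NA⁻¹ * B + Dᵀ := by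
    rw [hKA, Matrix.transpose_add, Matrix.transpose_mul, hNAit, hBt]
  have hKBt : KBᵀ = NB⁻¹ * B - Dᵀ := by
    rw [hKB, Matrix.transpose_sub, Matrix.transpose_mul, hNBit, hBt]
  have cancelA : ∀ Z : Matrix (Fin n) (Fin n) ℝ, NA * (NA⁻¹ * Z) = Z := fun Z => by
    rw [← Matrix.mul_assoc, Matrix.mul_nonsing_inv _ hNAd, Matrix.one_mul]
  have cancelB : ∀ Z : Matrix (Fin n) (Fin n) ℝ, NB * (NB⁻¹ * Z) = Z := fun Z => by
    rw [← Matrix.mul_assoc, Matrix.mul_nonsing_inv _ hNBd, Matrix.one_mul]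
  have e1 : KA * NA * KAᵀ = B * (NA⁻¹ * B) + B * Dᵀ + D * B + D * (NA * Dᵀ) := by
    rw [hKAt, hKA]
    simp only [Matrix.add_mul, Matrix.mul_add]
    have t1 : B * NA⁻¹ * NA * (NA⁻¹ * B) = B * (NA⁻¹ * B) := by
      rw [Matrix.mul_assoc B NA⁻¹ NA, Matrix.nonsing_inv_mul _ hNAd, Matrix.mul_one]
    have t2 : B * NA⁻¹ * NA * Dᵀ = B * Dᵀ := by
      rw [Matrix.mul_assoc B NA⁻¹ NA, Matrix.nonsing_inv_mul _ hNAd, Matrix.mul_one]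
    have t3 : D * NA * (NA⁻¹ * B) = D * B := by
      rw [Matrix.mul_assoc D NA (NA⁻¹ * B), cancelA]
    have t4 : D * NA * Dᵀ = D * (NA * Dᵀ) := by rw [Matrix.mul_assoc]
    rw [t1, t2, t3, t4]
    abel
  have e2 : KB * NB * KBᵀ = B * (NB⁻¹ * B) - B * Dᵀ - D * B + D * (NB * Dᵀ) := by
    rw [hKBt, hKB]
    simp only [Matrix.sub_mul, Matrix.mul_sub, Matrix.add_mul, Matrix.mul_add]
    have t1 : B * NB⁻¹ * NB * (NB⁻¹ * B) = B * (NB⁻¹ * B) := by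
      rw [Matrix.mul_assoc B NB⁻¹ NB, Matrix.nonsing_inv_mul _ hNBd, Matrix.mul_one]
    have t2 : B * NB⁻¹ * NB * Dᵀ = B * Dᵀ := by
      rw [Matrix.mul_assoc B NB⁻¹ NB, Matrix.nonsing_inv_mul _ hNBd, Matrix.mul_one]
    have t3 : D * NB * (NB⁻¹ * B) = D * B := by
      rw [Matrix.mul_assoc D NB (NB⁻¹ * B), cancelB]
    have t4 : D * NB * Dᵀ = D * (NB * Dᵀ) := by rw [Matrix.mul_assoc]
    rw [t1, t2, t3, t4]
    abel
  have e3 : B * (NA⁻¹ * B) + B * (NB⁻¹ * B) = B := by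
    rw [← Matrix.mul_add, ← Matrix.add_mul, ← Matrix.mul_assoc, hBmul, Matrix.one_mul]
  have e3' : B * (NA⁻¹ * B) + B * (NB⁻¹ * B) - B = 0 := by rw [e3, sub_self]
  have rhs : D * (NA + NB) * Dᵀ = D * (NA * Dᵀ) + D * (NB * Dᵀ) := by
    rw [Matrix.mul_assoc, Matrix.add_mul, Matrix.mul_add]
  have key : KA * NA * KAᵀ + KB * NB * KBᵀ - B = D * (NA + NB) * Dᵀ := by
    rw [e1, e2, rhs]
    have expand : B * (NA⁻¹ * B) + B * Dᵀ + D * B + D * (NA * Dᵀ)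
        + (B * (NB⁻¹ * B) - B * Dᵀ - D * B + D * (NB * Dᵀ)) - B
        = (B * (NA⁻¹ * B) + B * (NB⁻¹ * B) - B) + (D * (NA * Dᵀ) + D * (NB * Dᵀ)) := by
      abel
    rw [expand, e3', zero_add]
  rw [key]
  exact psd_congr (hNA.add hNB).posSemidef D


-- ============ block matrices and worst-case correlations ============

lemma herm_of_transpose' {m : Type*} {M : Matrix m m ℝ} (h : Mᵀ = M) : M.IsHermitian := by
  rwa [Matrix.IsHermitian, Matrix.conjTranspose_eq_transpose_of_trivial]

lemma posSemidef_of_forall' {m : Type*} [Fintype m] {M : Matrix m m ℝ} (h : Mᵀ = M)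
    (h2 : ∀ v : m → ℝ, 0 ≤ v ⬝ᵥ (M *ᵥ v)) : M.PosSemidef :=
  PosSemidef.of_dotProduct_mulVec_nonneg (herm_of_transpose' h) fun x => by rw [star_vec']; exact h2 x

lemma dot_transpose {m l : Type*} [Fintype m] [Fintype l] (M : Matrix m l ℝ)
    (x : l → ℝ) (y : m → ℝ) : x ⬝ᵥ (Mᵀ *ᵥ y) = y ⬝ᵥ (M *ᵥ x) := by
  rw [Matrix.mulVec_transpose, dotProduct_comm, ← Matrix.dotProduct_mulVec]

lemma qf_cross (A P B : Matrix (Fin n) (Fin n) ℝ) (v : Fin n → ℝ) :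
    v ⬝ᵥ ((A * P * Bᵀ) *ᵥ v) = (Aᵀ *ᵥ v) ⬝ᵥ (P *ᵥ (Bᵀ *ᵥ v)) := by
  rw [← Matrix.mulVec_mulVec, ← Matrix.mulVec_mulVec, Matrix.dotProduct_mulVec,
    ← Matrix.mulVec_transpose]

lemma block_quad (PA PB PAB : Matrix (Fin n) (Fin n) ℝ)
    (hblk : (Matrix.fromBlocks PA PAB PABᵀ PB).PosSemidef) (u w : Fin n → ℝ) :
    0 ≤ qf PA u + 2 * (u ⬝ᵥ (PAB *ᵥ w)) + qf PB w := by
  have h := hblk.dotProduct_mulVec_nonneg (Sum.elim u w)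
  rw [star_vec'] at h
  rw [Matrix.fromBlocks_mulVec] at h
  simp only [Sum.elim_comp_inl, Sum.elim_comp_inr] at h
  rw [sumElim_dotProduct_sumElim, dotProduct_add, dotProduct_add] at h
  have hT : w ⬝ᵥ (PABᵀ *ᵥ u) = u ⬝ᵥ (PAB *ᵥ w) := dot_transpose PAB w u
  rw [hT] at h
  unfold qf
  linarith

lemma block_psd (PA PB PAB : Matrix (Fin n) (Fin n) ℝ)
    (hPAt : PAᵀ = PA) (hPBt : PBᵀ = PB)
    (hq : ∀ u w : Fin n → ℝ, 0 ≤ qf PA u + 2 * (u ⬝ᵥ (PAB *ᵥ w)) + qf PB w) :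
    (Matrix.fromBlocks PA PAB PABᵀ PB).PosSemidef := by
  refine posSemidef_of_forall' ?_ fun x => ?_
  · rw [Matrix.fromBlocks_transpose, Matrix.transpose_transpose, hPAt, hPBt]
  · have hx : Sum.elim (x ∘ Sum.inl) (x ∘ Sum.inr) = x := Sum.elim_comp_inl_inr x
    set u := x ∘ Sum.inl
    set w := x ∘ Sum.inr
    rw [← hx, Matrix.fromBlocks_mulVec]
    simp only [Sum.elim_comp_inl, Sum.elim_comp_inr]
    rw [sumElim_dotProduct_sumElim, dotProduct_add, dotProduct_add]
    have hT : w ⬝ᵥ (PABᵀ *ᵥ u) = u ⬝ᵥ (PAB *ᵥ w) := dot_transpose PAB w u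
    rw [hT]
    have := hq u w
    unfold qf at this
    linarith

lemma vecMulVec_mulVec (x y w : Fin n → ℝ) :
    Matrix.vecMulVec x y *ᵥ w = (y ⬝ᵥ w) • x := by
  ext i
  simp only [Matrix.mulVec, Matrix.vecMulVec_apply, dotProduct, Pi.smul_apply, smul_eq_mul]
  rw [Finset.sum_mul]
  exact Finset.sum_congr rfl fun j _ => by ring

lemma vecMulVec_transpose (x y : Fin n → ℝ) :
    (Matrix.vecMulVec x y)ᵀ = Matrix.vecMulVec y x := by
  ext i j
  simp only [Matrix.transpose_apply, Matrix.vecMulVec_apply]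
  ring

lemma mat_eq_zero_of_mulVec {A : Matrix (Fin n) (Fin n) ℝ}
    (h : ∀ v, A *ᵥ v = 0) : A = 0 := by
  ext i j
  have := congrFun (h (Pi.single j 1)) i
  rw [Matrix.mulVec_single] at this
  simpa using this

-- ============ the L2 dominance lemma ============

set_option maxHeartbeats 1000000 in
lemma L2 {PA PB QA QB : Matrix (Fin n) (Fin n) ℝ}
    (hPA : PA.PosDef) (hPB : PB.PosDef) (hQA : QA.PosDef) (hQB : QB.PosDef)
    (KA KB BF' : Matrix (Fin n) (Fin n) ℝ)
    (hBF't : BF'ᵀ = BF') (hK : KA + KB = 1)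
    (hcons : ∀ PAB : Matrix (Fin n) (Fin n) ℝ,
      (Matrix.fromBlocks PA PAB PABᵀ PB).PosSemidef →
      (BF' - (KA * (PA + QA) * KAᵀ + KA * PAB * KBᵀ + KB * PABᵀ * KAᵀ
        + KB * (PB + QB) * KBᵀ)).PosSemidef) :
    ∃ ω ∈ Set.Icc (0:ℝ) 1,
      (BF' - (ω • (PA + ω • QA)⁻¹ + (1 - ω) • (PB + (1 - ω) • QB)⁻¹)⁻¹).PosSemidef := by
  have hPAt := transpose_of_herm hPA.1
  have hPBt := transpose_of_herm hPB.1
  have hQAt := transpose_of_herm hQA.1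
  have hQBt := transpose_of_herm hQB.1
  set G : Matrix (Fin n) (Fin n) ℝ := KA * PA * KAᵀ with hGdef
  set H : Matrix (Fin n) (Fin n) ℝ := KB * PB * KBᵀ with hHdef
  set Z : Matrix (Fin n) (Fin n) ℝ := KA * (PA + QA) * KAᵀ + KB * (PB + QB) * KBᵀ with hZdef
  set Ψ : Matrix (Fin n) (Fin n) ℝ := BF' - Z with hPsidef
  -- block PSD for PAB = 0
  have hblk0 : (Matrix.fromBlocks PA (0 : Matrix (Fin n) (Fin n) ℝ) (0 : Matrix (Fin n) (Fin n) ℝ)ᵀ PB).PosSemidef := by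
    refine block_psd PA PB 0 hPAt hPBt fun u w => ?_
    rw [Matrix.zero_mulVec, dotProduct_zero]
    have := qf_nonneg hPA.posSemidef u
    have := qf_nonneg hPB.posSemidef w
    linarith
  -- trivial cases
  by_cases hKAzero : KA = 0
  · -- ω = 0
    have hKB1 : KB = 1 := by rw [hKAzero, zero_add] at hK; exact hK
    refine ⟨0, ⟨le_refl _, zero_le_one⟩, ?_⟩
    have hPhi0 : ((0:ℝ) • (PA + (0:ℝ) • QA)⁻¹
        + ((1:ℝ) - 0) • (PB + ((1:ℝ) - 0) • QB)⁻¹)⁻¹ = PB + QB := by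
      have hdet : IsUnit (PB + QB).det :=
        isUnit_iff_isUnit_det _ |>.mp (hPB.add_posSemidef hQB.posSemidef).isUnit
      rw [zero_smul, zero_add, sub_zero, one_smul, one_smul,
        Matrix.nonsing_inv_nonsing_inv _ hdet]
    rw [hPhi0]
    have h := hcons 0 hblk0
    rw [hKAzero, hKB1] at h
    simpa using h
  by_cases hKBzero : KB = 0
  · -- ω = 1
    have hKA1 : KA = 1 := by rw [hKBzero, add_zero] at hK; exact hK
    refine ⟨1, ⟨zero_le_one, le_refl _⟩, ?_⟩
    have hPhi1 : ((1:ℝ) • (PA + (1:ℝ) • QA)⁻¹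
        + ((1:ℝ) - 1) • (PB + ((1:ℝ) - 1) • QB)⁻¹)⁻¹ = PA + QA := by
      have hdet : IsUnit (PA + QA).det :=
        isUnit_iff_isUnit_det _ |>.mp (hPA.add_posSemidef hQA.posSemidef).isUnit
      rw [sub_self, zero_smul, add_zero, one_smul, one_smul,
        Matrix.nonsing_inv_nonsing_inv _ hdet]
    rw [hPhi1]
    have h := hcons 0 hblk0
    rw [hKBzero, hKA1] at h
    simpa using h
  -- nontrivial case
  have hGne : G ≠ 0 := by
    intro h0
    apply hKAzero
    have hKAT : KAᵀ = 0 := by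
      apply mat_eq_zero_of_mulVec
      intro v
      by_contra hne
      have : 0 < qf PA (KAᵀ *ᵥ v) := qf_pos hPA hne
      rw [← qf_congruence, ← hGdef, h0] at this
      simp [qf] at this
    calc KA = (KAᵀ)ᵀ := (Matrix.transpose_transpose KA).symm
    _ = 0 := by rw [hKAT, Matrix.transpose_zero]
  have hHne : H ≠ 0 := by
    intro h0
    apply hKBzero
    have hKBT : KBᵀ = 0 := by
      apply mat_eq_zero_of_mulVec
      intro v
      by_contra hne
      have : 0 < qf PB (KBᵀ *ᵥ v) := qf_pos hPB hne
      rw [← qf_congruence, ← hHdef, h0] at this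
      simp [qf] at this
    calc KB = (KBᵀ)ᵀ := (Matrix.transpose_transpose KB).symm
    _ = 0 := by rw [hKBT, Matrix.transpose_zero]
  have hGpsd : G.PosSemidef := psd_congr hPA.posSemidef KA
  have hHpsd : H.PosSemidef := psd_congr hPB.posSemidef KB
  have hZt : Zᵀ = Z := by
    rw [hZdef, Matrix.transpose_add, Matrix.transpose_mul, Matrix.transpose_mul,
      Matrix.transpose_mul, Matrix.transpose_mul, Matrix.transpose_transpose,
      Matrix.transpose_transpose]
    rw [show (PA + QA)ᵀ = PA + QA by rw [Matrix.transpose_add, hPAt, hQAt],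
      show (PB + QB)ᵀ = PB + QB by rw [Matrix.transpose_add, hPBt, hQBt]]
    rw [Matrix.mul_assoc, Matrix.mul_assoc]
  have hPsit : Ψᵀ = Ψ := by
    rw [hPsidef, Matrix.transpose_sub, hBF't, hZt]
  -- the scalar hypothesis for the key lemma
  have hyp : ∀ v, 2 * Real.sqrt (qf G v) * Real.sqrt (qf H v) ≤ qf Ψ v := by
    intro v
    set a := KAᵀ *ᵥ v with hadef
    set b := KBᵀ *ᵥ v with hbdef
    have hGv : qf G v = qf PA a := by rw [hGdef, qf_congruence]
    have hHv : qf H v = qf PB b := by rw [hHdef, qf_congruence]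
    have hga : 0 ≤ qf PA a := qf_nonneg hPA.posSemidef a
    have hhb : 0 ≤ qf PB b := qf_nonneg hPB.posSemidef b
    -- compute qf Ψ v ≥ cross for suitable PAB
    have main : ∀ PAB : Matrix (Fin n) (Fin n) ℝ,
        (Matrix.fromBlocks PA PAB PABᵀ PB).PosSemidef →
        2 * (a ⬝ᵥ (PAB *ᵥ b)) ≤ qf Ψ v := by
      intro PAB hblk
      have h := qf_nonneg (hcons PAB hblk) v
      rw [qf_sub] at h
      have hCF : qf (KA * (PA + QA) * KAᵀ + KA * PAB * KBᵀ + KB * PABᵀ * KAᵀ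
          + KB * (PB + QB) * KBᵀ) v
          = qf Z v + 2 * (a ⬝ᵥ (PAB *ᵥ b)) := by
        rw [qf_add, qf_add, qf_add]
        have c1 : qf (KA * PAB * KBᵀ) v = a ⬝ᵥ (PAB *ᵥ b) := by
          rw [qf, qf_cross, ← hadef, ← hbdef]
        have c2 : qf (KB * PABᵀ * KAᵀ) v = a ⬝ᵥ (PAB *ᵥ b) := by
          rw [qf, qf_cross, ← hbdef, ← hadef, dot_transpose]
        rw [c1, c2, hZdef, qf_add]
        ring
      rw [hCF] at h
      rw [hPsidef, qf_sub]
      linarith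
    rcases eq_or_lt_of_le hga with hg0 | hg0
    · -- qf PA a = 0
      rw [hGv, hHv, ← hg0, Real.sqrt_zero]
      have := main 0 hblk0
      rw [Matrix.zero_mulVec, dotProduct_zero] at this
      linarith
    rcases eq_or_lt_of_le hhb with hh0 | hh0
    · rw [hGv, hHv, ← hh0, Real.sqrt_zero]
      have := main 0 hblk0
      rw [Matrix.zero_mulVec, dotProduct_zero] at this
      linarith
    -- both positive : worst-case correlation
    set g := qf PA a with hgdef
    set h := qf PB b with hhdef
    set c : ℝ := (Real.sqrt g * Real.sqrt h)⁻¹ with hcdef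
    have hsg : 0 < Real.sqrt g := Real.sqrt_pos.mpr hg0
    have hsh : 0 < Real.sqrt h := Real.sqrt_pos.mpr hh0
    have hc : 0 < c := by rw [hcdef]; positivity
    set PAB : Matrix (Fin n) (Fin n) ℝ
      := c • Matrix.vecMulVec (PA *ᵥ a) (PB *ᵥ b) with hPABdef
    have hPABt : PABᵀ = c • Matrix.vecMulVec (PB *ᵥ b) (PA *ᵥ a) := by
      rw [hPABdef, Matrix.transpose_smul, vecMulVec_transpose]
    have hdotPAB : ∀ u w : Fin n → ℝ,
        u ⬝ᵥ (PAB *ᵥ w) = c * (((PB *ᵥ b) ⬝ᵥ w) * (u ⬝ᵥ (PA *ᵥ a))) := by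
      intro u w
      rw [hPABdef, Matrix.smul_mulVec, dotProduct_smul, vecMulVec_mulVec,
        dotProduct_smul]
      simp [smul_eq_mul]
    have hblk : (Matrix.fromBlocks PA PAB PABᵀ PB).PosSemidef := by
      refine block_psd PA PB PAB hPAt hPBt fun u w => ?_
      rw [hdotPAB u w]
      set A1 := qf PA u with hA1def
      set B1 := qf PB w with hB1def
      have hA1 : 0 ≤ A1 := qf_nonneg hPA.posSemidef u
      have hB1 : 0 ≤ B1 := qf_nonneg hPB.posSemidef w
      have cs1 : (u ⬝ᵥ (PA *ᵥ a)) ^ 2 ≤ A1 * g := qf_cauchy_schwarz hPA.posSemidef u a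
      have cs2 : (w ⬝ᵥ (PB *ᵥ b)) ^ 2 ≤ B1 * h := qf_cauchy_schwarz hPB.posSemidef w b
      have habs1 : |u ⬝ᵥ (PA *ᵥ a)| ≤ Real.sqrt A1 * Real.sqrt g := by
        rw [← Real.sqrt_sq_eq_abs, ← Real.sqrt_mul hA1]
        exact Real.sqrt_le_sqrt cs1
      have habs2 : |w ⬝ᵥ (PB *ᵥ b)| ≤ Real.sqrt B1 * Real.sqrt h := by
        rw [← Real.sqrt_sq_eq_abs, ← Real.sqrt_mul hB1]
        exact Real.sqrt_le_sqrt cs2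
      have hcomm : (PB *ᵥ b) ⬝ᵥ w = w ⬝ᵥ (PB *ᵥ b) := dotProduct_comm _ _
      rw [hcomm]
      have hprod : -(Real.sqrt B1 * Real.sqrt h * (Real.sqrt A1 * Real.sqrt g))
          ≤ (w ⬝ᵥ (PB *ᵥ b)) * (u ⬝ᵥ (PA *ᵥ a)) := by
        have := abs_mul (w ⬝ᵥ (PB *ᵥ b)) (u ⬝ᵥ (PA *ᵥ a))
        have hb2 := neg_abs_le ((w ⬝ᵥ (PB *ᵥ b)) * (u ⬝ᵥ (PA *ᵥ a)))
        have hmm : |w ⬝ᵥ (PB *ᵥ b)| * |u ⬝ᵥ (PA *ᵥ a)|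
            ≤ Real.sqrt B1 * Real.sqrt h * (Real.sqrt A1 * Real.sqrt g) :=
          mul_le_mul habs2 habs1 (abs_nonneg _) (by positivity)
        nlinarith [hmm, hb2, this]
      have hcval : c * (Real.sqrt g * Real.sqrt h) = 1 := by
        rw [hcdef]; field_simp
      have hA1s : Real.sqrt A1 ^ 2 = A1 := Real.sq_sqrt hA1
      have hB1s : Real.sqrt B1 ^ 2 = B1 := Real.sq_sqrt hB1
      have h2c : 2 * (c * ((w ⬝ᵥ (PB *ᵥ b)) * (u ⬝ᵥ (PA *ᵥ a))))
          ≥ -(2 * (Real.sqrt A1 * Real.sqrt B1)) := by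
        have hmul := mul_le_mul_of_nonneg_left hprod hc.le
        have e : c * -(Real.sqrt B1 * Real.sqrt h * (Real.sqrt A1 * Real.sqrt g))
            = -(Real.sqrt A1 * Real.sqrt B1) := by
          linear_combination (-(Real.sqrt A1 * Real.sqrt B1)) * hcval
        rw [e] at hmul
        linarith
      nlinarith [h2c, hA1s, hB1s, sq_nonneg (Real.sqrt A1 - Real.sqrt B1)]
    -- the value of the cross term
    have hval : a ⬝ᵥ (PAB *ᵥ b) = Real.sqrt g * Real.sqrt h := by
      rw [hdotPAB a b]
      have hcomm : (PB *ᵥ b) ⬝ᵥ b = h := by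
        rw [dotProduct_comm]; rfl
      have hga' : a ⬝ᵥ (PA *ᵥ a) = g := rfl
      rw [hcomm, hga']
      have e1 : Real.sqrt g * Real.sqrt g = g := Real.mul_self_sqrt hg0.le
      have e2 : Real.sqrt h * Real.sqrt h = h := Real.mul_self_sqrt hh0.le
      rw [hcdef]
      calc (Real.sqrt g * Real.sqrt h)⁻¹ * (h * g)
          = (Real.sqrt g * Real.sqrt h)⁻¹
            * ((Real.sqrt g * Real.sqrt h) * (Real.sqrt g * Real.sqrt h)) := by
            rw [show (Real.sqrt g * Real.sqrt h) * (Real.sqrt g * Real.sqrt h)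
              = (Real.sqrt g * Real.sqrt g) * (Real.sqrt h * Real.sqrt h) by ring, e1, e2]
            ring
        _ = Real.sqrt g * Real.sqrt h := inv_mul_cancel_left₀ (by positivity) _
    have h2 := main PAB hblk
    rw [hval] at h2
    rw [hGv, hHv]
    nlinarith [h2]
  -- apply the key lemma
  obtain ⟨ω, hωIoo, hPSDM⟩ := key G H Ψ hGpsd hHpsd hGne hHne hPsit hyp
  have hω0 : (0:ℝ) < ω := hωIoo.1
  have hω1 : ω < 1 := hωIoo.2
  have h1ω : (0:ℝ) < 1 - ω := by linarith
  refine ⟨ω, ⟨hω0.le, hω1.le⟩, ?_⟩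
  set t : ℝ := (1 - ω)/ω with htdef
  set t' : ℝ := ω/(1 - ω) with ht'def
  -- rescale the key PSD matrix
  have h1 : (Ψ - t • G - t' • H).PosSemidef := by
    have h2 := psd_smul (c := (ω * (1 - ω))⁻¹) (by positivity) hPSDM
    have h3 : (ω * (1 - ω))⁻¹ • ((ω * (1 - ω)) • Ψ - ((1-ω)^2) • G - (ω^2) • H)
        = Ψ - t • G - t' • H := by
      rw [smul_sub, smul_sub, smul_smul, smul_smul, smul_smul]
      have c1 : (ω * (1 - ω))⁻¹ * (ω * (1 - ω)) = 1 := by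
        field_simp
      have c2 : (ω * (1 - ω))⁻¹ * (1-ω)^2 = t := by
        rw [htdef]; field_simp
      have c3 : (ω * (1 - ω))⁻¹ * ω^2 = t' := by
        rw [ht'def]; field_simp
      rw [c1, c2, c3, one_smul]
    rw [h3] at h2
    exact h2
  -- the N matrices
  set NA : Matrix (Fin n) (Fin n) ℝ := ω⁻¹ • (PA + ω • QA) with hNAdef
  set NB : Matrix (Fin n) (Fin n) ℝ := (1-ω)⁻¹ • (PB + (1-ω) • QB) with hNBdef
  have hMA : (PA + ω • QA).PosDef := hPA.add_posSemidef (psd_smul hω0.le hQA.posSemidef)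
  have hMB : (PB + (1-ω) • QB).PosDef := hPB.add_posSemidef (psd_smul h1ω.le hQB.posSemidef)
  have hNA : NA.PosDef := pd_smul (by positivity) hMA
  have hNB : NB.PosDef := pd_smul (by positivity) hMB
  have hMAd : IsUnit (PA + ω • QA).det := isUnit_iff_isUnit_det _ |>.mp hMA.isUnit
  have hMBd : IsUnit (PB + (1-ω) • QB).det := isUnit_iff_isUnit_det _ |>.mp hMB.isUnit
  have hNAinv : NA⁻¹ = ω • (PA + ω • QA)⁻¹ := by
    apply Matrix.inv_eq_right_inv
    rw [hNAdef, Matrix.smul_mul, Matrix.mul_smul, smul_smul,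
      inv_mul_cancel₀ hω0.ne', one_smul, Matrix.mul_nonsing_inv _ hMAd]
  have hNBinv : NB⁻¹ = (1-ω) • (PB + (1-ω) • QB)⁻¹ := by
    apply Matrix.inv_eq_right_inv
    rw [hNBdef, Matrix.smul_mul, Matrix.mul_smul, smul_smul,
      inv_mul_cancel₀ h1ω.ne', one_smul, Matrix.mul_nonsing_inv _ hMBd]
  -- identity (iii)
  have iii : Z + t • G + t' • H = KA * NA * KAᵀ + KB * NB * KBᵀ := by
    have eA : KA * NA * KAᵀ = ω⁻¹ • G + KA * QA * KAᵀ := by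
      rw [hNAdef, Matrix.mul_smul, Matrix.smul_mul, Matrix.mul_add, Matrix.mul_smul,
        Matrix.add_mul, Matrix.smul_mul, smul_add, smul_smul, inv_mul_cancel₀ hω0.ne',
        one_smul, hGdef]
    have eB : KB * NB * KBᵀ = (1-ω)⁻¹ • H + KB * QB * KBᵀ := by
      rw [hNBdef, Matrix.mul_smul, Matrix.smul_mul, Matrix.mul_add, Matrix.mul_smul,
        Matrix.add_mul, Matrix.smul_mul, smul_add, smul_smul, inv_mul_cancel₀ h1ω.ne',
        one_smul, hHdef]
    have sA : (ω⁻¹ : ℝ) = 1 + t := by rw [htdef]; field_simp; ring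
    have sB : ((1-ω)⁻¹ : ℝ) = 1 + t' := by rw [ht'def]; field_simp; ring
    have eZA : KA * (PA + QA) * KAᵀ = G + KA * QA * KAᵀ := by
      rw [Matrix.mul_add, Matrix.add_mul, hGdef]
    have eZB : KB * (PB + QB) * KBᵀ = H + KB * QB * KBᵀ := by
      rw [Matrix.mul_add, Matrix.add_mul, hHdef]
    rw [eA, eB, sA, sB, add_smul, add_smul, one_smul, one_smul, hZdef, eZA, eZB]
    abel
  set Q : Matrix (Fin n) (Fin n) ℝ := KA * NA * KAᵀ + KB * NB * KBᵀ with hQdef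
  have h2 : (Q - (NA⁻¹ + NB⁻¹)⁻¹).PosSemidef := minform hNA hNB hK
  have h1' : (BF' - Q).PosSemidef := by
    have : Ψ - t • G - t' • H = BF' - Q := by
      rw [← iii, hPsidef]; abel
    rwa [this] at h1
  have hfinal := h1'.add h2
  rw [sub_add_sub_cancel] at hfinal
  rwa [hNAinv, hNBinv] at hfinal


lemma congr_transpose (A P : Matrix (Fin n) (Fin n) ℝ) (hP : Pᵀ = P) :
    (A * P * Aᵀ)ᵀ = A * P * Aᵀ := by
  rw [Matrix.transpose_mul, Matrix.transpose_transpose, Matrix.transpose_mul, hP,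
    Matrix.mul_assoc]

lemma cross_transpose (A P B : Matrix (Fin n) (Fin n) ℝ) :
    (A * P * Bᵀ)ᵀ = B * Pᵀ * Aᵀ := by
  rw [Matrix.transpose_mul, Matrix.transpose_transpose, Matrix.transpose_mul,
    Matrix.mul_assoc]

-- ============ achievability (L1) ============

lemma Phi_pd {PA PB QA QB : Matrix (Fin n) (Fin n) ℝ}
    (hPA : PA.PosDef) (hPB : PB.PosDef) (hQA : QA.PosDef) (hQB : QB.PosDef)
    {ω : ℝ} (hω : ω ∈ Set.Icc (0:ℝ) 1) :
    ((ω • (PA + ω • QA)⁻¹ + (1 - ω) • (PB + (1 - ω) • QB)⁻¹)⁻¹).PosDef := by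
  have hMA : (PA + ω • QA).PosDef := hPA.add_posSemidef (psd_smul hω.1 hQA.posSemidef)
  have hMB : (PB + (1-ω) • QB).PosDef :=
    hPB.add_posSemidef (psd_smul (by linarith [hω.2]) hQB.posSemidef)
  have hF : (ω • (PA + ω • QA)⁻¹ + (1 - ω) • (PB + (1 - ω) • QB)⁻¹).PosDef :=
    pd_convex hω.1 (by linarith [hω.2]) (by norm_num) hMA.inv hMB.inv
  exact hF.inv

set_option maxHeartbeats 1000000 in
lemma L1 {PA PB QA QB : Matrix (Fin n) (Fin n) ℝ}
    (hPA : PA.PosDef) (hPB : PB.PosDef) (hQA : QA.PosDef) (hQB : QB.PosDef)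
    {ω : ℝ} (hω : ω ∈ Set.Icc (0:ℝ) 1) :
    ∃ KA' KB' : Matrix (Fin n) (Fin n) ℝ, KA' + KB' = 1 ∧
      ∀ PAB : Matrix (Fin n) (Fin n) ℝ,
        (Matrix.fromBlocks PA PAB PABᵀ PB).PosSemidef →
        ((ω • (PA + ω • QA)⁻¹ + (1 - ω) • (PB + (1 - ω) • QB)⁻¹)⁻¹
          - (KA' * (PA + QA) * KA'ᵀ + KA' * PAB * KB'ᵀ + KB' * PABᵀ * KA'ᵀ
            + KB' * (PB + QB) * KB'ᵀ)).PosSemidef := by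
  have hPAt := transpose_of_herm hPA.1
  have hPBt := transpose_of_herm hPB.1
  rcases eq_or_lt_of_le hω.1 with h0 | h0
  · -- ω = 0
    refine ⟨0, 1, by rw [zero_add], fun PAB hPAB => ?_⟩
    have hCF : (0 : Matrix (Fin n) (Fin n) ℝ) * (PA + QA) * (0 : Matrix (Fin n) (Fin n) ℝ)ᵀ
        + 0 * PAB * (1 : Matrix (Fin n) (Fin n) ℝ)ᵀ + 1 * PABᵀ * (0 : Matrix (Fin n) (Fin n) ℝ)ᵀ
        + 1 * (PB + QB) * (1 : Matrix (Fin n) (Fin n) ℝ)ᵀ = PB + QB := by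
      simp [Matrix.transpose_zero, Matrix.transpose_one]
    have hPhi0 : ((0:ℝ) • (PA + (0:ℝ) • QA)⁻¹
        + ((1:ℝ) - 0) • (PB + ((1:ℝ) - 0) • QB)⁻¹)⁻¹ = PB + QB := by
      have hdet : IsUnit (PB + QB).det :=
        isUnit_iff_isUnit_det _ |>.mp (hPB.add_posSemidef hQB.posSemidef).isUnit
      rw [zero_smul, zero_add, sub_zero, one_smul, one_smul,
        Matrix.nonsing_inv_nonsing_inv _ hdet]
    rw [← h0, hCF, hPhi0, sub_self]
    exact Matrix.PosSemidef.zero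
  rcases eq_or_lt_of_le hω.2 with h1 | h1
  · -- ω = 1
    refine ⟨1, 0, by rw [add_zero], fun PAB hPAB => ?_⟩
    have hCF : (1 : Matrix (Fin n) (Fin n) ℝ) * (PA + QA) * (1 : Matrix (Fin n) (Fin n) ℝ)ᵀ
        + 1 * PAB * (0 : Matrix (Fin n) (Fin n) ℝ)ᵀ + 0 * PABᵀ * (1 : Matrix (Fin n) (Fin n) ℝ)ᵀ
        + 0 * (PB + QB) * (0 : Matrix (Fin n) (Fin n) ℝ)ᵀ = PA + QA := by
      simp [Matrix.transpose_zero, Matrix.transpose_one]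
    have hPhi1 : ((1:ℝ) • (PA + (1:ℝ) • QA)⁻¹
        + ((1:ℝ) - 1) • (PB + ((1:ℝ) - 1) • QB)⁻¹)⁻¹ = PA + QA := by
      have hdet : IsUnit (PA + QA).det :=
        isUnit_iff_isUnit_det _ |>.mp (hPA.add_posSemidef hQA.posSemidef).isUnit
      rw [sub_self, zero_smul, add_zero, one_smul, one_smul,
        Matrix.nonsing_inv_nonsing_inv _ hdet]
    rw [h1, hCF, hPhi1, sub_self]
    exact Matrix.PosSemidef.zero
  -- interior case
  have hω0 : (0:ℝ) < ω := h0
  have h1ω : (0:ℝ) < 1 - ω := by linarith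
  set t : ℝ := (1 - ω)/ω with htdef
  set t' : ℝ := ω/(1 - ω) with ht'def
  have ht : 0 < t := by rw [htdef]; positivity
  have ht' : 0 < t' := by rw [ht'def]; positivity
  set NA : Matrix (Fin n) (Fin n) ℝ := ω⁻¹ • (PA + ω • QA) with hNAdef
  set NB : Matrix (Fin n) (Fin n) ℝ := (1-ω)⁻¹ • (PB + (1-ω) • QB) with hNBdef
  have hMA : (PA + ω • QA).PosDef := hPA.add_posSemidef (psd_smul hω0.le hQA.posSemidef)
  have hMB : (PB + (1-ω) • QB).PosDef := hPB.add_posSemidef (psd_smul h1ω.le hQB.posSemidef)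
  have hNA : NA.PosDef := pd_smul (by positivity) hMA
  have hNB : NB.PosDef := pd_smul (by positivity) hMB
  have hMAd : IsUnit (PA + ω • QA).det := isUnit_iff_isUnit_det _ |>.mp hMA.isUnit
  have hMBd : IsUnit (PB + (1-ω) • QB).det := isUnit_iff_isUnit_det _ |>.mp hMB.isUnit
  have hNAinv : NA⁻¹ = ω • (PA + ω • QA)⁻¹ := by
    apply Matrix.inv_eq_right_inv
    rw [hNAdef, Matrix.smul_mul, Matrix.mul_smul, smul_smul,
      inv_mul_cancel₀ hω0.ne', one_smul, Matrix.mul_nonsing_inv _ hMAd]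
  have hNBinv : NB⁻¹ = (1-ω) • (PB + (1-ω) • QB)⁻¹ := by
    apply Matrix.inv_eq_right_inv
    rw [hNBdef, Matrix.smul_mul, Matrix.mul_smul, smul_smul,
      inv_mul_cancel₀ h1ω.ne', one_smul, Matrix.mul_nonsing_inv _ hMBd]
  have hSum : (NA⁻¹ + NB⁻¹).PosDef := hNA.inv.add hNB.inv
  have hSumd : IsUnit (NA⁻¹ + NB⁻¹).det := isUnit_iff_isUnit_det _ |>.mp hSum.isUnit
  set KA' : Matrix (Fin n) (Fin n) ℝ := (NA⁻¹ + NB⁻¹)⁻¹ * NA⁻¹ with hKA'def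
  set KB' : Matrix (Fin n) (Fin n) ℝ := (NA⁻¹ + NB⁻¹)⁻¹ * NB⁻¹ with hKB'def
  have hKsum : KA' + KB' = 1 := by
    rw [hKA'def, hKB'def, ← Matrix.mul_add, Matrix.nonsing_inv_mul _ hSumd]
  refine ⟨KA', KB', hKsum, fun PAB hPAB => ?_⟩
  -- the exact identity
  have hexact : KA' * NA * KA'ᵀ + KB' * NB * KB'ᵀ = (NA⁻¹ + NB⁻¹)⁻¹ :=
    exactform hNA hNB
  set G' : Matrix (Fin n) (Fin n) ℝ := KA' * PA * KA'ᵀ with hG'def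
  set H' : Matrix (Fin n) (Fin n) ℝ := KB' * PB * KB'ᵀ with hH'def
  have iii : KA' * (PA + QA) * KA'ᵀ + KB' * (PB + QB) * KB'ᵀ + t • G' + t' • H'
      = KA' * NA * KA'ᵀ + KB' * NB * KB'ᵀ := by
    have eA : KA' * NA * KA'ᵀ = ω⁻¹ • G' + KA' * QA * KA'ᵀ := by
      rw [hNAdef, Matrix.mul_smul, Matrix.smul_mul, Matrix.mul_add, Matrix.mul_smul,
        Matrix.add_mul, Matrix.smul_mul, smul_add, smul_smul, inv_mul_cancel₀ hω0.ne',
        one_smul, hG'def]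
    have eB : KB' * NB * KB'ᵀ = (1-ω)⁻¹ • H' + KB' * QB * KB'ᵀ := by
      rw [hNBdef, Matrix.mul_smul, Matrix.smul_mul, Matrix.mul_add, Matrix.mul_smul,
        Matrix.add_mul, Matrix.smul_mul, smul_add, smul_smul, inv_mul_cancel₀ h1ω.ne',
        one_smul, hH'def]
    have sA : (ω⁻¹ : ℝ) = 1 + t := by rw [htdef]; field_simp; ring
    have sB : ((1-ω)⁻¹ : ℝ) = 1 + t' := by rw [ht'def]; field_simp; ring
    have eZA : KA' * (PA + QA) * KA'ᵀ = G' + KA' * QA * KA'ᵀ := by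
      rw [Matrix.mul_add, Matrix.add_mul, hG'def]
    have eZB : KB' * (PB + QB) * KB'ᵀ = H' + KB' * QB * KB'ᵀ := by
      rw [Matrix.mul_add, Matrix.add_mul, hH'def]
    rw [eA, eB, sA, sB, add_smul, add_smul, one_smul, one_smul, eZA, eZB]
    abel
  -- hence the difference is the W matrix
  have hPhiNA : (ω • (PA + ω • QA)⁻¹ + (1 - ω) • (PB + (1 - ω) • QB)⁻¹)⁻¹
      = (NA⁻¹ + NB⁻¹)⁻¹ := by rw [hNAinv, hNBinv]
  set W : Matrix (Fin n) (Fin n) ℝ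
    := t • G' + t' • H' - (KA' * PAB * KB'ᵀ + KB' * PABᵀ * KA'ᵀ) with hWdef
  have hWeq : (ω • (PA + ω • QA)⁻¹ + (1 - ω) • (PB + (1 - ω) • QB)⁻¹)⁻¹
      - (KA' * (PA + QA) * KA'ᵀ + KA' * PAB * KB'ᵀ + KB' * PABᵀ * KA'ᵀ
        + KB' * (PB + QB) * KB'ᵀ) = W := by
    rw [hPhiNA, ← hexact, ← iii, hWdef]
    abel
  rw [hWeq]
  -- prove W is PSD
  have hG't : G'ᵀ = G' := by rw [hG'def]; exact congr_transpose KA' PA hPAt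
  have hH't : H'ᵀ = H' := by rw [hH'def]; exact congr_transpose KB' PB hPBt
  have hCrosst : (KA' * PAB * KB'ᵀ)ᵀ = KB' * PABᵀ * KA'ᵀ := cross_transpose KA' PAB KB'
  have hCrosst2 : (KB' * PABᵀ * KA'ᵀ)ᵀ = KA' * PAB * KB'ᵀ := by
    rw [cross_transpose KB' PABᵀ KA', Matrix.transpose_transpose]
  refine posSemidef_of_forall ?_ fun v => ?_
  · rw [hWdef, Matrix.transpose_sub, Matrix.transpose_add, Matrix.transpose_smul,
      Matrix.transpose_smul, hG't, hH't, Matrix.transpose_add, hCrosst, hCrosst2,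
      add_comm (KB' * PABᵀ * KA'ᵀ)]
  · set a := KA'ᵀ *ᵥ v with hadef
    set b := KB'ᵀ *ᵥ v with hbdef
    have hqfW : qf W v = t * qf PA a + t' * qf PB b - 2 * (a ⬝ᵥ (PAB *ᵥ b)) := by
      rw [hWdef, qf_sub, qf_add, qf_add, qf_smul, qf_smul, hG'def, hH'def,
        qf_congruence, qf_congruence]
      have c1 : qf (KA' * PAB * KB'ᵀ) v = a ⬝ᵥ (PAB *ᵥ b) := by
        rw [qf, qf_cross, ← hadef, ← hbdef]
      have c2 : qf (KB' * PABᵀ * KA'ᵀ) v = a ⬝ᵥ (PAB *ᵥ b) := by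
        rw [qf, qf_cross, ← hbdef, ← hadef, dot_transpose]
      rw [c1, c2, ← hadef, ← hbdef]
      ring
    set c : ℝ := Real.sqrt t with hcdef
    have hc : 0 < c := Real.sqrt_pos.mpr ht
    have hc2 : c^2 = t := Real.sq_sqrt ht.le
    have htt' : t * t' = 1 := by rw [htdef, ht'def]; field_simp
    have hq := block_quad PA PB PAB hPAB (c • a) (-(c⁻¹) • b)
    rw [qf_smul_vec, qf_smul_vec] at hq
    have hdsmul : (c • a) ⬝ᵥ (PAB *ᵥ (-(c⁻¹) • b))
        = (c * (-(c⁻¹))) * (a ⬝ᵥ (PAB *ᵥ b)) := by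
      rw [Matrix.mulVec_smul, smul_dotProduct, dotProduct_smul]
      simp [smul_eq_mul]; ring
    rw [hdsmul] at hq
    have hcc : c * (-(c⁻¹)) = -1 := by
      field_simp
    rw [hcc] at hq
    have hnegsq : (-(c⁻¹))^2 = t' := by
      have : (c⁻¹)^2 = t⁻¹ := by rw [inv_pow, hc2]
      rw [neg_pow, this]
      simp
      rw [ht'def, htdef, inv_div]
    rw [hnegsq, hc2] at hq
    rw [hqfW]
    linarith

end SCI19

open Matrix

theorem sci_stmt19 {n : ℕ} (PA PB QA QB : Matrix (Fin n) (Fin n) ℝ)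
    (hPA : PA.PosDef) (hPB : PB.PosDef) (hQA : QA.PosDef) (hQB : QB.PosDef)
    (J : Matrix (Fin n) (Fin n) ℝ → ℝ)
    (hJ : ∀ P Q : Matrix (Fin n) (Fin n) ℝ, P.PosDef → Q.PosDef →
      (Q - P).PosSemidef → P ≠ Q → J P < J Q)
    (KA KB BF : Matrix (Fin n) (Fin n) ℝ) (hBF : BF.PosDef)
    (hK : KA + KB = 1)
    (hcons : ∀ PAB : Matrix (Fin n) (Fin n) ℝ,
      (Matrix.fromBlocks PA PAB PABᵀ PB).PosSemidef →
      (BF - (KA * (PA + QA) * KAᵀ + KA * PAB * KBᵀ + KB * PABᵀ * KAᵀ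
        + KB * (PB + QB) * KBᵀ)).PosSemidef) :
    let BSCI := fun (ω : ℝ) =>
      (ω • (PA + ω • QA)⁻¹ + (1 - ω) • (PB + (1 - ω) • QB)⁻¹)⁻¹
    (∀ KA' KB' BF' : Matrix (Fin n) (Fin n) ℝ, BF'.PosDef → KA' + KB' = 1 →
      (∀ PAB : Matrix (Fin n) (Fin n) ℝ,
        (Matrix.fromBlocks PA PAB PABᵀ PB).PosSemidef →
        (BF' - (KA' * (PA + QA) * KA'ᵀ + KA' * PAB * KB'ᵀ + KB' * PABᵀ * KA'ᵀ
          + KB' * (PB + QB) * KB'ᵀ)).PosSemidef) →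
      J BF ≤ J BF') ↔
    (∃ ωs ∈ Set.Icc (0 : ℝ) 1,
      (∀ ω ∈ Set.Icc (0 : ℝ) 1, J (BSCI ωs) ≤ J (BSCI ω)) ∧ BF = BSCI ωs) := by
  intro BSCI
  have hBSCI : ∀ ω : ℝ, BSCI ω
      = (ω • (PA + ω • QA)⁻¹ + (1 - ω) • (PB + (1 - ω) • QB)⁻¹)⁻¹ := fun _ => rfl
  constructor
  · -- forward direction
    intro hL
    obtain ⟨ω₀, hω₀, hdom⟩ := SCI19.L2 hPA hPB hQA hQB KA KB BF
      (SCI19.transpose_of_herm hBF.1) hK hcons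
    rw [← hBSCI ω₀] at hdom
    obtain ⟨KA', KB', hK', hcons'⟩ := SCI19.L1 hPA hPB hQA hQB hω₀
    have hΦpd : (BSCI ω₀).PosDef := by
      rw [hBSCI ω₀]; exact SCI19.Phi_pd hPA hPB hQA hQB hω₀
    have hle : J BF ≤ J (BSCI ω₀) := by
      refine hL KA' KB' (BSCI ω₀) hΦpd hK' fun PAB hPAB => ?_
      rw [hBSCI ω₀]
      exact hcons' PAB hPAB
    have heq : BF = BSCI ω₀ := by
      by_contra hne
      have hne' : BSCI ω₀ ≠ BF := fun h => hne h.symm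
      have := hJ (BSCI ω₀) BF hΦpd hBF hdom hne'
      linarith
    refine ⟨ω₀, hω₀, fun ω hω => ?_, heq⟩
    obtain ⟨KA'', KB'', hK'', hcons''⟩ := SCI19.L1 hPA hPB hQA hQB hω
    have hΦpd2 : (BSCI ω).PosDef := by
      rw [hBSCI ω]; exact SCI19.Phi_pd hPA hPB hQA hQB hω
    have h2 : J BF ≤ J (BSCI ω) := by
      refine hL KA'' KB'' (BSCI ω) hΦpd2 hK'' fun PAB hPAB => ?_
      rw [hBSCI ω]
      exact hcons'' PAB hPAB
    rw [← heq]
    exact h2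
  · -- backward direction
    rintro ⟨ωs, hωs, hmin, hBFeq⟩ KA' KB' BF' hBF' hK' hcons'
    obtain ⟨ω₁, hω₁, hdom⟩ := SCI19.L2 hPA hPB hQA hQB KA' KB' BF'
      (SCI19.transpose_of_herm hBF'.1) hK' hcons'
    rw [← hBSCI ω₁] at hdom
    have hΦpd : (BSCI ω₁).PosDef := by
      rw [hBSCI ω₁]; exact SCI19.Phi_pd hPA hPB hQA hQB hω₁
    have h1 : J BF ≤ J (BSCI ω₁) := by rw [hBFeq]; exact hmin ω₁ hω₁
    have h2 : J (BSCI ω₁) ≤ J BF' := by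
      by_cases he : BSCI ω₁ = BF'
      · rw [he]
      · exact le_of_lt (hJ (BSCI ω₁) BF' hΦpd hBF' hdom he)
    linarith
end
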